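/- arXiv:0903.2965 — 15 statements merged into one kernel-verified Lean document; each statement's English description precedes it below -/
import Mathlib

section
/- Let k ≥ 1 and let V be a subspace of ℚ^k. Then the following are equivalent: (i) V^⊥ contains a vector all of whose coordinates are strictly positive; (ii) the union of the supports of the nonnegative vectors in V^⊥ is all of {1,…,k}; (iii) the only vector in V with all coordinates nonnegative is 0. -/
open Finset

/-- Dot product bilinear form on `Fin k → ℚ`. -/
noncomputable def dotB (k : ℕ) : LinearMap.BilinForm ℚ (Fin k → ℚ) :=
  LinearMap.mk₂ ℚ (fun x y => ∑ i, x i * y i)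
    (by intro m m' n; simp [add_mul, Finset.sum_add_distrib])
    (by intro c m n; simp [Finset.mul_sum, mul_assoc])
    (by intro m n n'; simp [mul_add, Finset.sum_add_distrib])
    (by intro c m n; simp [Finset.mul_sum, mul_left_comm])

lemma dotB_apply {k : ℕ} (x y : Fin k → ℚ) : dotB k x y = ∑ i, x i * y i := rfl

lemma dotB_refl (k : ℕ) : (dotB k).IsRefl := by
  intro x y h
  simpa [dotB_apply, mul_comm] using h

lemma dotB_nondeg (k : ℕ) : (dotB k).Nondegenerate := by
  refine (LinearMap.IsRefl.nondegenerate_iff_separatingLeft (dotB_refl k)).2 ?_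
  intro x hx
  funext i
  have := hx (Pi.single i 1)
  simpa [dotB_apply, Pi.single_apply, mul_ite, mul_one, mul_zero,
    Finset.sum_ite_eq'] using this

lemma mem_dotB_orthogonal_iff {k : ℕ} {V : Submodule ℚ (Fin k → ℚ)} {y : Fin k → ℚ} :
    y ∈ (dotB k).orthogonal V ↔ ∀ c ∈ V, ∑ i, y i * c i = 0 := by
  constructor
  · intro h c hc
    have := h c hc
    simpa [LinearMap.BilinForm.IsOrtho, dotB_apply, mul_comm] using this
  · intro h c hc
    have := h c hc
    simpa [LinearMap.BilinForm.IsOrtho, dotB_apply, mul_comm] using this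

/-- Restricting `W⊥ ∩ {y m = 0}` along `succAbove m` gives the orthogonal of the
restriction of `W`. -/
lemma orth_inter_map {k : ℕ} (m : Fin (k + 1)) (W : Submodule ℚ (Fin (k + 1) → ℚ)) :
    (((dotB (k + 1)).orthogonal W ⊓ LinearMap.ker (LinearMap.proj m)).map
        (LinearMap.funLeft ℚ ℚ m.succAbove))
      = (dotB k).orthogonal (W.map (LinearMap.funLeft ℚ ℚ m.succAbove)) := by
  ext z
  simp only [Submodule.mem_map, Submodule.mem_inf, LinearMap.mem_ker, LinearMap.proj_apply,
    mem_dotB_orthogonal_iff]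
  constructor
  · rintro ⟨y, ⟨hyW, hym⟩, rfl⟩ c ⟨x, hx, rfl⟩
    have h0 := hyW x hx
    rw [Fin.sum_univ_succAbove (fun i => y i * x i) m] at h0
    simp only [LinearMap.funLeft_apply] at *
    rw [hym] at h0
    linarith [h0]
  · intro hz
    refine ⟨m.insertNth 0 z, ⟨?_, ?_⟩, ?_⟩
    · intro c hc
      rw [Fin.sum_univ_succAbove (fun i => (m.insertNth (α := fun _ => ℚ) 0 z) i * c i) m]
      simp only [Fin.insertNth_apply_same, Fin.insertNth_apply_succAbove, zero_mul, zero_add]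
      exact hz _ ⟨c, hc, rfl⟩
    · simp
    · funext i
      simp [LinearMap.funLeft_apply]

/-- Tucker-type key lemma: for each coordinate `j`, either `V` contains a nonnegative
vector positive at `j`, or `V⊥` does. -/
lemma key : ∀ (k : ℕ) (V : Submodule ℚ (Fin k → ℚ)) (j : Fin k),
    (∃ x ∈ V, (∀ i, 0 ≤ x i) ∧ 0 < x j) ∨
    (∃ y : Fin k → ℚ, (∀ c ∈ V, ∑ i, y i * c i = 0) ∧ (∀ i, 0 ≤ y i) ∧ 0 < y j) := by
  intro k
  induction k with
  | zero => intro V j; exact j.elim0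
  | succ k ih =>
    intro V j
    match k, ih with
    | 0, _ =>
      -- Fin 1 case
      by_cases h : ∃ x ∈ V, x j ≠ 0
      · obtain ⟨x, hxV, hxj⟩ := h
        refine Or.inl ⟨(x j)⁻¹ • x, V.smul_mem _ hxV, ?_, ?_⟩
        · intro i
          have : i = j := by omega
          subst this
          simp [inv_mul_cancel₀ hxj]
        · simp [inv_mul_cancel₀ hxj]
      · push_neg at h
        refine Or.inr ⟨fun _ => 1, ?_, fun _ => zero_le_one, one_pos⟩
        intro c hc
        have : c j = 0 := h c hc
        have hj : j = 0 := by omega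
        simp [Fin.sum_univ_one, ← hj, this]
    | (k + 1), ih =>
      -- pick m ≠ j
      obtain ⟨m, hm⟩ := exists_ne j
      obtain ⟨j', hj'⟩ := Fin.exists_succAbove_eq hm.symm
      set L := LinearMap.funLeft ℚ ℚ m.succAbove with hL
      have horth := LinearMap.BilinForm.orthogonal_orthogonal (B := dotB (k + 1 + 1))
        (dotB_nondeg _) (dotB_refl _)
      -- First application: to (V ∩ {x m = 0}) restricted
      have hV0 : ((V ⊓ LinearMap.ker (LinearMap.proj m)).map L)
          = (dotB (k + 1)).orthogonal (((dotB (k + 1 + 1)).orthogonal V).map L) := by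
        have h := orth_inter_map m ((dotB (k + 1 + 1)).orthogonal V)
        rw [horth V] at h
        exact h
      have horth1 := LinearMap.BilinForm.orthogonal_orthogonal (B := dotB (k + 1))
        (dotB_nondeg _) (dotB_refl _)
      rcases ih ((V ⊓ LinearMap.ker (LinearMap.proj m)).map L) j' with
        ⟨x', hx'mem, hx'nn, hx'j⟩ | ⟨y', hy'orth, hy'nn, hy'j⟩
      · -- x ∈ V with x m = 0, nonneg, x j > 0: done left
        obtain ⟨x, ⟨hxV, hxm⟩, rfl⟩ := hx'mem
        replace hxm : x m = 0 := hxm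
        refine Or.inl ⟨x, hxV, ?_, ?_⟩
        · intro i
          rcases eq_or_ne i m with rfl | hi
          · exact le_of_eq hxm.symm
          · obtain ⟨i', rfl⟩ := Fin.exists_succAbove_eq hi
            exact hx'nn i'
        · have : x (m.succAbove j') > 0 := hx'j
          rwa [hj'] at this
      · -- y' ⊥ (V∩H)↾ ⇒ y' ∈ π(V⊥)
        have hy'mem : y' ∈ ((dotB (k + 1 + 1)).orthogonal V).map L := by
          rw [← horth1 (((dotB (k + 1 + 1)).orthogonal V).map L), ← hV0]
          rw [mem_dotB_orthogonal_iff]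
          exact hy'orth
        obtain ⟨y, hyV, rfl⟩ := hy'mem
        by_cases hym : 0 ≤ y m
        · refine Or.inr ⟨y, mem_dotB_orthogonal_iff.1 hyV, ?_, ?_⟩
          · intro i
            rcases eq_or_ne i m with rfl | hi
            · exact hym
            · obtain ⟨i', rfl⟩ := Fin.exists_succAbove_eq hi
              exact hy'nn i'
          · have : (0:ℚ) < y (m.succAbove j') := hy'j
            rwa [hj'] at this
        · push_neg at hym
          -- record y; second application
          rcases ih (V.map L) j' with
            ⟨x', hx'mem, hx'nn, hx'j⟩ | ⟨z', hz'orth, hz'nn, hz'j⟩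
          · obtain ⟨x, hxV, rfl⟩ := hx'mem
            by_cases hxm : 0 ≤ x m
            · refine Or.inl ⟨x, hxV, ?_, ?_⟩
              · intro i
                rcases eq_or_ne i m with rfl | hi
                · exact hxm
                · obtain ⟨i', rfl⟩ := Fin.exists_succAbove_eq hi
                  exact hx'nn i'
              · have : (0:ℚ) < x (m.succAbove j') := hx'j
                rwa [hj'] at this
            · push_neg at hxm
              -- contradiction
              exfalso
              have h0 := (mem_dotB_orthogonal_iff.1 hyV) x hxV
              rw [Fin.sum_univ_succAbove (fun i => y i * x i) m] at h0
              have h1 : 0 < y m * x m := mul_pos_of_neg_of_neg hym hxm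
              have h2 : 0 < ∑ i, y (m.succAbove i) * x (m.succAbove i) := by
                refine Finset.sum_pos' (fun i _ => mul_nonneg (hy'nn i) (hx'nn i)) ?_
                exact ⟨j', Finset.mem_univ _, mul_pos hy'j hx'j⟩
              linarith
          · -- z' ⊥ π(V): insert 0 at m, land in V⊥
            refine Or.inr ⟨m.insertNth 0 z', ?_, ?_, ?_⟩
            · intro c hc
              rw [Fin.sum_univ_succAbove (fun i => (m.insertNth (α := fun _ => ℚ) 0 z') i * c i) m]
              simp only [Fin.insertNth_apply_same, Fin.insertNth_apply_succAbove, zero_mul,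
                zero_add]
              exact hz'orth _ ⟨c, hc, rfl⟩
            · intro i
              rcases eq_or_ne i m with rfl | hi
              · simp
              · obtain ⟨i', rfl⟩ := Fin.exists_succAbove_eq hi
                simpa using hz'nn i'
            · rw [← hj']
              simpa using hz'j

/-- For a subspace `V` of `ℚ^k` (`k ≥ 1`), the following are equivalent:
(i) `V^⊥` contains a strictly positive vector;
(ii) every index lies in the support of some nonnegative vector of `V^⊥`;
(iii) the only nonnegative vector in `V` is `0`. -/
theorem stmt0 (k : ℕ) (hk : 1 ≤ k) (V : Submodule ℚ (Fin k → ℚ)) :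
    ((∃ v : Fin k → ℚ, (∀ c ∈ V, ∑ i, v i * c i = 0) ∧ ∀ i, 0 < v i) ↔
      (∀ v ∈ V, (∀ i, 0 ≤ v i) → v = 0)) ∧
    ((∀ j : Fin k, ∃ v : Fin k → ℚ,
        (∀ c ∈ V, ∑ i, v i * c i = 0) ∧ (∀ i, 0 ≤ v i) ∧ v j ≠ 0) ↔
      (∀ v ∈ V, (∀ i, 0 ≤ v i) → v = 0)) := by
  -- (iii) → (ii)
  have h32 : (∀ v ∈ V, (∀ i, 0 ≤ v i) → v = 0) →
      (∀ j : Fin k, ∃ v : Fin k → ℚ,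
        (∀ c ∈ V, ∑ i, v i * c i = 0) ∧ (∀ i, 0 ≤ v i) ∧ v j ≠ 0) := by
    intro h3 j
    rcases key k V j with ⟨x, hxV, hxnn, hxj⟩ | ⟨y, hyo, hynn, hyj⟩
    · exact absurd (h3 x hxV hxnn) (by intro h; rw [h] at hxj; exact lt_irrefl 0 hxj)
    · exact ⟨y, hyo, hynn, ne_of_gt hyj⟩
  -- (ii) → (iii)
  have h23 : (∀ j : Fin k, ∃ v : Fin k → ℚ,
      (∀ c ∈ V, ∑ i, v i * c i = 0) ∧ (∀ i, 0 ≤ v i) ∧ v j ≠ 0) →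
      (∀ v ∈ V, (∀ i, 0 ≤ v i) → v = 0) := by
    intro h2 v hvV hvnn
    funext j
    obtain ⟨w, hwo, hwnn, hwj⟩ := h2 j
    have hsum := hwo v hvV
    have hz : ∀ i ∈ Finset.univ, w i * v i = 0 :=
      (Finset.sum_eq_zero_iff_of_nonneg
        (fun i _ => mul_nonneg (hwnn i) (hvnn i))).1 hsum
    have := hz j (Finset.mem_univ j)
    rcases mul_eq_zero.1 this with h | h
    · exact absurd h hwj
    · exact h
  -- (i) → (iii)
  have h13 : (∃ v : Fin k → ℚ, (∀ c ∈ V, ∑ i, v i * c i = 0) ∧ ∀ i, 0 < v i) →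
      (∀ v ∈ V, (∀ i, 0 ≤ v i) → v = 0) := by
    rintro ⟨v, hvo, hvpos⟩ c hcV hcnn
    funext j
    have hsum := hvo c hcV
    have hz : ∀ i ∈ Finset.univ, v i * c i = 0 :=
      (Finset.sum_eq_zero_iff_of_nonneg
        (fun i _ => mul_nonneg (hvpos i).le (hcnn i))).1 hsum
    have := hz j (Finset.mem_univ j)
    rcases mul_eq_zero.1 this with h | h
    · exact absurd h (ne_of_gt (hvpos j))
    · exact h
  -- (iii) → (i)
  have h31 : (∀ v ∈ V, (∀ i, 0 ≤ v i) → v = 0) →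
      (∃ v : Fin k → ℚ, (∀ c ∈ V, ∑ i, v i * c i = 0) ∧ ∀ i, 0 < v i) := by
    intro h3
    have h2 := h32 h3
    choose w hwo hwnn hwj using h2
    refine ⟨fun i => ∑ j, w j i, ?_, ?_⟩
    · intro c hc
      have hswap : ∑ i, (∑ j, w j i) * c i = ∑ j, ∑ i, w j i * c i := by
        simp_rw [Finset.sum_mul]
        rw [Finset.sum_comm]
      rw [hswap]
      exact Finset.sum_eq_zero fun j _ => hwo j c hc
    · intro i
      refine Finset.sum_pos' (fun j _ => hwnn j i) ⟨i, Finset.mem_univ _, ?_⟩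
      rcases (hwnn i i).lt_or_eq with h | h
      · exact h
      · exact absurd h.symm (hwj i)
  exact ⟨⟨h13, h31⟩, ⟨h23, h32⟩⟩
end

section
/- Let A be a full affine submonoid of ℕ₀^k, let I ⊊ {1,…,k} be the support of some element of A, and let p_I : ℕ₀^k → ℕ₀^{{1,…,k}∖I} be the canonical projection forgetting the coordinates in I. Then p_I(A) is a full affine submonoid of ℕ₀^{{1,…,k}∖I}. -/
/-- A submonoid `A` of `ℕ₀^k` is full if `x ∈ A`, `t ∈ ℕ₀^k`, `x + t ∈ A` imply `t ∈ A`. -/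
def IsFullAddSubmonoid {k : ℕ} (A : AddSubmonoid (Fin k → ℕ)) : Prop :=
  ∀ x ∈ A, ∀ t : Fin k → ℕ, x + t ∈ A → t ∈ A

/-- If `A` is a full (affine) submonoid of `ℕ₀^k` and `I ⊊ {1,…,k}` is the support of an
element of `A`, then the projection of `A` onto the coordinates outside `I` is a full
submonoid of `ℕ₀^{{1,…,k}∖I}`. -/
theorem stmt1 {k : ℕ} (A : AddSubmonoid (Fin k → ℕ)) (hA : IsFullAddSubmonoid A)
    (I : Set (Fin k)) (hI : I ≠ Set.univ)
    (hsupp : ∃ a ∈ A, {i | a i ≠ 0} = I) :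
    -- the projection of `A` is a submonoid:
    ((fun (i : {i : Fin k // i ∉ I}) => (0 : ℕ)) ∈
        {y : {i : Fin k // i ∉ I} → ℕ | ∃ a ∈ A, ∀ i : {i : Fin k // i ∉ I}, a i.1 = y i}) ∧
    (∀ y z : {i : Fin k // i ∉ I} → ℕ,
      y ∈ {y | ∃ a ∈ A, ∀ i : {i : Fin k // i ∉ I}, a i.1 = y i} →
      z ∈ {y | ∃ a ∈ A, ∀ i : {i : Fin k // i ∉ I}, a i.1 = y i} →
      y + z ∈ {y | ∃ a ∈ A, ∀ i : {i : Fin k // i ∉ I}, a i.1 = y i}) ∧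
    -- and it is full:
    (∀ y t : {i : Fin k // i ∉ I} → ℕ,
      y ∈ {y | ∃ a ∈ A, ∀ i : {i : Fin k // i ∉ I}, a i.1 = y i} →
      y + t ∈ {y | ∃ a ∈ A, ∀ i : {i : Fin k // i ∉ I}, a i.1 = y i} →
      t ∈ {y | ∃ a ∈ A, ∀ i : {i : Fin k // i ∉ I}, a i.1 = y i}) := by
  obtain ⟨s, hsA, hs⟩ := hsupp
  refine ⟨⟨0, A.zero_mem, fun i => rfl⟩, ?_, ?_⟩
  · rintro y z ⟨a, ha, hay⟩ ⟨b, hb, hbz⟩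
    exact ⟨a + b, A.add_mem ha hb, fun i => by simp [hay i, hbz i]⟩
  · rintro y t ⟨a, ha, hay⟩ ⟨b, hb, hbt⟩
    set n := Finset.univ.sup a with hn
    have hsI : ∀ i ∈ I, 1 ≤ s i := fun i hi => by
      have : i ∈ {i | s i ≠ 0} := hs ▸ hi
      simp only [Set.mem_setOf_eq] at this
      omega
    have hsO : ∀ i, i ∉ I → s i = 0 := fun i hi => by
      by_contra h
      exact hi (hs ▸ h : i ∈ I)
    have hle : ∀ i, a i ≤ n • s i + b i := by
      intro i
      by_cases hi : i ∈ I
      · have h1 : a i ≤ n := Finset.le_sup (Finset.mem_univ i)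
        have h2 : 1 ≤ s i := hsI i hi
        have : n ≤ n * s i := Nat.le_mul_of_pos_right n (by omega)
        have : n • s i = n * s i := rfl
        omega
      · have := hay ⟨i, hi⟩
        have := hbt ⟨i, hi⟩
        simp only [Pi.add_apply] at *
        omega
    set r : Fin k → ℕ := fun i => n * s i + b i - a i with hr
    have hsum : a + r = n • s + b := by
      funext i
      have := hle i
      simp only [Pi.add_apply, Pi.smul_apply, hr, smul_eq_mul] at *
      omega
    have hmem : n • s + b ∈ A := A.add_mem (AddSubmonoid.nsmul_mem A hsA n) hb
    have hrA : r ∈ A := hA a ha r (hsum ▸ hmem)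
    refine ⟨r, hrA, fun i => ?_⟩
    have h0 : s i.1 = 0 := hsO i.1 i.2
    have := hay i
    have := hbt i
    simp only [Pi.add_apply] at *
    show n * s i.1 + b i.1 - a i.1 = t i
    rw [h0]
    omega
end

section
/- Let A be a full affine submonoid of ℕ₀^k, let B ≤ ℤ^k be the subgroup generated by A, and let B' = (A^⊥)^⊥ ∩ ℤ^k (the double orthogonal of A inside ℚ^k, intersected with ℤ^k). Then there exists a positive integer d such that d·(B' ∩ ℕ₀^k) ⊆ A. In particular, the set of supports of elements of A equals the set of supports of elements of B' ∩ ℕ₀^k. -/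
/-- Membership of `x ∈ ℕ₀^k` in `(A^⊥)^⊥ ∩ ℕ₀^k`, where orthogonals are taken in `ℚ^k`. -/
def MemDoublePerp {k : ℕ} (A : AddSubmonoid (Fin k → ℕ)) (x : Fin k → ℕ) : Prop :=
  ∀ v : Fin k → ℚ, (∀ a ∈ A, ∑ i, v i * (a i : ℚ) = 0) → ∑ i, v i * (x i : ℚ) = 0

namespace Stmt4Aux

variable {k : ℕ}

/-- coercion ℕ^k → ℚ^k -/
def cQ (x : Fin k → ℕ) : Fin k → ℚ := fun i => (x i : ℚ)

lemma dual_eq_sum (φ : Module.Dual ℚ (Fin k → ℚ)) (y : Fin k → ℚ) :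
    φ y = ∑ i, φ (Pi.single i 1) * y i := by
  conv_lhs => rw [pi_eq_sum_univ y, map_sum]
  refine Finset.sum_congr rfl fun i _ => ?_
  rw [map_smul, smul_eq_mul, mul_comm]
  congr 2
  funext j
  simp [Pi.single_apply, eq_comm]

lemma mdp_iff_mem_span (A : AddSubmonoid (Fin k → ℕ)) (x : Fin k → ℕ) :
    MemDoublePerp A x ↔ cQ x ∈ Submodule.span ℚ (cQ '' (A : Set (Fin k → ℕ))) := by
  constructor
  · intro h
    rw [← Subspace.forall_mem_dualAnnihilator_apply_eq_zero_iff]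
    intro φ hφ
    rw [Submodule.mem_dualAnnihilator] at hφ
    have key : ∑ i, φ (Pi.single i 1) * ((x i : ℚ)) = 0 := by
      refine h _ fun a ha => ?_
      have h2 := (dual_eq_sum φ (cQ a)).symm
      simp only [cQ] at h2
      rw [h2]
      exact hφ _ (Submodule.subset_span ⟨a, ha, rfl⟩)
    rw [dual_eq_sum]
    exact key
  · intro hx v hv
    set φ : Module.Dual ℚ (Fin k → ℚ) :=
      ∑ i, v i • (LinearMap.proj i : (Fin k → ℚ) →ₗ[ℚ] ℚ) with hφdef
    have hφ : ∀ y : Fin k → ℚ, φ y = ∑ i, v i * y i := by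
      intro y
      simp [hφdef, LinearMap.sum_apply]
    have hker : Submodule.span ℚ (cQ '' (A : Set (Fin k → ℕ))) ≤ LinearMap.ker φ := by
      rw [Submodule.span_le]
      rintro _ ⟨a, ha, rfl⟩
      simp only [SetLike.mem_coe, LinearMap.mem_ker, hφ]
      exact hv a ha
    have := hker hx
    rw [LinearMap.mem_ker, hφ] at this
    exact this

/-- Clearing denominators: a rational span membership gives an integral span membership after
scaling. -/
lemma exists_nsmul_mem_int_span {s : Set (Fin k → ℚ)} {y : Fin k → ℚ}
    (hy : y ∈ Submodule.span ℚ s) :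
    ∃ n : ℕ, 0 < n ∧ (n : ℤ) • y ∈ Submodule.span ℤ s := by
  rw [Submodule.mem_span_set'] at hy
  obtain ⟨n, f, g, hfg⟩ := hy
  refine ⟨∏ i, (f i).den, Finset.prod_pos fun i _ => (f i).pos, ?_⟩
  rw [← hfg, Finset.smul_sum]
  refine Submodule.sum_mem _ fun i _ => ?_
  obtain ⟨m, hm⟩ := Finset.dvd_prod_of_mem (fun j => (f j).den) (Finset.mem_univ i)
  have key : ((∏ j, (f j).den : ℕ) : ℤ) • (f i • (g i : Fin k → ℚ)) =
      ((m : ℤ) * (f i).num) • (g i : Fin k → ℚ) := by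
    rw [← Int.cast_smul_eq_zsmul ℚ, ← Int.cast_smul_eq_zsmul ℚ, smul_smul]
    congr 1
    push_cast [hm]
    rw [mul_comm ((f i).den : ℚ) (m : ℚ), mul_assoc]
    congr 1
    rw [mul_comm]
    exact Rat.mul_den_eq_num (f i)
  rw [key]
  exact Submodule.smul_mem _ _ (Submodule.subset_span (g i).2)

lemma cQ_add (a b : Fin k → ℕ) : cQ (a + b) = cQ a + cQ b := by
  funext i; simp [cQ]

lemma cQ_zero : cQ (0 : Fin k → ℕ) = 0 := by funext i; simp [cQ]

lemma cQ_nsmul (m : ℕ) (a : Fin k → ℕ) : ((m : ℤ)) • cQ a = cQ (m • a) := by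
  funext i
  simp only [Pi.smul_apply, cQ, zsmul_eq_mul, smul_eq_mul]
  push_cast
  ring

lemma mem_intSpan (A : AddSubmonoid (Fin k → ℕ)) {w : Fin k → ℚ}
    (hw : w ∈ Submodule.span ℤ (cQ '' (A : Set (Fin k → ℕ)))) :
    ∃ a ∈ A, ∃ b ∈ A, w = cQ a - cQ b := by
  induction hw using Submodule.span_induction with
  | mem w hw =>
      obtain ⟨a, ha, rfl⟩ := hw
      exact ⟨a, ha, 0, A.zero_mem, by rw [cQ_zero, sub_zero]⟩
  | zero => exact ⟨0, A.zero_mem, 0, A.zero_mem, by simp⟩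
  | add x y _ _ hx hy =>
      obtain ⟨a, ha, b, hb, rfl⟩ := hx
      obtain ⟨c, hc, e, he, rfl⟩ := hy
      exact ⟨a + c, A.add_mem ha hc, b + e, A.add_mem hb he,
        by rw [cQ_add, cQ_add]; abel⟩
  | smul n x _ hx =>
      obtain ⟨a, ha, b, hb, rfl⟩ := hx
      rcases n with m | m
      · refine ⟨m • a, nsmul_mem ha m, m • b, nsmul_mem hb m, ?_⟩
        rw [← cQ_nsmul, ← cQ_nsmul, ← smul_sub]
        rfl
      · refine ⟨(m + 1) • b, nsmul_mem hb (m+1), (m + 1) • a,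
          nsmul_mem ha (m+1), ?_⟩
        rw [← cQ_nsmul, ← cQ_nsmul, ← smul_sub, Int.negSucc_eq, neg_smul, ← smul_neg,
          neg_sub]
        push_cast
        ring_nf

lemma key (A : AddSubmonoid (Fin k → ℕ)) (hA : IsFullAddSubmonoid A) :
    ∃ d : ℕ, 0 < d ∧ ∀ x : Fin k → ℕ, MemDoublePerp A x → d • x ∈ A := by
  classical
  set s : Set (Fin k → ℚ) := cQ '' (A : Set (Fin k → ℕ)) with hs
  set φz : (Fin k → ℤ) →ₗ[ℤ] (Fin k → ℚ) :=
    LinearMap.pi fun i => (Int.castAddHom ℚ).toIntLinearMap.comp (LinearMap.proj i) with hφz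
  set W : Submodule ℤ (Fin k → ℤ) :=
    Submodule.comap φz ((Submodule.span ℚ s).restrictScalars ℤ) with hWdef
  obtain ⟨T, hT⟩ := IsNoetherian.noetherian W
  have hTW : ∀ t ∈ T, φz t ∈ Submodule.span ℚ s := by
    intro t ht
    have : t ∈ W := hT ▸ Submodule.subset_span ht
    exact this
  choose! nfun hpos hmem using fun t (ht : t ∈ T) => exists_nsmul_mem_int_span (hTW t ht)
  refine ⟨∏ t ∈ T, nfun t, Finset.prod_pos fun t ht => hpos t ht, ?_⟩
  set d : ℕ := ∏ t ∈ T, nfun t with hd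
  have hkey : ∀ z ∈ Submodule.span ℤ (T : Set (Fin k → ℤ)),
      (d : ℤ) • φz z ∈ Submodule.span ℤ s := by
    intro z hz
    have hle : Submodule.span ℤ (T : Set (Fin k → ℤ)) ≤
        Submodule.comap ((d : ℤ) • φz) (Submodule.span ℤ s) := by
      rw [Submodule.span_le]
      intro t ht
      rw [Finset.mem_coe] at ht
      obtain ⟨m, hm⟩ := Finset.dvd_prod_of_mem nfun ht
      simp only [SetLike.mem_coe, Submodule.mem_comap, LinearMap.smul_apply]
      rw [show ((d : ℤ)) = (m : ℤ) * (nfun t : ℤ) by rw [hd, hm]; push_cast; ring,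
        mul_smul]
      exact Submodule.smul_mem _ _ (hmem t ht)
    simpa using hle hz
  intro x hx
  rw [mdp_iff_mem_span] at hx
  set z : Fin k → ℤ := fun i => (x i : ℤ) with hzdef
  have hz : φz z = cQ x := by
    funext i
    simp [hφz, cQ, hzdef]
  have hzW : z ∈ Submodule.span ℤ (T : Set (Fin k → ℤ)) := by
    rw [hT, hWdef, Submodule.mem_comap, hz]
    exact hx
  have hmemL := hkey z hzW
  rw [hz] at hmemL
  obtain ⟨a, ha, b, hb, hab⟩ := mem_intSpan A hmemL
  have hba : b + d • x = a := by
    funext i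
    have h1 := congrFun hab i
    simp only [Pi.smul_apply, Pi.sub_apply, cQ, smul_eq_mul] at h1
    rw [zsmul_eq_mul] at h1
    push_cast at h1
    have : ((b i + d * x i : ℕ) : ℚ) = ((a i : ℕ) : ℚ) := by push_cast; linarith
    exact_mod_cast this
  exact hA b hb (d • x) (hba ▸ ha)

end Stmt4Aux

/-- For `A` a full affine submonoid of `ℕ₀^k`, there is `d ≥ 1` with
`d·((A^⊥)^⊥ ∩ ℕ₀^k) ⊆ A`; in particular the supports of elements of `A` and of
`(A^⊥)^⊥ ∩ ℕ₀^k` coincide. -/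
theorem stmt4 {k : ℕ} (A : AddSubmonoid (Fin k → ℕ)) (hA : IsFullAddSubmonoid A) :
    (∃ d : ℕ, 0 < d ∧ ∀ x : Fin k → ℕ, MemDoublePerp A x → d • x ∈ A) ∧
    (∀ I : Set (Fin k),
      (∃ a ∈ A, {i | a i ≠ 0} = I) ↔ (∃ x, MemDoublePerp A x ∧ {i | x i ≠ 0} = I)) := by
  obtain ⟨d, hd, hdA⟩ := Stmt4Aux.key A hA
  refine ⟨⟨d, hd, hdA⟩, fun I => ⟨?_, ?_⟩⟩
  · rintro ⟨a, ha, rfl⟩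
    exact ⟨a, fun v hv => hv a ha, rfl⟩
  · rintro ⟨x, hx, rfl⟩
    refine ⟨d • x, hdA x hx, ?_⟩
    ext i
    simp only [Set.mem_setOf_eq, Pi.smul_apply, smul_eq_mul]
    constructor
    · intro h hx0
      exact h (by rw [hx0, mul_zero])
    · intro h hmul
      rcases Nat.mul_eq_zero.1 hmul with h0 | h0
      · exact absurd h0 (Nat.pos_iff_ne_zero.mp hd)
      · exact h h0
end

section
/- Let A be a full affine submonoid of ℕ₀^k. Then there exists a finite set v_1,…,v_s of vectors in ℤ^k, each orthogonal to all elements of A, such that for every nonempty I ⊆ {1,…,k}: I is the support of some nonzero element of A if and only if for each i = 1,…,s, the restriction of v_i to the coordinates in I is either identically zero or has both a strictly positive and a strictly negative component. -/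
namespace Stmt5Aux

variable {k : ℕ}

def dot (x y : Fin k → ℚ) : ℚ := ∑ i, x i * y i

lemma dot_self_pos {c : Fin k → ℚ} (hc : c ≠ 0) : 0 < dot c c := by
  have : ∃ i, c i ≠ 0 := by
    by_contra h; push_neg at h; exact hc (funext h)
  obtain ⟨i, hi⟩ := this
  exact Finset.sum_pos' (fun j _ => mul_self_nonneg _)
    ⟨i, Finset.mem_univ i, by have := mul_self_nonneg (c i); exact this.lt_of_ne fun h => hi (mul_self_eq_zero.mp h.symm)⟩

lemma dot_sub_smul_left (x y z : Fin k → ℚ) (r : ℚ) :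
    dot (x - r • y) z = dot x z - r * dot y z := by
  simp only [dot, Pi.sub_apply, Pi.smul_apply, smul_eq_mul, sub_mul, mul_assoc,
    Finset.sum_sub_distrib, Finset.mul_sum]

lemma dot_sub_smul_right (x y z : Fin k → ℚ) (r : ℚ) :
    dot x (y - r • z) = dot x y - r * dot x z := by
  simp only [dot, Pi.sub_apply, Pi.smul_apply, smul_eq_mul, mul_sub,
    Finset.sum_sub_distrib, Finset.mul_sum]
  congr 1
  exact Finset.sum_congr rfl fun i _ => by ring

lemma dot_neg_right (x y : Fin k → ℚ) : dot x (-y) = - dot x y := by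
  simp [dot, mul_neg, Finset.sum_neg_distrib]

lemma dot_single_right (x : Fin k → ℚ) (j : Fin k) : dot x (Pi.single j 1) = x j := by
  simp [dot, Pi.single_apply, mul_ite, Finset.sum_ite_eq']

/-- `dot y ·` as a linear map. -/
def dotL (y : Fin k → ℚ) : (Fin k → ℚ) →ₗ[ℚ] ℚ where
  toFun x := dot y x
  map_add' a b := by simp [dot, mul_add, Finset.sum_add_distrib]
  map_smul' r a := by
    simp only [dot, Pi.smul_apply, smul_eq_mul, RingHom.id_apply, Finset.mul_sum]
    exact Finset.sum_congr rfl fun i _ => by ring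

theorem farkas : ∀ (m : ℕ) (a : Fin m → (Fin k → ℚ)) (c : Fin k → ℚ),
    (∃ lam : Fin m → ℚ, (∀ t, 0 ≤ lam t) ∧ c = ∑ t, lam t • a t) ∨
    (∃ y : Fin k → ℚ, (∀ t, dot y (a t) ≤ 0) ∧ 0 < dot y c) := by
  intro m
  induction m with
  | zero =>
    intro a c
    by_cases hc : c = 0
    · exact Or.inl ⟨0, fun t => le_refl _, by simp [hc]⟩
    · exact Or.inr ⟨c, fun t => t.elim0, dot_self_pos hc⟩
  | succ m ih =>
    intro a c
    rcases ih (fun t => a t.castSucc) c with ⟨lam, h0, hc⟩ | ⟨y, hy, hyc⟩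
    · refine Or.inl ⟨Fin.snoc lam 0, ?_, ?_⟩
      · intro t
        refine Fin.lastCases ?_ ?_ t
        · simp
        · intro t; simpa using h0 t
      · rw [Fin.sum_univ_castSucc]
        simp [Fin.snoc_castSucc, Fin.snoc_last, hc]
    · by_cases hyb : dot y (a (Fin.last m)) ≤ 0
      · refine Or.inr ⟨y, ?_, hyc⟩
        intro t
        refine Fin.lastCases hyb (fun t => hy t) t
      · push_neg at hyb
        set b := a (Fin.last m) with hbdef
        have hyb' : dot y b ≠ 0 := ne_of_gt hyb
        rcases ih (fun t => a t.castSucc - (dot y (a t.castSucc) / dot y b) • b)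
            (c - (dot y c / dot y b) • b) with ⟨lam, h0, hc⟩ | ⟨z, hz, hzc⟩
        · set μ := (dot y c - ∑ t, lam t * dot y (a t.castSucc)) / dot y b with hμ
          refine Or.inl ⟨Fin.snoc lam μ, ?_, ?_⟩
          · intro t
            refine Fin.lastCases ?_ (fun t => by simpa using h0 t) t
            simp only [Fin.snoc_last]
            have hsum : ∑ t, lam t * dot y (a t.castSucc) ≤ 0 :=
              Finset.sum_nonpos fun t _ => mul_nonpos_iff.mpr (Or.inl ⟨h0 t, hy t⟩)
            have : 0 < μ := div_pos (by linarith) hyb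
            exact this.le
          · have hc' : c = (∑ t, lam t • (a t.castSucc - (dot y (a t.castSucc) / dot y b) • b))
                + (dot y c / dot y b) • b := by
              rw [← hc]; abel
            have hexp : ∑ t, lam t • (a t.castSucc - (dot y (a t.castSucc) / dot y b) • b)
                = (∑ t, lam t • a t.castSucc)
                  - (∑ t, lam t * (dot y (a t.castSucc) / dot y b)) • b := by
              rw [Finset.sum_smul]
              rw [← Finset.sum_sub_distrib]
              congr 1; funext t
              rw [smul_sub, smul_smul]
            have hμ' : μ = dot y c / dot y b - ∑ t, lam t * (dot y (a t.castSucc) / dot y b) := by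
              rw [hμ, sub_div, Finset.sum_div]
              congr 1
              exact Finset.sum_congr rfl fun t _ => (mul_div_assoc _ _ _)
            rw [Fin.sum_univ_castSucc]
            simp only [Fin.snoc_castSucc, Fin.snoc_last]
            rw [hc', hexp, hμ', sub_smul]
            abel
        · set r := dot z b / dot y b with hr
          refine Or.inr ⟨z - r • y, ?_, ?_⟩
          · intro t
            refine Fin.lastCases ?_ ?_ t
            · rw [dot_sub_smul_left, hr, div_mul_cancel₀ _ hyb']
              simp [hbdef]
            · intro t
              have h1 := hz t
              rw [dot_sub_smul_right] at h1
              rw [dot_sub_smul_left]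
              have : r * dot y (a t.castSucc)
                  = dot y (a t.castSucc) / dot y b * dot z b := by
                rw [hr]; ring
              linarith
          · rw [dot_sub_smul_right] at hzc
            rw [dot_sub_smul_left]
            have : r * dot y c = dot y c / dot y b * dot z b := by rw [hr]; ring
            linarith

theorem farkas' {ι : Type} [Fintype ι] (g : ι → (Fin k → ℚ)) (c : Fin k → ℚ) :
    (∃ lam : ι → ℚ, (∀ t, 0 ≤ lam t) ∧ c = ∑ t, lam t • g t) ∨
    (∃ y : Fin k → ℚ, (∀ t, dot y (g t) ≤ 0) ∧ 0 < dot y c) := by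
  obtain e := Fintype.equivFin ι
  rcases farkas (Fintype.card ι) (g ∘ e.symm) c with ⟨lam, h0, hc⟩ | ⟨y, hy, hyc⟩
  · refine Or.inl ⟨lam ∘ e, fun t => h0 _, ?_⟩
    rw [hc, ← Equiv.sum_comp e.symm (fun t => (lam ∘ e) t • g t)]
    simp [Function.comp, Equiv.apply_symm_apply]
  · refine Or.inr ⟨y, fun t => ?_, hyc⟩
    simpa using hy (e t)

/-- cast of a natural vector to a rational vector -/
def qcast (a : Fin k → ℕ) : Fin k → ℚ := fun i => (a i : ℚ)

lemma qcast_smul (n : ℕ) (a : Fin k → ℕ) : qcast (n • a) = (n : ℚ) • qcast a := by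
  funext i; simp [qcast]

lemma qcast_add (a b : Fin k → ℕ) : qcast (a + b) = qcast a + qcast b := by
  funext i; simp [qcast]

/-- clearing denominators: every rational nonnegative vector in the span of a full
submonoid has a positive multiple in the submonoid. -/
lemma exists_nat_smul_mem {A : AddSubmonoid (Fin k → ℕ)}
    (hA : ∀ x ∈ A, ∀ t : Fin k → ℕ, x + t ∈ A → t ∈ A)
    {x : Fin k → ℚ} (hx : x ∈ Submodule.span ℚ (qcast '' (A : Set (Fin k → ℕ))))
    (hx0 : ∀ i, 0 ≤ x i) :
    ∃ (n : ℕ) (b : Fin k → ℕ), 0 < n ∧ b ∈ A ∧ ∀ i, (b i : ℚ) = n * x i := by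
  have key : ∀ y ∈ Submodule.span ℚ (qcast '' (A : Set (Fin k → ℕ))),
      ∃ (n : ℕ) (p q : Fin k → ℕ), 0 < n ∧ p ∈ A ∧ q ∈ A ∧
        ∀ i, (n : ℚ) * y i = (p i : ℚ) - (q i : ℚ) := by
    intro y hy
    induction hy using Submodule.span_induction with
    | mem v hv =>
      obtain ⟨a, ha, rfl⟩ := hv
      exact ⟨1, a, 0, one_pos, ha, zero_mem _, fun i => by simp [qcast]⟩
    | zero => exact ⟨1, 0, 0, one_pos, zero_mem _, zero_mem _, fun i => by simp⟩
    | add v w hv hw ihv ihw =>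
      obtain ⟨n1, p1, q1, hn1, hp1, hq1, h1⟩ := ihv
      obtain ⟨n2, p2, q2, hn2, hp2, hq2, h2⟩ := ihw
      refine ⟨n1 * n2, n2 • p1 + n1 • p2, n2 • q1 + n1 • q2, Nat.mul_pos hn1 hn2,
        add_mem (AddSubmonoid.nsmul_mem A hp1 n2) (AddSubmonoid.nsmul_mem A hp2 n1),
        add_mem (AddSubmonoid.nsmul_mem A hq1 n2) (AddSubmonoid.nsmul_mem A hq2 n1),
        fun i => ?_⟩
      have e1 := h1 i
      have e2 := h2 i
      simp only [Pi.add_apply, Pi.smul_apply, smul_eq_mul]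
      push_cast
      linear_combination (n2 : ℚ) * e1 + (n1 : ℚ) * e2
    | smul r v hv ihv =>
      obtain ⟨n, p, q, hn, hp, hq, h⟩ := ihv
      have hden : ((r.den : ℚ)) * r = (r.num : ℚ) := by
        have h0 : (r.den : ℚ) ≠ 0 := Nat.cast_ne_zero.mpr r.den_nz
        have h1 : (r.num : ℚ) = r * r.den := (div_eq_iff h0).mp (Rat.num_div_den r)
        rw [h1]; ring
      by_cases hr : 0 ≤ r.num
      · refine ⟨n * r.den, r.num.toNat • p, r.num.toNat • q, Nat.mul_pos hn r.pos,
          AddSubmonoid.nsmul_mem A hp _, AddSubmonoid.nsmul_mem A hq _, fun i => ?_⟩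
        have hnum : ((r.num.toNat : ℚ)) = (r.num : ℚ) := by
          rw [← Int.cast_natCast, Int.toNat_of_nonneg hr]
        have h' := h i
        have hkey : ((n : ℚ) * r.den) * (r * v i) = (r.num : ℚ) * ((n : ℚ) * v i) := by
          calc ((n : ℚ) * r.den) * (r * v i) = (n : ℚ) * (((r.den : ℚ)) * r) * v i := by ring
          _ = (n : ℚ) * (r.num : ℚ) * v i := by rw [hden]
          _ = (r.num : ℚ) * ((n : ℚ) * v i) := by ring
        simp only [Pi.smul_apply, smul_eq_mul]
        push_cast
        rw [hkey, h']
        linear_combination ((q i : ℚ) - (p i : ℚ)) * hnum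
      · push_neg at hr
        refine ⟨n * r.den, (-r.num).toNat • q, (-r.num).toNat • p, Nat.mul_pos hn r.pos,
          AddSubmonoid.nsmul_mem A hq _, AddSubmonoid.nsmul_mem A hp _, fun i => ?_⟩
        have hnum : (((-r.num).toNat : ℚ)) = -(r.num : ℚ) := by
          rw [← Int.cast_natCast, Int.toNat_of_nonneg (by omega : (0:ℤ) ≤ -r.num)]
          push_cast; ring
        have h' := h i
        have hkey : ((n : ℚ) * r.den) * (r * v i) = (r.num : ℚ) * ((n : ℚ) * v i) := by
          calc ((n : ℚ) * r.den) * (r * v i) = (n : ℚ) * (((r.den : ℚ)) * r) * v i := by ring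
          _ = (n : ℚ) * (r.num : ℚ) * v i := by rw [hden]
          _ = (r.num : ℚ) * ((n : ℚ) * v i) := by ring
        simp only [Pi.smul_apply, smul_eq_mul]
        push_cast
        rw [hkey, h']
        linear_combination ((p i : ℚ) - (q i : ℚ)) * hnum
  obtain ⟨n, p, q, hn, hp, hq, h⟩ := key x hx
  have hle : ∀ i, q i ≤ p i := by
    intro i
    have := h i
    have h0 : (0 : ℚ) ≤ (n : ℚ) * x i := mul_nonneg (by positivity) (hx0 i)
    rw [this] at h0
    exact_mod_cast sub_nonneg.mp h0
  refine ⟨n, fun i => p i - q i, hn, ?_, fun i => ?_⟩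
  · have : q + (fun i => p i - q i) = p := by
      funext i; simp [Nat.add_sub_cancel' (hle i)]
    exact hA q hq _ (by rw [this]; exact hp)
  · have := h i
    push_cast [Nat.cast_sub (hle i)]
    linarith

lemma single_nonneg (j i : Fin k) : (0:ℚ) ≤ (Pi.single j (1:ℚ) : Fin k → ℚ) i := by
  rw [Pi.single_apply]; split <;> norm_num

lemma exists_witness {A : AddSubmonoid (Fin k → ℕ)}
    (hA : ∀ x ∈ A, ∀ t : Fin k → ℕ, x + t ∈ A → t ∈ A)
    (I : Set (Fin k)) (i₀ : Fin k) (hi₀ : i₀ ∈ I)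
    (hbad : ∀ a ∈ A, (∀ j, j ∉ I → a j = 0) → a i₀ = 0) :
    ∃ y : Fin k → ℚ, (∀ a ∈ A, dot y (qcast a) = 0) ∧ (∀ i ∈ I, 0 ≤ y i) ∧ 0 < y i₀ := by
  classical
  set V := Submodule.span ℚ (qcast '' (A : Set (Fin k → ℕ))) with hV
  obtain ⟨T, hT⟩ : V.FG := IsNoetherian.noetherian V
  set g : (↥T ⊕ (↥T ⊕ {i : Fin k // i ∈ I})) → (Fin k → ℚ) :=
    Sum.elim (fun v => (v : Fin k → ℚ))
      (Sum.elim (fun v => -(v : Fin k → ℚ)) (fun i => -(Pi.single (i : Fin k) (1:ℚ)))) with hg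
  rcases farkas' g (Pi.single i₀ 1) with ⟨lam, h0, hc⟩ | ⟨y, hy, hyc⟩
  · exfalso
    set x : Fin k → ℚ :=
      fun i => ∑ v : ↥T, (lam (Sum.inl v) - lam (Sum.inr (Sum.inl v))) * (v : Fin k → ℚ) i with hx
    have hxV : x ∈ V := by
      rw [← hT]
      have hxe : x = ∑ v : ↥T, (lam (Sum.inl v) - lam (Sum.inr (Sum.inl v))) • (v : Fin k → ℚ) := by
        funext i; simp [hx, Finset.sum_apply]
      rw [hxe]
      exact Submodule.sum_smul_mem _ _ (fun v _ => Submodule.subset_span v.2)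
    have hxc : ∀ i, x i = (Pi.single i₀ (1:ℚ) : Fin k → ℚ) i
        + ∑ j : {i : Fin k // i ∈ I}, lam (Sum.inr (Sum.inr j)) * (Pi.single (j : Fin k) (1:ℚ) : Fin k → ℚ) i := by
      intro i
      have hci := congrFun hc i
      simp only [Finset.sum_apply, Pi.smul_apply, smul_eq_mul, Fintype.sum_sum_type, hg,
        Sum.elim_inl, Sum.elim_inr, Pi.neg_apply, mul_neg, Finset.sum_neg_distrib] at hci
      have hsplit : x i = (∑ v : ↥T, lam (Sum.inl v) * (v : Fin k → ℚ) i)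
          - ∑ v : ↥T, lam (Sum.inr (Sum.inl v)) * (v : Fin k → ℚ) i := by
        simp [hx, sub_mul, Finset.sum_sub_distrib]
      rw [hsplit]
      linarith [hci]
    have hnonneg : ∀ i, 0 ≤ x i := by
      intro i
      rw [hxc i]
      have h1 : (0:ℚ) ≤ (Pi.single i₀ (1:ℚ) : Fin k → ℚ) i := single_nonneg _ _
      have h2 : (0:ℚ) ≤ ∑ j : {i : Fin k // i ∈ I},
          lam (Sum.inr (Sum.inr j)) * (Pi.single (j : Fin k) (1:ℚ) : Fin k → ℚ) i :=
        Finset.sum_nonneg fun j _ => mul_nonneg (h0 _) (single_nonneg _ _)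
      linarith
    obtain ⟨n, b, hn, hb, hcast⟩ := exists_nat_smul_mem hA (hV ▸ hxV) hnonneg
    have hsupp : ∀ j, j ∉ I → b j = 0 := by
      intro j hj
      have hxj : x j = 0 := by
        rw [hxc j]
        have h1 : (Pi.single i₀ (1:ℚ) : Fin k → ℚ) j = 0 := by
          apply Pi.single_eq_of_ne
          intro hji; exact hj (hji ▸ hi₀)
        have h2 : ∀ j' : {i : Fin k // i ∈ I}, lam (Sum.inr (Sum.inr j')) * (Pi.single (j' : Fin k) (1:ℚ) : Fin k → ℚ) j = 0 := by
          intro j'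
          have : (Pi.single (j' : Fin k) (1:ℚ) : Fin k → ℚ) j = 0 := by
            apply Pi.single_eq_of_ne
            intro hjj; exact hj (hjj ▸ j'.2)
          rw [this, mul_zero]
        rw [h1, Finset.sum_eq_zero (fun j' _ => h2 j'), add_zero]
      have := hcast j
      rw [hxj, mul_zero] at this
      exact_mod_cast this
    have hpos : (0:ℚ) < (b i₀ : ℚ) := by
      rw [hcast i₀]
      have h1 : (1:ℚ) ≤ x i₀ := by
        rw [hxc i₀, Pi.single_eq_same]
        have : (0:ℚ) ≤ ∑ j : {i : Fin k // i ∈ I},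
            lam (Sum.inr (Sum.inr j)) * (Pi.single (j : Fin k) (1:ℚ) : Fin k → ℚ) i₀ :=
          Finset.sum_nonneg fun j _ => mul_nonneg (h0 _) (single_nonneg _ _)
        linarith
      have hn' : (0:ℚ) < n := by exact_mod_cast hn
      nlinarith
    rw [hbad b hb hsupp] at hpos
    norm_num at hpos
  · refine ⟨y, ?_, ?_, ?_⟩
    · have horthT : ∀ v ∈ T, dot y v = 0 := by
        intro v hv
        have h1 := hy (Sum.inl ⟨v, hv⟩)
        have h2 := hy (Sum.inr (Sum.inl ⟨v, hv⟩))
        simp only [hg, Sum.elim_inl, Sum.elim_inr, dot_neg_right] at h1 h2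
        linarith
      have hker : V ≤ LinearMap.ker (dotL y) := by
        rw [← hT]
        apply Submodule.span_le.mpr
        intro v hv
        exact LinearMap.mem_ker.mpr (horthT v hv)
      intro a ha
      have : qcast a ∈ V := Submodule.subset_span ⟨a, ha, rfl⟩
      exact LinearMap.mem_ker.mp (hker this)
    · intro i hi
      have := hy (Sum.inr (Sum.inr ⟨i, hi⟩))
      simp only [hg, Sum.elim_inr, dot_neg_right, dot_single_right] at this
      linarith
    · rw [dot_single_right] at hyc
      exact hyc

lemma exists_int_witness {A : AddSubmonoid (Fin k → ℕ)}
    (hA : ∀ x ∈ A, ∀ t : Fin k → ℕ, x + t ∈ A → t ∈ A)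
    (I : Set (Fin k)) (i₀ : Fin k) (hi₀ : i₀ ∈ I)
    (hbad : ∀ a ∈ A, (∀ j, j ∉ I → a j = 0) → a i₀ = 0) :
    ∃ w : Fin k → ℤ, (∀ a ∈ A, ∑ i, w i * (a i : ℤ) = 0) ∧ (∀ i ∈ I, 0 ≤ w i) ∧
      (∃ i ∈ I, 0 < w i) := by
  obtain ⟨y, hy1, hy2, hy3⟩ := exists_witness hA I i₀ hi₀ hbad
  set N : ℕ := ∏ i, (y i).den with hN
  have hNpos : 0 < N := Finset.prod_pos fun i _ => (y i).pos
  have hdvd : ∀ i, (y i).den ∣ N := fun i => Finset.dvd_prod_of_mem _ (Finset.mem_univ i)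
  set m : Fin k → ℕ := fun i => N / (y i).den with hm
  set w : Fin k → ℤ := fun i => ((m i : ℤ)) * (y i).num with hw
  have hcast : ∀ i, (w i : ℚ) = (N : ℚ) * y i := by
    intro i
    have h0 : ((y i).den : ℚ) ≠ 0 := Nat.cast_ne_zero.mpr (y i).den_nz
    have h1 : ((y i).den : ℚ) * y i = ((y i).num : ℚ) := by
      have := (div_eq_iff h0).mp (Rat.num_div_den (y i))
      linarith
    have h2 : m i * (y i).den = N := by rw [hm]; exact Nat.div_mul_cancel (hdvd i)
    calc (w i : ℚ) = ((m i : ℚ)) * ((y i).num : ℚ) := by rw [hw]; push_cast; ring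
      _ = ((m i : ℚ)) * (((y i).den : ℚ) * y i) := by rw [h1]
      _ = ((m i * (y i).den : ℕ) : ℚ) * y i := by push_cast; ring
      _ = (N : ℚ) * y i := by rw [h2]
  have hNQ : (0:ℚ) < (N:ℚ) := by exact_mod_cast hNpos
  refine ⟨w, ?_, ?_, ⟨i₀, hi₀, ?_⟩⟩
  · intro a ha
    have hQ : ((∑ i, w i * (a i : ℤ) : ℤ) : ℚ) = 0 := by
      push_cast
      calc ∑ i, (w i : ℚ) * (a i : ℚ) = ∑ i, ((N : ℚ) * y i) * (a i : ℚ) := by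
            exact Finset.sum_congr rfl fun i _ => by rw [hcast i]
        _ = (N : ℚ) * ∑ i, y i * (a i : ℚ) := by rw [Finset.mul_sum]; exact Finset.sum_congr rfl fun i _ => by ring
        _ = (N : ℚ) * dot y (qcast a) := rfl
        _ = 0 := by rw [hy1 a ha, mul_zero]
    exact_mod_cast hQ
  · intro i hi
    have : (0:ℚ) ≤ (w i : ℚ) := by
      rw [hcast i]
      exact mul_nonneg hNQ.le (hy2 i hi)
    exact_mod_cast this
  · have : (0:ℚ) < (w i₀ : ℚ) := by
      rw [hcast i₀]
      exact mul_pos hNQ hy3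
    exact_mod_cast this

lemma good_of_forall {A : AddSubmonoid (Fin k → ℕ)} (I : Set (Fin k)) (hI : I.Nonempty)
    (h : ∀ i₀ ∈ I, ∃ a ∈ A, (∀ j, j ∉ I → a j = 0) ∧ a i₀ ≠ 0) :
    ∃ a ∈ A, a ≠ 0 ∧ {i | a i ≠ 0} = I := by
  classical
  choose f hfA hfsupp hfpos using h
  set F : Finset (Fin k) := Finset.univ.filter (· ∈ I) with hF
  have hmem : ∀ i : ↥F, (i : Fin k) ∈ I := fun i => (Finset.mem_filter.mp i.2).2
  set a : Fin k → ℕ := ∑ i : ↥F, f (i : Fin k) (hmem i) with ha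
  have haA : a ∈ A := AddSubmonoid.sum_mem A fun i _ => hfA _ _
  have happ : ∀ j, a j = ∑ i : ↥F, f (i : Fin k) (hmem i) j := by
    intro j; rw [ha]; simp [Finset.sum_apply]
  have hzero : ∀ j, j ∉ I → a j = 0 := by
    intro j hj
    rw [happ]
    exact Finset.sum_eq_zero fun i _ => hfsupp _ _ j hj
  have hpos : ∀ j ∈ I, a j ≠ 0 := by
    intro j hj
    have hjF : j ∈ F := Finset.mem_filter.mpr ⟨Finset.mem_univ j, hj⟩
    intro h0
    rw [happ] at h0
    have := (Finset.sum_eq_zero_iff).mp h0 ⟨j, hjF⟩ (Finset.mem_univ _)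
    exact hfpos j (hmem ⟨j, hjF⟩) this
  obtain ⟨i₁, hi₁⟩ := hI
  refine ⟨a, haA, ?_, ?_⟩
  · intro h0
    exact hpos i₁ hi₁ (by rw [h0]; rfl)
  · ext i
    simp only [Set.mem_setOf_eq]
    constructor
    · intro hne
      by_contra hni
      exact hne (hzero i hni)
    · exact hpos i

lemma sign_lemma (I : Set (Fin k)) (a : Fin k → ℕ) (hsupp : {i | a i ≠ 0} = I)
    (u : Fin k → ℤ) (horth : ∑ i, u i * (a i : ℤ) = 0) :
    (∀ i ∈ I, u i = 0) ∨ ((∃ i ∈ I, 0 < u i) ∧ (∃ i ∈ I, u i < 0)) := by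
  classical
  by_cases hz : ∀ i ∈ I, u i = 0
  · exact Or.inl hz
  push_neg at hz
  obtain ⟨i₁, hi₁, hne⟩ := hz
  have hIa : ∀ i, i ∈ I ↔ a i ≠ 0 := by
    intro i
    rw [← hsupp]; rfl
  have haz : ∀ i, i ∉ I → (a i : ℤ) = 0 := by
    intro i hi
    have : ¬ a i ≠ 0 := fun h => hi ((hIa i).mpr h)
    push_neg at this
    exact_mod_cast this
  have ha1 : (0:ℤ) < (a i₁ : ℤ) := by
    have h := (hIa i₁).mp hi₁
    exact_mod_cast Nat.pos_of_ne_zero h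
  right
  constructor
  · by_contra hp
    push_neg at hp
    have hterms : ∀ i ∈ Finset.univ, u i * (a i : ℤ) ≤ 0 := by
      intro i _
      by_cases hiI : i ∈ I
      · exact mul_nonpos_iff.mpr (Or.inr ⟨hp i hiI, Int.natCast_nonneg _⟩)
      · rw [haz i hiI, mul_zero]
    have hall := (Finset.sum_eq_zero_iff_of_nonpos hterms).mp horth
    have := hall i₁ (Finset.mem_univ _)
    rcases mul_eq_zero.mp this with h | h
    · exact hne h
    · omega
  · by_contra hp
    push_neg at hp
    have hterms : ∀ i ∈ Finset.univ, 0 ≤ u i * (a i : ℤ) := by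
      intro i _
      by_cases hiI : i ∈ I
      · exact mul_nonneg (hp i hiI) (Int.natCast_nonneg _)
      · rw [haz i hiI, mul_zero]
    have hall := (Finset.sum_eq_zero_iff_of_nonneg hterms).mp horth
    have := hall i₁ (Finset.mem_univ _)
    rcases mul_eq_zero.mp this with h | h
    · exact hne h
    · omega

end Stmt5Aux

/-- For a full affine submonoid `A ⊆ ℕ₀^k` there are finitely many integer vectors
`v_1,…,v_s`, orthogonal to `A`, such that a nonempty `I ⊆ {1,…,k}` is the support of a
nonzero element of `A` iff each `v_j` restricted to `I` is zero or has both a positive and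
a negative component. -/
theorem stmt5 {k : ℕ} (A : AddSubmonoid (Fin k → ℕ)) (hA : IsFullAddSubmonoid A) :
    ∃ (s : ℕ) (v : Fin s → (Fin k → ℤ)),
      (∀ j, ∀ a ∈ A, ∑ i, v j i * (a i : ℤ) = 0) ∧
      (∀ I : Set (Fin k), I.Nonempty →
        ((∃ a ∈ A, a ≠ 0 ∧ {i | a i ≠ 0} = I) ↔
          (∀ j, (∀ i ∈ I, v j i = 0) ∨
            ((∃ i ∈ I, 0 < v j i) ∧ (∃ i ∈ I, v j i < 0))))) := by
  classical
  have hwit : ∀ I : Set (Fin k), I.Nonempty → ¬ (∃ a ∈ A, a ≠ 0 ∧ {i | a i ≠ 0} = I) →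
      ∃ w : Fin k → ℤ, (∀ a ∈ A, ∑ i, w i * (a i : ℤ) = 0) ∧ (∀ i ∈ I, 0 ≤ w i) ∧
        (∃ i ∈ I, 0 < w i) := by
    intro I hI hng
    have hex : ∃ i₀ ∈ I, ∀ a ∈ A, (∀ j, j ∉ I → a j = 0) → a i₀ = 0 := by
      by_contra hcon
      push_neg at hcon
      refine hng (Stmt5Aux.good_of_forall I hI ?_)
      intro i₀ hi₀
      obtain ⟨a, ha, hsupp, hne⟩ := hcon i₀ hi₀
      exact ⟨a, ha, hsupp, hne⟩
    obtain ⟨i₀, hi₀, hbad⟩ := hex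
    exact Stmt5Aux.exists_int_witness hA I i₀ hi₀ hbad
  set w : Set (Fin k) → (Fin k → ℤ) := fun I =>
    if h : I.Nonempty ∧ ¬ (∃ a ∈ A, a ≠ 0 ∧ {i | a i ≠ 0} = I) then
      (hwit I h.1 h.2).choose
    else 0 with hwdef
  have horthall : ∀ J : Set (Fin k), ∀ a ∈ A, ∑ i, w J i * (a i : ℤ) = 0 := by
    intro J a ha
    by_cases h : J.Nonempty ∧ ¬ (∃ a ∈ A, a ≠ 0 ∧ {i | a i ≠ 0} = J)
    · rw [hwdef]
      simp only [dif_pos h]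
      exact (hwit J h.1 h.2).choose_spec.1 a ha
    · rw [hwdef]
      simp only [dif_neg h]
      simp
  refine ⟨Fintype.card (Set (Fin k)),
    fun j => w ((Fintype.equivFin (Set (Fin k))).symm j), ?_, ?_⟩
  · intro j a ha
    exact horthall _ a ha
  · intro I hI
    constructor
    · rintro ⟨a, ha, hane, hsupp⟩ j
      exact Stmt5Aux.sign_lemma I a hsupp _ (horthall _ a ha)
    · intro hcond
      by_contra hng
      have h : I.Nonempty ∧ ¬ (∃ a ∈ A, a ≠ 0 ∧ {i | a i ≠ 0} = I) := ⟨hI, hng⟩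
      have hwI : w I = (hwit I h.1 h.2).choose := by rw [hwdef]; simp only [dif_pos h]
      obtain ⟨-, hnonneg, ip, hip, hpos⟩ := (hwit I h.1 h.2).choose_spec
      have hj := hcond ((Fintype.equivFin (Set (Fin k))) I)
      simp only [Equiv.symm_apply_apply] at hj
      rcases hj with hzero | ⟨-, im, him, hneg⟩
      · have := hzero ip hip
        rw [hwI] at this
        omega
      · have := hnonneg im him
        rw [hwI] at hneg
        omega
end

section
/- Let ℕ₀* = ℕ₀ ∪ {∞}. Let M ⊆ (ℕ₀*)^k be the set of solutions of a system E₁·T = E₂·T with E₁, E₂ ∈ M_{ℓ×k}(ℕ₀). If x ∈ M, then the element x* ∈ (ℕ₀*)^k defined by (x*)_i = ∞ if x_i = ∞ and (x*)_i = 0 otherwise is also in M. -/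
lemma starSumAux7 {k : ℕ} (E : Fin k → ℕ) (x : Fin k → ℕ∞) :
    ∑ i, (E i : ℕ∞) * (if x i = ⊤ then (⊤ : ℕ∞) else 0) =
      if (∑ i, (E i : ℕ∞) * x i) = ⊤ then ⊤ else 0 := by
  have hterm : ∀ i, (E i : ℕ∞) * (if x i = ⊤ then (⊤ : ℕ∞) else 0) =
      if E i ≠ 0 ∧ x i = ⊤ then (⊤ : ℕ∞) else 0 := by
    intro i
    by_cases hx : x i = ⊤ <;> by_cases hE : E i = 0 <;>
      simp [hx, hE, ENat.mul_top, Nat.cast_eq_zero]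
  have htop : (∑ i, (E i : ℕ∞) * x i) = ⊤ ↔ ∃ i, E i ≠ 0 ∧ x i = ⊤ := by
    rw [ENat.sum_eq_top]
    constructor
    · rintro ⟨i, -, hi⟩
      refine ⟨i, ?_, ?_⟩
      · rintro h; simp [h] at hi
      · rcases WithTop.mul_eq_top_iff.mp hi with ⟨-, h⟩ | ⟨h, -⟩
        · exact h
        · exact absurd h (WithTop.coe_ne_top)
    · rintro ⟨i, hE, hx⟩
      exact ⟨i, Finset.mem_univ i, by
        rw [hx, ENat.mul_top (by simpa using hE)]⟩
  simp only [hterm]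
  by_cases h : ∃ i, E i ≠ 0 ∧ x i = ⊤
  · obtain ⟨i, hi⟩ := h
    rw [if_pos (htop.mpr ⟨i, hi⟩)]
    rw [ENat.sum_eq_top.mpr ⟨i, Finset.mem_univ i, by simp [hi]⟩]
  · rw [if_neg (fun ht => h (htop.mp ht))]
    push_neg at h
    exact Finset.sum_eq_zero fun i _ => by
      by_cases hE : E i = 0
      · simp [hE]
      · simp [hE, h i hE]

/-- If `x ∈ (ℕ₀*)^k` solves a system `E₁·T = E₂·T` of linear equations with coefficients
in `ℕ₀`, then so does `x*`, the element whose `i`-th coordinate is `∞` where `x_i = ⊤`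
and `0` elsewhere. -/
theorem stmt7 {k l : ℕ} (E₁ E₂ : Fin l → Fin k → ℕ) (x : Fin k → ℕ∞)
    (hx : ∀ j, ∑ i, (E₁ j i : ℕ∞) * x i = ∑ i, (E₂ j i : ℕ∞) * x i) :
    ∀ j, ∑ i, (E₁ j i : ℕ∞) * (if x i = ⊤ then (⊤ : ℕ∞) else 0) =
         ∑ i, (E₂ j i : ℕ∞) * (if x i = ⊤ then (⊤ : ℕ∞) else 0) := by
  intro j
  rw [starSumAux7, starSumAux7, hx j]
end

section
/- Let ℕ₀* = ℕ₀ ∪ {∞}. Let E₁, E₂ ∈ M_{ℓ×k}(ℕ₀) be such that for each i, the i-th rows r¹_i of E₁ and r²_i of E₂ have disjoint supports. Let M ⊆ (ℕ₀*)^k be the set of solutions of E₁·T = E₂·T, and let ∅ ≠ I ⊆ {1,…,k}. Then there exists x ∈ M with supp(x) = I if and only if for each i = 1,…,ℓ, the restriction of r¹_i − r²_i to the coordinates in I is either zero or has both a positive and a negative component. -/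
lemma stmt8_aux {k : ℕ} (E₁ E₂ : Fin k → ℕ) (y : Fin k → ℕ) (I : Set (Fin k))
    (hy : ∀ i, y i ≠ 0 ↔ i ∈ I)
    (hsum : ∑ i, E₁ i * y i = ∑ i, E₂ i * y i)
    (hle : ∀ i ∈ I, E₂ i ≤ E₁ i) :
    ∀ i ∈ I, E₁ i = E₂ i := by
  intro i hi
  have hpt : ∀ i ∈ Finset.univ, E₂ i * y i ≤ E₁ i * y i := by
    intro i _
    by_cases h : i ∈ I
    · exact Nat.mul_le_mul_right _ (hle i h)
    · have : y i = 0 := by by_contra hne; exact h ((hy i).1 hne)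
      simp [this]
  have := (Finset.sum_eq_sum_iff_of_le hpt).1 hsum.symm i (Finset.mem_univ i)
  have hyi : y i ≠ 0 := (hy i).2 hi
  exact Nat.eq_of_mul_eq_mul_right (Nat.pos_of_ne_zero hyi) this.symm

/-- Let `E₁, E₂ ∈ M_{ℓ×k}(ℕ₀)` have rows with pairwise disjoint supports, and let
`M ⊆ (ℕ₀*)^k` be the solution set of `E₁·T = E₂·T`. A nonempty `I ⊆ {1,…,k}` is the
support of an element of `M` iff for each row `i` the restriction of `r¹_i − r²_i` to `I`
is zero or has both a positive and a negative component. -/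
theorem stmt8 {k l : ℕ} (E₁ E₂ : Fin l → Fin k → ℕ)
    (hdisj : ∀ j i, E₁ j i = 0 ∨ E₂ j i = 0)
    (I : Set (Fin k)) (hI : I.Nonempty) :
    (∃ x : Fin k → ℕ∞,
        (∀ j, ∑ i, (E₁ j i : ℕ∞) * x i = ∑ i, (E₂ j i : ℕ∞) * x i) ∧
        {i | x i ≠ 0} = I) ↔
      (∀ j, (∀ i ∈ I, (E₁ j i : ℤ) - (E₂ j i : ℤ) = 0) ∨
        ((∃ i ∈ I, 0 < (E₁ j i : ℤ) - (E₂ j i : ℤ)) ∧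
         (∃ i ∈ I, (E₁ j i : ℤ) - (E₂ j i : ℤ) < 0))) := by
  classical
  constructor
  · rintro ⟨x, hx, hsupp⟩ j
    have hmem : ∀ i, x i ≠ 0 ↔ i ∈ I := by
      intro i; rw [← hsupp]; rfl
    have hj := hx j
    by_cases htop : ∑ i, (E₁ j i : ℕ∞) * x i = ⊤
    · right
      have htop2 : ∑ i, (E₂ j i : ℕ∞) * x i = ⊤ := hj ▸ htop
      obtain ⟨i, -, hi⟩ := WithTop.sum_eq_top.1 htop
      obtain ⟨i', -, hi'⟩ := WithTop.sum_eq_top.1 htop2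
      replace hi := (WithTop.mul_eq_top_iff (α := ℕ)).1 hi
      replace hi' := (WithTop.mul_eq_top_iff (α := ℕ)).1 hi'
      have h1 : E₁ j i ≠ 0 ∧ x i = ⊤ := by
        rcases hi with h | h
        · exact ⟨Nat.cast_ne_zero.1 h.1, h.2⟩
        · exact absurd h.1 (WithTop.natCast_ne_top _)
      have h2 : E₂ j i' ≠ 0 ∧ x i' = ⊤ := by
        rcases hi' with h | h
        · exact ⟨Nat.cast_ne_zero.1 h.1, h.2⟩
        · exact absurd h.1 (WithTop.natCast_ne_top _)
      have hiI : i ∈ I := (hmem i).1 (by simp [h1.2])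
      have hi'I : i' ∈ I := (hmem i').1 (by simp [h2.2])
      have hE2 : E₂ j i = 0 := (hdisj j i).resolve_left h1.1
      have hE1 : E₁ j i' = 0 := (hdisj j i').resolve_right h2.1
      constructor
      · exact ⟨i, hiI, by simp [hE2]; exact_mod_cast Nat.pos_of_ne_zero h1.1⟩
      · exact ⟨i', hi'I, by simp [hE1]; exact_mod_cast Nat.pos_of_ne_zero h2.1⟩
    · -- finite case
      have htop2 : ∑ i, (E₂ j i : ℕ∞) * x i ≠ ⊤ := hj ▸ htop
      set y : Fin k → ℕ := fun i => if x i = ⊤ then 1 else (x i).toNat with hy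
      have hzero : ∀ i, x i = ⊤ → E₁ j i = 0 ∧ E₂ j i = 0 := by
        intro i hxi
        constructor
        · by_contra h
          exact htop (WithTop.sum_eq_top.2 ⟨i, Finset.mem_univ i,
            WithTop.mul_eq_top_iff.2 (Or.inl ⟨Nat.cast_ne_zero.2 h, hxi⟩)⟩)
        · by_contra h
          exact htop2 (WithTop.sum_eq_top.2 ⟨i, Finset.mem_univ i,
            WithTop.mul_eq_top_iff.2 (Or.inl ⟨Nat.cast_ne_zero.2 h, hxi⟩)⟩)
      have hterm : ∀ (E : Fin l → Fin k → ℕ), (∀ i, x i = ⊤ → E j i = 0) →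
          ∀ i, (E j i : ℕ∞) * x i = ((E j i * y i : ℕ) : ℕ∞) := by
        intro E hE i
        by_cases hxi : x i = ⊤
        · simp [hE i hxi, hxi]
        · have : x i = ((x i).toNat : ℕ∞) := by
            lift x i to ℕ using hxi with n hn
            simp
          rw [hy]
          simp only [hxi, if_false]
          rw [Nat.cast_mul, ← this]
      have hs1 : ∑ i, (E₁ j i : ℕ∞) * x i = ∑ i, ((E₁ j i * y i : ℕ) : ℕ∞) :=
        Finset.sum_congr rfl (fun i _ => hterm E₁ (fun i h => (hzero i h).1) i)
      have hs2 : ∑ i, (E₂ j i : ℕ∞) * x i = ∑ i, ((E₂ j i * y i : ℕ) : ℕ∞) :=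
        Finset.sum_congr rfl (fun i _ => hterm E₂ (fun i h => (hzero i h).2) i)
      have hnat : ∑ i, E₁ j i * y i = ∑ i, E₂ j i * y i := by
        have := hj
        rw [hs1, hs2, ← Nat.cast_sum, ← Nat.cast_sum] at this
        exact_mod_cast this
      have hymem : ∀ i, y i ≠ 0 ↔ i ∈ I := by
        intro i
        rw [← hmem i, hy]
        by_cases hxi : x i = ⊤
        · simp [hxi]
        · simp only [hxi, if_false]
          lift x i to ℕ using hxi with n hn
          simp
      by_cases hpos : ∃ i ∈ I, 0 < (E₁ j i : ℤ) - (E₂ j i : ℤ)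
      · by_cases hneg : ∃ i ∈ I, (E₁ j i : ℤ) - (E₂ j i : ℤ) < 0
        · exact Or.inr ⟨hpos, hneg⟩
        · push_neg at hneg
          left
          intro i hi
          have hle : ∀ i ∈ I, E₂ j i ≤ E₁ j i := by
            intro i hi
            have := hneg i hi
            omega
          have := stmt8_aux (E₁ j) (E₂ j) y I hymem hnat hle i hi
          omega
      · push_neg at hpos
        left
        intro i hi
        have hle : ∀ i ∈ I, E₁ j i ≤ E₂ j i := by
          intro i hi
          have := hpos i hi
          omega
        have := stmt8_aux (E₂ j) (E₁ j) y I hymem hnat.symm hle i hi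
        omega
  · intro h
    refine ⟨fun i => if i ∈ I then ⊤ else 0, fun j => ?_, ?_⟩
    · rcases h j with hz | ⟨⟨i, hi, hip⟩, ⟨i', hi', hin⟩⟩
      · have hz' : ∀ i ∈ I, E₁ j i = 0 ∧ E₂ j i = 0 := by
          intro i hi
          have := hz i hi
          rcases hdisj j i with h1 | h1 <;> omega
        rw [Finset.sum_eq_zero, Finset.sum_eq_zero]
        · intro i _
          by_cases hiI : i ∈ I
          · simp [(hz' i hiI).2]
          · simp [hiI]
        · intro i _
          by_cases hiI : i ∈ I
          · simp [(hz' i hiI).1]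
          · simp [hiI]
      · have hE2i : E₂ j i = 0 := by rcases hdisj j i with h1 | h1 <;> omega
        have hE1i' : E₁ j i' = 0 := by rcases hdisj j i' with h1 | h1 <;> omega
        have hE1pos : E₁ j i ≠ 0 := by omega
        have hE2pos : E₂ j i' ≠ 0 := by omega
        have t1 : ∑ i, (E₁ j i : ℕ∞) * (if i ∈ I then (⊤ : ℕ∞) else 0) = ⊤ :=
          WithTop.sum_eq_top.2 ⟨i, Finset.mem_univ i,
            by rw [if_pos hi]; exact WithTop.mul_eq_top_iff.2 (Or.inl ⟨Nat.cast_ne_zero.2 hE1pos, rfl⟩)⟩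
        have t2 : ∑ i, (E₂ j i : ℕ∞) * (if i ∈ I then (⊤ : ℕ∞) else 0) = ⊤ :=
          WithTop.sum_eq_top.2 ⟨i', Finset.mem_univ i',
            by rw [if_pos hi']; exact WithTop.mul_eq_top_iff.2 (Or.inl ⟨Nat.cast_ne_zero.2 hE2pos, rfl⟩)⟩
        rw [t1, t2]
    · ext i
      by_cases hiI : i ∈ I <;> simp [hiI]
end

section
/- Let A be a full affine submonoid of ℕ₀^k generating a subgroup of ℤ^k of rank ℓ. Then there exist 0 ≤ n ≤ ℓ, a matrix D ∈ M_{n×k}(ℕ₀), matrices E₁, E₂ ∈ M_{(k−ℓ)×k}(ℕ₀), and integers m₁,…,m_n ≥ 2 such that: x ∈ ℕ₀^k belongs to A if and only if D·x ≡ 0 componentwise modulo (m₁,…,m_n) and E₁·x = E₂·x. Moreover E₁ and E₂ can be chosen so that for each i, the i-th rows of E₁ and E₂ have disjoint supports, and the set of solutions of E₁·x = E₂·x in ℕ₀^k equals (A^⊥)^⊥ ∩ ℕ₀^k. -/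
/-- A full affine submonoid `A ⊆ ℕ₀^k` whose generated subgroup of `ℤ^k` has rank `ℓ`
is the solution set in `ℕ₀^k` of a system of `n ≤ ℓ` congruences and `k − ℓ` linear
diophantine equations; the equations can be chosen with rows of disjoint supports, and
their solution set in `ℕ₀^k` is `(A^⊥)^⊥ ∩ ℕ₀^k`. -/
theorem stmt10 {k ℓ : ℕ} (A : AddSubmonoid (Fin k → ℕ)) (hA : IsFullAddSubmonoid A)
    (hrank : Module.finrank ℤ
      (Submodule.span ℤ {v : Fin k → ℤ | ∃ a ∈ A, ∀ i, (a i : ℤ) = v i}) = ℓ) :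
    ∃ (n : ℕ) (_ : n ≤ ℓ) (D : Fin n → Fin k → ℕ)
      (E₁ E₂ : Fin (k - ℓ) → Fin k → ℕ) (m : Fin n → ℕ),
      (∀ j, 2 ≤ m j) ∧
      (∀ j i, E₁ j i = 0 ∨ E₂ j i = 0) ∧
      (∀ x : Fin k → ℕ, x ∈ A ↔
        ((∀ j, m j ∣ ∑ i, D j i * x i) ∧
         (∀ j, ∑ i, E₁ j i * x i = ∑ i, E₂ j i * x i))) ∧
      (∀ x : Fin k → ℕ,
        (∀ j, ∑ i, E₁ j i * x i = ∑ i, E₂ j i * x i) ↔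
          (∀ v : Fin k → ℚ, (∀ a ∈ A, ∑ i, v i * (a i : ℚ) = 0) →
            ∑ i, v i * (x i : ℚ) = 0)) := by
  classical
  set S : Set (Fin k → ℤ) := {v : Fin k → ℤ | ∃ a ∈ A, ∀ i, (a i : ℤ) = v i} with hS
  set G : Submodule ℤ (Fin k → ℤ) := Submodule.span ℤ S with hG
  -- Step A : membership in G for nonneg vectors is membership in A
  have memG : ∀ x : Fin k → ℕ, ((fun i => (x i : ℤ)) ∈ G ↔ x ∈ A) := by
    intro x
    constructor
    · intro hx
      let T : AddSubgroup (Fin k → ℤ) :=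
        { carrier := {v | ∃ a ∈ A, ∃ b ∈ A, ∀ i, v i = (a i : ℤ) - (b i : ℤ)}
          zero_mem' := ⟨0, A.zero_mem, 0, A.zero_mem, fun i => by simp⟩
          add_mem' := by
            rintro v w ⟨a, ha, b, hb, hv⟩ ⟨c, hc, d, hd, hw⟩
            refine ⟨a + c, A.add_mem ha hc, b + d, A.add_mem hb hd, fun i => ?_⟩
            have := hv i; have := hw i
            simp only [Pi.add_apply] at *
            push_cast
            omega
          neg_mem' := by
            rintro v ⟨a, ha, b, hb, hv⟩
            refine ⟨b, hb, a, ha, fun i => ?_⟩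
            have := hv i
            simp only [Pi.neg_apply]
            omega }
      have hle : G ≤ T.toIntSubmodule := by
        rw [hG, Submodule.span_le]
        rintro v ⟨a, ha, hav⟩
        exact ⟨a, ha, 0, A.zero_mem, fun i => by simp [← hav i]⟩
      obtain ⟨a, ha, b, hb, hv⟩ := hle hx
      have hba : b + x = a := by
        funext i
        have := hv i
        simp only [Pi.add_apply] at *
        omega
      exact hA b hb x (hba ▸ ha)
    · exact fun hx => Submodule.subset_span ⟨x, hx, fun i => rfl⟩
  -- Step B : Smith normal form
  obtain ⟨n₀, bM, bN, f, a, hsnf⟩ := G.smithNormalForm (Pi.basisFun ℤ (Fin k))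
  have hn₀ : n₀ = ℓ := by
    rw [Module.finrank_eq_card_basis bN, Fintype.card_fin] at hrank
    exact hrank
  subst hn₀
  have hane : ∀ i, a i ≠ 0 := by
    intro i h
    have h2 := hsnf i
    rw [h, zero_smul] at h2
    exact bN.ne_zero i (Subtype.coe_injective (h2.trans rfl))
  -- repr computations
  have hrepr : ∀ (g : Fin n₀ → ℤ) (j : Fin k),
      bM.repr (∑ i, g i • bM (f i)) j = ∑ i, if f i = j then g i else 0 := by
    intro g j
    rw [map_sum, Finset.sum_apply']
    refine Finset.sum_congr rfl fun i _ => ?_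
    rw [map_smul, Finsupp.smul_apply, Module.Basis.repr_self, Finsupp.single_apply]
    split <;> simp
  have hreprf : ∀ (g : Fin n₀ → ℤ) (i₀ : Fin n₀),
      bM.repr (∑ i, g i • bM (f i)) (f i₀) = g i₀ := by
    intro g i₀
    rw [hrepr]
    simp [f.injective.eq_iff]
  have hreprn : ∀ (g : Fin n₀ → ℤ) (j : Fin k), j ∉ Set.range f →
      bM.repr (∑ i, g i • bM (f i)) j = 0 := by
    intro g j hj
    rw [hrepr]
    exact Finset.sum_eq_zero fun i _ => if_neg fun h => hj ⟨i, h⟩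
  -- membership in G via repr
  have memG2 : ∀ x : Fin k → ℤ, x ∈ G ↔
      ((∀ j, j ∉ Set.range f → bM.repr x j = 0) ∧ ∀ i, a i ∣ bM.repr x (f i)) := by
    intro x
    have hmm : x ∈ G ↔ ∃ d : Fin n₀ → ℤ, x = ∑ i, (d i * a i) • bM (f i) := by
      rw [bN.mem_submodule_iff']
      constructor
      · rintro ⟨c, rfl⟩
        exact ⟨c, by simp only [hsnf, smul_smul]⟩
      · rintro ⟨d, rfl⟩
        exact ⟨d, by simp only [hsnf, smul_smul]⟩
    rw [hmm]
    constructor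
    · rintro ⟨d, rfl⟩
      refine ⟨fun j hj => hreprn _ j hj, fun i => ?_⟩
      rw [hreprf]
      exact dvd_mul_left _ _
    · rintro ⟨h0, hdvd⟩
      refine ⟨fun i => bM.repr x (f i) / a i, ?_⟩
      apply bM.repr.injective
      ext j
      by_cases hj : j ∈ Set.range f
      · obtain ⟨i, rfl⟩ := hj
        rw [hreprf]
        exact (Int.ediv_mul_cancel (hdvd i)).symm
      · rw [hreprn _ _ hj, h0 j hj]
  -- row vectors of coordinate functionals
  set R : Fin k → Fin k → ℤ := fun p i => bM.repr (fun j => if i = j then (1:ℤ) else 0) p with hR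
  have hcoord : ∀ (p : Fin k) (z : Fin k → ℤ), bM.repr z p = ∑ i, z i * R p i := by
    intro p z
    have := LinearMap.pi_apply_eq_sum_univ (bM.coord p) z
    simpa [Module.Basis.coord_apply, smul_eq_mul] using this
  -- index sets
  set n : ℕ := Fintype.card {i : Fin n₀ // (a i).natAbs ≠ 1} with hn
  have hnn₀ : n ≤ n₀ := le_trans (Fintype.card_subtype_le _) (le_of_eq (Fintype.card_fin n₀))
  set e : Fin n ≃ {i : Fin n₀ // (a i).natAbs ≠ 1} := (Fintype.equivFin _).symm with he
  set m : Fin n → ℕ := fun j => (a (e j).1).natAbs with hm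
  have hm2 : ∀ j, 2 ≤ m j := by
    intro j
    have h1 := (e j).2
    have h2 : (a (e j).1).natAbs ≠ 0 := fun h => hane _ (Int.natAbs_eq_zero.mp h)
    have h3 : m j = (a (e j).1).natAbs := rfl
    omega
  set D : Fin n → Fin k → ℕ := fun j i => ((R (f (e j).1) i) % (m j : ℤ)).toNat with hD
  -- equations
  have hcard : Fintype.card {j : Fin k // j ∉ Set.range f} = k - n₀ := by
    have h1 : Fintype.card {j : Fin k // j ∈ Set.range f} = n₀ := by
      rw [Fintype.card_congr (Equiv.ofInjective f f.injective).symm, Fintype.card_fin]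
    rw [Fintype.card_subtype_compl, Fintype.card_fin, h1]
  set eJ : Fin (k - n₀) ≃ {j : Fin k // j ∉ Set.range f} :=
    (Fintype.equivFinOfCardEq hcard).symm with heJ
  set w : Fin (k - n₀) → Fin k → ℤ := fun j i => R ((eJ j).1) i with hw
  set E₁ : Fin (k - n₀) → Fin k → ℕ := fun j i => (w j i).toNat with hE₁
  set E₂ : Fin (k - n₀) → Fin k → ℕ := fun j i => (-(w j i)).toNat with hE₂
  -- congruence equivalence
  have hcong : ∀ (x : Fin k → ℕ) (j : Fin n),
      (m j ∣ ∑ i, D j i * x i) ↔ a (e j).1 ∣ bM.repr (fun i => (x i : ℤ)) (f (e j).1) := by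
    intro x j
    have hm0 : (0:ℤ) < (m j : ℤ) := by exact_mod_cast lt_of_lt_of_le two_pos (hm2 j)
    have hcast : ∀ i, (D j i : ℤ) = R (f (e j).1) i % (m j : ℤ) := by
      intro i
      exact Int.toNat_of_nonneg (Int.emod_nonneg _ (ne_of_gt hm0))
    have hsum : (∑ i, (D j i : ℤ) * (x i : ℤ)) % (m j : ℤ)
        = (∑ i, (x i : ℤ) * R (f (e j).1) i) % (m j : ℤ) := by
      rw [Finset.sum_int_mod, Finset.sum_int_mod (n := (m j : ℤ))
        (f := fun i => (x i : ℤ) * R (f (e j).1) i)]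
      congr 1
      refine Finset.sum_congr rfl fun i _ => ?_
      rw [mul_comm ((x i : ℤ)), Int.mul_emod, hcast i, Int.emod_emod_of_dvd _ dvd_rfl,
        ← Int.mul_emod]
    constructor
    · intro h
      rw [hcoord]
      rw [← Int.natAbs_dvd, Int.dvd_iff_emod_eq_zero, ← hsum, ← Int.dvd_iff_emod_eq_zero]
      exact_mod_cast h
    · intro h
      rw [hcoord] at h
      rw [← Int.natCast_dvd_natCast]
      have h2 : ((m j : ℤ)) ∣ ∑ i, (D j i : ℤ) * (x i : ℤ) := by
        rw [Int.dvd_iff_emod_eq_zero, hsum, ← Int.dvd_iff_emod_eq_zero]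
        exact (Int.natAbs_dvd.mpr h : _)
      exact_mod_cast h2
  -- equation rows vs repr vanishing
  have heqv : ∀ (x : Fin k → ℕ) (j : Fin (k - n₀)),
      (∑ i, E₁ j i * x i = ∑ i, E₂ j i * x i) ↔
        bM.repr (fun i => (x i : ℤ)) ((eJ j).1) = 0 := by
    intro x j
    have hsplit : ∀ i, (E₁ j i : ℤ) - (E₂ j i : ℤ) = w j i := by
      intro i
      have h1 : E₁ j i = (w j i).toNat := rfl
      have h2 : E₂ j i = (-(w j i)).toNat := rfl
      omega
    have hEw : (∑ i, (E₁ j i : ℤ) * (x i : ℤ)) - (∑ i, (E₂ j i : ℤ) * (x i : ℤ))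
        = ∑ i, (x i : ℤ) * R ((eJ j).1) i := by
      rw [← Finset.sum_sub_distrib]
      refine Finset.sum_congr rfl fun i _ => ?_
      have : w j i = R ((eJ j).1) i := rfl
      rw [← this, ← hsplit i]
      ring
    rw [hcoord, ← hEw]
    constructor
    · intro h
      have hz : (∑ i, (E₁ j i : ℤ) * (x i : ℤ)) = ∑ i, (E₂ j i : ℤ) * (x i : ℤ) := by
        exact_mod_cast h
      rw [hz, sub_self]
    · intro h
      have hz : (∑ i, (E₁ j i : ℤ) * (x i : ℤ)) = ∑ i, (E₂ j i : ℤ) * (x i : ℤ) :=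
        sub_eq_zero.mp h
      exact_mod_cast hz
  have hquant : ∀ x : Fin k → ℕ,
      (∀ j, ∑ i, E₁ j i * x i = ∑ i, E₂ j i * x i) ↔
      (∀ p, p ∉ Set.range f → bM.repr (fun i => (x i : ℤ)) p = 0) := by
    intro x
    constructor
    · intro h p hp
      have := (heqv x (eJ.symm ⟨p, hp⟩)).mp (h _)
      simpa using this
    · intro h j
      exact (heqv x j).mpr (h _ (eJ j).2)
  -- orthogonality characterization
  have hperp : ∀ x : Fin k → ℕ,
      (∀ p, p ∉ Set.range f → bM.repr (fun i => (x i : ℤ)) p = 0) ↔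
      (∀ v : Fin k → ℚ, (∀ a' ∈ A, ∑ i, v i * (a' i : ℚ) = 0) →
        ∑ i, v i * (x i : ℚ) = 0) := by
    intro x
    constructor
    · intro h0 v hv
      have hφG : ∀ z ∈ G, ∑ i, v i * (z i : ℚ) = 0 := by
        let φ : (Fin k → ℤ) →ₗ[ℤ] ℚ :=
          { toFun := fun z => ∑ i, v i * (z i : ℚ)
            map_add' := by
              intro y z
              rw [← Finset.sum_add_distrib]
              refine Finset.sum_congr rfl fun i _ => ?_
              simp only [Pi.add_apply]
              push_cast
              ring
            map_smul' := by
              intro c z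
              simp only [Pi.smul_apply, smul_eq_mul, RingHom.id_apply, zsmul_eq_mul]
              push_cast
              rw [Finset.mul_sum]
              refine Finset.sum_congr rfl fun i _ => ?_
              ring }
        intro z hz
        have hker : G ≤ LinearMap.ker φ := by
          rw [hG, Submodule.span_le]
          rintro s ⟨a', ha', hs⟩
          simp only [SetLike.mem_coe, LinearMap.mem_ker]
          show ∑ i, v i * (s i : ℚ) = 0
          rw [← hv a' ha']
          refine Finset.sum_congr rfl fun i _ => ?_
          rw [← hs i]
          norm_num
        exact hker hz
      have hbM0 : ∀ i₀, ∑ i, v i * ((bM (f i₀)) i : ℚ) = 0 := by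
        intro i₀
        have h1 : (bN i₀ : Fin k → ℤ) ∈ G := (bN i₀).2
        rw [hsnf i₀] at h1
        have h2 := hφG _ h1
        have h3 : (a i₀ : ℚ) * ∑ i, v i * ((bM (f i₀)) i : ℚ) = 0 := by
          rw [Finset.mul_sum, ← h2]
          refine Finset.sum_congr rfl fun i _ => ?_
          simp only [Pi.smul_apply, smul_eq_mul]
          push_cast
          ring
        rcases mul_eq_zero.mp h3 with h | h
        · exact absurd (by exact_mod_cast h) (hane i₀)
        · exact h
      have hx : (fun i => (x i : ℤ))
          = ∑ i, (bM.repr (fun i => (x i : ℤ)) (f i)) • bM (f i) := by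
        apply bM.repr.injective
        ext j
        by_cases hj : j ∈ Set.range f
        · obtain ⟨i, rfl⟩ := hj
          rw [hreprf]
        · rw [hreprn _ _ hj, h0 j hj]
      have hxi : ∀ i, (x i : ℚ)
          = ∑ i', ((bM.repr (fun i => (x i : ℤ)) (f i') : ℤ) : ℚ) * ((bM (f i') i : ℤ) : ℚ) := by
        intro i
        have h4 := congrFun hx i
        rw [Finset.sum_apply] at h4
        simp only [Pi.smul_apply, smul_eq_mul] at h4
        calc (x i : ℚ) = (((x i : ℤ)) : ℚ) := by norm_num
          _ = _ := by rw [h4]; push_cast; rfl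
      calc ∑ i, v i * (x i : ℚ)
          = ∑ i, v i * ∑ i', ((bM.repr (fun i => (x i : ℤ)) (f i') : ℤ) : ℚ)
            * ((bM (f i') i : ℤ) : ℚ) := by
            exact Finset.sum_congr rfl fun i _ => by rw [hxi i]
        _ = ∑ i', ((bM.repr (fun i => (x i : ℤ)) (f i') : ℤ) : ℚ)
            * ∑ i, v i * ((bM (f i') i : ℤ) : ℚ) := by
            simp only [Finset.mul_sum]
            rw [Finset.sum_comm]
            refine Finset.sum_congr rfl fun i' _ => Finset.sum_congr rfl fun i _ => by ring
        _ = 0 := by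
            refine Finset.sum_eq_zero fun i' _ => ?_
            rw [hbM0 i', mul_zero]
    · intro hv p hp
      have hvA : ∀ a' ∈ A, ∑ i, ((R p i : ℤ) : ℚ) * (a' i : ℚ) = 0 := by
        intro a' ha'
        have hmem := (memG a').mpr ha'
        have h0 := ((memG2 _).mp hmem).1 p hp
        rw [hcoord] at h0
        have h1 : ((∑ i, (a' i : ℤ) * R p i : ℤ) : ℚ) = 0 := by rw [h0]; norm_num
        push_cast at h1
        rw [← h1]
        exact Finset.sum_congr rfl fun i _ => by ring
      have h2 := hv (fun i => ((R p i : ℤ) : ℚ)) hvA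
      rw [hcoord]
      have h3 : ((∑ i, (x i : ℤ) * R p i : ℤ) : ℚ) = 0 := by
        push_cast
        rw [← h2]
        exact Finset.sum_congr rfl fun i _ => by push_cast; ring
      exact_mod_cast h3
  -- assembly
  refine ⟨n, hnn₀, D, E₁, E₂, m, hm2, ?_, ?_, ?_⟩
  · intro j i
    have h1 : E₁ j i = (w j i).toNat := rfl
    have h2 : E₂ j i = (-(w j i)).toNat := rfl
    omega
  · intro x
    rw [← memG x, memG2]
    constructor
    · rintro ⟨h0, hdvd⟩
      exact ⟨fun j => (hcong x j).mpr (hdvd _), (hquant x).mpr h0⟩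
    · rintro ⟨hc, he'⟩
      refine ⟨(hquant x).mp he', fun i => ?_⟩
      by_cases hi : (a i).natAbs = 1
      · exact (Int.isUnit_iff_natAbs_eq.mpr hi).dvd
      · have := (hcong x (e.symm ⟨i, hi⟩)).mp (hc _)
        simpa using this
  · intro x
    exact (hquant x).trans (hperp x)
end

section
/- The pullback R = {(r₁,r₂) ∈ R₁ × R₂ : j₁(r₁) = j₂(r₂)} of two ring homomorphisms j₁ : R₁ → S, j₂ : R₂ → S is a local subring of R₁ × R₂, i.e., an element (r₁,r₂) ∈ R is invertible in R if and only if it is invertible in R₁ × R₂. Consequently, the pullback of two semilocal rings (over any common codomain) is semilocal. -/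
/-- A ring is semilocal if it is semisimple artinian modulo its Jacobson radical, i.e.
there is a surjective ring homomorphism onto a semisimple ring whose kernel is the
Jacobson radical. -/
def IsSemilocalRing (R : Type u) [Ring R] : Prop :=
  ∃ (S : Type u) (_ : Ring S), IsSemisimpleRing S ∧
    ∃ f : R →+* S, Function.Surjective f ∧ RingHom.ker f = Ideal.jacobson (⊥ : Ideal R)

/-- The pullback of two ring homomorphisms, as a subring of the product. -/
def pullbackSubring {R₁ R₂ S : Type u} [Ring R₁] [Ring R₂] [Ring S]
    (j₁ : R₁ →+* S) (j₂ : R₂ →+* S) : Subring (R₁ × R₂) :=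
  RingHom.eqLocus (j₁.comp (RingHom.fst R₁ R₂)) (j₂.comp (RingHom.snd R₁ R₂))

namespace SLAux

section Prelim

variable {R : Type*} [Ring R]

theorem isUnit_of_left_right {x a b : R} (ha : a * x = 1) (hb : x * b = 1) : IsUnit x := by
  have hab : a = b := by
    calc a = a * (x * b) := by rw [hb, mul_one]
    _ = a * x * b := by rw [mul_assoc]
    _ = b := by rw [ha, one_mul]
  exact ⟨⟨x, b, hb, hab ▸ ha⟩, rfl⟩

theorem isUnit_one_add_of_mem_jacobson {j : R} (hj : j ∈ Ideal.jacobson (⊥ : Ideal R)) :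
    IsUnit (1 + j) := by
  have key : ∀ k ∈ Ideal.jacobson (⊥ : Ideal R), ∃ z : R, z * (1 + k) = 1 := by
    intro k hk
    obtain ⟨z, hz⟩ := Ideal.mem_jacobson_iff.mp hk 1
    rw [Ideal.mem_bot, mul_one, sub_eq_zero] at hz
    refine ⟨z, ?_⟩
    rw [mul_add, mul_one, add_comm]
    exact hz
  obtain ⟨z, hz⟩ := key j hj
  have hzJ : z - 1 ∈ Ideal.jacobson (⊥ : Ideal R) := by
    have h1 : z + z * j = 1 := by rw [← hz, mul_add, mul_one]
    have h2 : z - 1 = -(z * j) := by rw [← h1]; abel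
    rw [h2]
    exact neg_mem (Ideal.mul_mem_left _ z hj)
  obtain ⟨w, hw⟩ := key (z - 1) hzJ
  have hwz : w * z = 1 := by
    have : (1 : R) + (z - 1) = z := by abel
    rwa [this] at hw
  have hweq : w = 1 + j := by
    calc w = w * (z * (1 + j)) := by rw [hz, mul_one]
    _ = w * z * (1 + j) := by rw [mul_assoc]
    _ = 1 + j := by rw [hwz, one_mul]
  have h2 : (1 + j) * z = 1 := by rw [← hweq]; exact hwz
  exact isUnit_of_left_right hz h2

theorem isUnit_of_map_isUnit {R S : Type*} [Ring R] [Ring S] (f : R →+* S)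
    (hsurj : Function.Surjective f) (hker : RingHom.ker f = Ideal.jacobson (⊥ : Ideal R))
    {x : R} (hx : IsUnit (f x)) : IsUnit x := by
  obtain ⟨y, hy⟩ := hsurj (↑hx.unit⁻¹)
  have h1 : y * x - 1 ∈ Ideal.jacobson (⊥ : Ideal R) := by
    rw [← hker, RingHom.mem_ker, map_sub, map_mul, map_one, hy, hx.val_inv_mul, sub_self]
  have h2 : x * y - 1 ∈ Ideal.jacobson (⊥ : Ideal R) := by
    rw [← hker, RingHom.mem_ker, map_sub, map_mul, map_one, hy, hx.mul_val_inv, sub_self]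
  have hu1 : IsUnit (y * x) := by
    have := isUnit_one_add_of_mem_jacobson h1
    have heq : 1 + (y * x - 1) = y * x := by abel
    rwa [heq] at this
  have hu2 : IsUnit (x * y) := by
    have := isUnit_one_add_of_mem_jacobson h2
    have heq : 1 + (x * y - 1) = x * y := by abel
    rwa [heq] at this
  have hl : (↑hu1.unit⁻¹ * y) * x = 1 := by
    rw [mul_assoc]
    exact hu1.val_inv_mul
  have hr : x * (y * ↑hu2.unit⁻¹) = 1 := by
    rw [← mul_assoc]
    exact hu2.mul_val_inv
  exact isUnit_of_left_right hl hr

end Prelim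

section Semisimple

variable {B : Type*} [Ring B] [IsSemisimpleRing B]

theorem exists_ne_zero_mul_eq_zero {x : B} (hx : ¬ IsUnit x) :
    ∃ v : B, v ≠ 0 ∧ x * v = 0 := by
  by_contra hcon
  push_neg at hcon
  have hreg : ∀ v : B, x * v = 0 → v = 0 := by
    intro v hv
    by_contra h0
    exact hcon v h0 hv
  obtain ⟨e, he, hspan⟩ := IsSemisimpleRing.ideal_eq_span_idempotent (Ideal.span {x})
  have hx_mem : x ∈ Ideal.span ({e} : Set B) := by
    rw [← hspan]; exact Ideal.subset_span rfl
  obtain ⟨b, hb⟩ := Submodule.mem_span_singleton.mp hx_mem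
  have hxe : x * e = x := by
    rw [← hb, smul_eq_mul, mul_assoc, he.eq]
  have he1 : e = 1 := by
    have h0 : x * (1 - e) = 0 := by rw [mul_sub, mul_one, hxe, sub_self]
    have := hreg _ h0
    rw [sub_eq_zero] at this
    exact this.symm
  have h1mem : (1 : B) ∈ Ideal.span ({x} : Set B) := by
    rw [hspan, he1]; exact Ideal.subset_span rfl
  obtain ⟨z, hz⟩ := Submodule.mem_span_singleton.mp h1mem
  rw [smul_eq_mul] at hz
  have hsurjf : Function.Surjective (LinearMap.toSpanSingleton B B x) := by
    intro v
    exact ⟨v * z, by rw [LinearMap.toSpanSingleton_apply, smul_eq_mul, mul_assoc, hz, mul_one]⟩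
  have hinj := IsNoetherian.injective_of_surjective_endomorphism _ hsurjf
  have h0 : LinearMap.toSpanSingleton B B x (1 - x * z) = 0 := by
    rw [LinearMap.toSpanSingleton_apply, smul_eq_mul, sub_mul, one_mul, mul_assoc, hz,
      mul_one, sub_self]
  have h00 : 1 - x * z = 0 := hinj (by rw [h0, map_zero])
  have hxz : x * z = 1 := (sub_eq_zero.mp h00).symm
  exact hx (isUnit_of_left_right hz hxz)

end Semisimple

section Core

variable {P B : Type*} [Ring P] [Ring B] [IsSemisimpleRing B]
variable (φ : P →+* B)

/-- The left annihilator (in `B`) of the right annihilator (in `B`) of the image of an ideal. -/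
def annAnn (I : Ideal P) : Ideal B where
  carrier := {u : B | ∀ v : B, (∀ a ∈ I, φ a * v = 0) → u * v = 0}
  add_mem' := by
    intro a b ha hb v hv
    rw [add_mul, ha v hv, hb v hv, add_zero]
  zero_mem' := fun v _ => zero_mul v
  smul_mem' := by
    intro c u hu v hv
    rw [smul_eq_mul, mul_assoc, hu v hv, mul_zero]

theorem mem_annAnn_iff {I : Ideal P} {u : B} :
    u ∈ annAnn φ I ↔ ∀ v : B, (∀ a ∈ I, φ a * v = 0) → u * v = 0 := Iff.rfl

theorem exists_compl_ideal (hφ : ∀ p : P, IsUnit (φ p) → IsUnit p) (K : Ideal P) :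
    ∃ C : Ideal P, K ⊓ C ≤ Ideal.jacobson (⊥ : Ideal P) ∧ K ⊔ C = ⊤ := by
  by_contra hno
  push_neg at hno
  have hwf : WellFounded ((· < ·) : Ideal B → Ideal B → Prop) := wellFounded_lt
  set T : Set (Ideal B) := {W | ∃ X : Ideal P, K ⊔ X = ⊤ ∧ W = annAnn φ (K ⊓ X)} with hTdef
  have hTne : T.Nonempty := ⟨annAnn φ (K ⊓ ⊤), ⊤, by rw [sup_top_eq], rfl⟩
  obtain ⟨W₀, hW₀mem, hmin⟩ := hwf.has_min T hTne
  obtain ⟨X, hXsup, hWeq⟩ := hW₀mem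
  have hKX : ¬ (K ⊓ X ≤ Ideal.jacobson (⊥ : Ideal P)) := fun hle => hno X hle hXsup
  obtain ⟨x, hxKX, hxJ⟩ := SetLike.not_le_iff_exists.mp hKX
  rw [Ideal.mem_jacobson_iff] at hxJ
  push_neg at hxJ
  obtain ⟨y, hy⟩ := hxJ
  set w : P := y * x with hw
  have hwKX : w ∈ K ⊓ X := Ideal.mul_mem_left _ y hxKX
  have hnu : ¬ IsUnit (φ (1 + w)) := by
    intro hu
    obtain ⟨z, hz⟩ := (hφ _ hu).exists_left_inv
    refine hy z ?_
    rw [Ideal.mem_bot]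
    have hzw : z * y * x = z * w := by rw [hw, mul_assoc]
    rw [hzw, sub_eq_zero]
    calc z * w + z = z * (1 + w) := by rw [mul_add, mul_one, add_comm]
    _ = 1 := hz
  obtain ⟨v, hv0, hv⟩ := exists_ne_zero_mul_eq_zero hnu
  have hφwv : φ w * v = -v := by
    have h' : v + φ w * v = 0 := by
      have : φ (1 + w) * v = 0 := hv
      rwa [map_add, map_one, add_mul, one_mul] at this
    exact eq_neg_of_add_eq_zero_right h'
  set L : Ideal P :=
    { carrier := {a : P | φ a * v = 0}
      add_mem' := by
        intro a b ha hb
        show φ (a + b) * v = 0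
        rw [map_add, add_mul, ha, hb, add_zero]
      zero_mem' := by
        show φ (0 : P) * v = 0
        rw [map_zero, zero_mul]
      smul_mem' := by
        intro c a ha
        show φ (c * a) * v = 0
        rw [map_mul, mul_assoc, ha, mul_zero] } with hLdef
  have h1wL : (1 + w) ∈ L := hv
  have hsupL : (K ⊓ X) ⊔ L = ⊤ := by
    rw [Ideal.eq_top_iff_one]
    have hone : (1 : P) = -w + (1 + w) := by abel
    rw [hone]
    exact Submodule.add_mem_sup (neg_mem hwKX) h1wL
  have hmod : (K ⊓ X) ⊔ (L ⊓ X) = X := by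
    have h := sup_inf_assoc_of_le (x := K ⊓ X) L (inf_le_right : K ⊓ X ≤ X)
    rw [hsupL, top_inf_eq] at h
    exact h.symm
  set X' : Ideal P := L ⊓ X with hX'
  have hsup' : K ⊔ X' = ⊤ := by
    have heq : K ⊔ X = K ⊔ X' := by
      conv_lhs => rw [← hmod]
      rw [← sup_assoc, sup_inf_self]
    rw [← heq, hXsup]
  have hle : annAnn φ (K ⊓ X') ≤ annAnn φ (K ⊓ X) := by
    intro u hu
    rw [mem_annAnn_iff] at hu ⊢
    intro v' hv'
    refine hu v' ?_
    intro a ha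
    exact hv' a (inf_le_inf_left K (inf_le_right : X' ≤ X) ha)
  have hmem1 : φ w ∈ annAnn φ (K ⊓ X) := by
    rw [mem_annAnn_iff]
    intro v' hv'
    exact hv' w hwKX
  have hmem2 : φ w ∉ annAnn φ (K ⊓ X') := by
    rw [mem_annAnn_iff]
    intro hcon
    have hkills : ∀ a ∈ K ⊓ X', φ a * v = 0 := by
      intro a ha
      have haX' : a ∈ X' := (Submodule.mem_inf.mp ha).2
      exact (Submodule.mem_inf.mp haX').1
    have := hcon v hkills
    rw [hφwv, neg_eq_zero] at this
    exact hv0 this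
  have hlt : annAnn φ (K ⊓ X') < annAnn φ (K ⊓ X) :=
    lt_of_le_of_ne hle (fun h => hmem2 (h ▸ hmem1))
  rw [← hWeq] at hlt
  exact hmin _ ⟨X', hsup', rfl⟩ hlt

end Core

section Quotient

variable {P : Type v} [Ring P]

theorem isSemilocalRing_of_unitReflecting {B : Type*} [Ring B] [IsSemisimpleRing B]
    (φ : P →+* B) (hφ : ∀ p : P, IsUnit (φ p) → IsUnit p) :
    IsSemilocalRing P := by
  classical
  set c : RingCon P := (TwoSidedIdeal.jacobson (⊥ : TwoSidedIdeal P)).ringCon with hc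
  set π : P →+* c.Quotient := RingCon.mk' c with hπ
  have hsurjπ : Function.Surjective π := fun q => Quotient.inductionOn' q (fun x => ⟨x, rfl⟩)
  have hkerπ : ∀ x : P, π x = 0 ↔ x ∈ Ideal.jacobson (⊥ : Ideal P) := by
    intro x
    have step1 : π x = 0 ↔ c x 0 := by
      have h0 : (0 : c.Quotient) = π (0 : P) := (map_zero π).symm
      rw [h0]
      exact RingCon.eq c
    rw [step1, TwoSidedIdeal.rel_iff, sub_zero, TwoSidedIdeal.mem_jacobson_iff,
      Ideal.mem_jacobson_iff]
    constructor
    · intro h y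
      obtain ⟨z, hz⟩ := h y
      exact ⟨z, by rwa [Ideal.mem_bot, ← TwoSidedIdeal.mem_bot (R := P)]⟩
    · intro h y
      obtain ⟨z, hz⟩ := h y
      exact ⟨z, by rwa [TwoSidedIdeal.mem_bot, ← Ideal.mem_bot (R := P)]⟩
  have hssQ : IsSemisimpleRing c.Quotient := by
    refine (isSemisimpleModule_iff _ _).mpr ⟨?_⟩
    intro Kbar
    set K : Ideal P :=
      { carrier := {p : P | π p ∈ Kbar}
        add_mem' := by
          intro a b ha hb
          show π (a + b) ∈ Kbar
          rw [map_add]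
          exact Kbar.add_mem ha hb
        zero_mem' := by
          show π (0 : P) ∈ Kbar
          rw [map_zero]
          exact Kbar.zero_mem
        smul_mem' := by
          intro r p hp
          show π (r * p) ∈ Kbar
          rw [map_mul]
          exact Kbar.smul_mem (π r) hp } with hKdef
    obtain ⟨C, hC1, hC2⟩ := exists_compl_ideal φ hφ K
    set Cbar : Submodule c.Quotient c.Quotient :=
      { carrier := π '' (C : Set P)
        add_mem' := by
          rintro _ _ ⟨a, ha, rfl⟩ ⟨b, hb, rfl⟩
          exact ⟨a + b, C.add_mem ha hb, map_add π a b⟩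
        zero_mem' := ⟨0, C.zero_mem, map_zero π⟩
        smul_mem' := by
          intro q x hx
          obtain ⟨a, ha, rfl⟩ := hx
          obtain ⟨r, rfl⟩ := hsurjπ q
          exact ⟨r * a, C.smul_mem r ha, map_mul π r a⟩ } with hCbardef
    refine ⟨Cbar, ?_⟩
    rw [isCompl_iff]
    constructor
    · rw [disjoint_iff]
      rw [eq_bot_iff]
      rintro q ⟨hqK, hqC⟩
      obtain ⟨a, haC, rfl⟩ := hqC
      have haK : a ∈ K := hqK
      have haJ : a ∈ Ideal.jacobson (⊥ : Ideal P) := hC1 ⟨haK, haC⟩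
      rw [Submodule.mem_bot]
      exact (hkerπ a).mpr haJ
    · rw [codisjoint_iff, eq_top_iff]
      rintro q -
      obtain ⟨p, rfl⟩ := hsurjπ q
      have hp : p ∈ K ⊔ C := by rw [hC2]; exact Submodule.mem_top
      obtain ⟨k, hk, cc, hcc, rfl⟩ := Submodule.mem_sup.mp hp
      rw [map_add]
      exact Submodule.add_mem_sup (hk : π k ∈ Kbar) ⟨cc, hcc, rfl⟩
  refine ⟨c.Quotient, inferInstance, hssQ, π, hsurjπ, ?_⟩
  ext x
  rw [RingHom.mem_ker]
  exact hkerπ x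

end Quotient

end SLAux

/-- The pullback `R` of `j₁ : R₁ → S`, `j₂ : R₂ → S` is a local subring of `R₁ × R₂`:
an element of `R` is invertible in `R` iff it is invertible in `R₁ × R₂`. Consequently,
the pullback of two semilocal rings is semilocal. -/
theorem stmt11 {R₁ R₂ S : Type u} [Ring R₁] [Ring R₂] [Ring S]
    (j₁ : R₁ →+* S) (j₂ : R₂ →+* S) :
    (∀ p : pullbackSubring j₁ j₂, IsUnit p ↔ IsUnit (p : R₁ × R₂)) ∧
    (IsSemilocalRing R₁ → IsSemilocalRing R₂ →
      IsSemilocalRing (pullbackSubring j₁ j₂)) := by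
  have hpart1 : ∀ p : pullbackSubring j₁ j₂, IsUnit p ↔ IsUnit (p : R₁ × R₂) := by
    intro p
    constructor
    · intro h
      exact h.map (pullbackSubring j₁ j₂).subtype
    · intro h
      obtain ⟨u, hu⟩ := h
      have hpmem : j₁ (p : R₁ × R₂).1 = j₂ (p : R₁ × R₂).2 := p.2
      set i : R₁ × R₂ := ↑u⁻¹ with hi
      have hui : (p : R₁ × R₂) * i = 1 := by rw [hi, ← hu]; exact u.mul_inv
      have hiu : i * (p : R₁ × R₂) = 1 := by rw [hi, ← hu]; exact u.inv_mul
      have h11 : (p : R₁ × R₂).1 * i.1 = 1 := congrArg Prod.fst hui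
      have h12 : i.1 * (p : R₁ × R₂).1 = 1 := congrArg Prod.fst hiu
      have h21 : (p : R₁ × R₂).2 * i.2 = 1 := congrArg Prod.snd hui
      have h22 : i.2 * (p : R₁ × R₂).2 = 1 := congrArg Prod.snd hiu
      have hji : j₁ i.1 = j₂ i.2 := by
        have e1 : j₁ i.1 * j₂ (p : R₁ × R₂).2 = 1 := by
          rw [← hpmem, ← map_mul, h12, map_one]
        have e2 : j₂ (p : R₁ × R₂).2 * j₂ i.2 = 1 := by
          rw [← map_mul, h21, map_one]
        calc j₁ i.1 = j₁ i.1 * (j₂ (p : R₁ × R₂).2 * j₂ i.2) := by rw [e2, mul_one]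
        _ = j₁ i.1 * j₂ (p : R₁ × R₂).2 * j₂ i.2 := by rw [mul_assoc]
        _ = j₂ i.2 := by rw [e1, one_mul]
      have himem : i ∈ pullbackSubring j₁ j₂ := hji
      refine ⟨⟨p, ⟨i, himem⟩, ?_, ?_⟩, rfl⟩
      · exact Subtype.ext hui
      · exact Subtype.ext hiu
  refine ⟨hpart1, ?_⟩
  intro h1 h2
  obtain ⟨S₁, i₁, hss₁, f₁, hsurj₁, hker₁⟩ := h1
  obtain ⟨S₂, i₂, hss₂, f₂, hsurj₂, hker₂⟩ := h2
  haveI : IsSemisimpleRing S₁ := hss₁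
  haveI : IsSemisimpleRing S₂ := hss₂
  set φ : ↥(pullbackSubring j₁ j₂) →+* S₁ × S₂ :=
    (f₁.prodMap f₂).comp (pullbackSubring j₁ j₂).subtype with hφdef
  apply SLAux.isSemilocalRing_of_unitReflecting φ
  intro p hup
  have hφp : φ p = (f₁ (p : R₁ × R₂).1, f₂ (p : R₁ × R₂).2) := rfl
  obtain ⟨u, hu⟩ := hup
  have hA : φ p * ↑u⁻¹ = 1 := by rw [← hu]; exact u.mul_inv
  have hB : (↑u⁻¹ : S₁ × S₂) * φ p = 1 := by rw [← hu]; exact u.inv_mul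
  rw [hφp] at hA hB
  have hA1 : f₁ (p : R₁ × R₂).1 * (↑u⁻¹ : S₁ × S₂).1 = 1 := congrArg Prod.fst hA
  have hB1 : (↑u⁻¹ : S₁ × S₂).1 * f₁ (p : R₁ × R₂).1 = 1 := congrArg Prod.fst hB
  have hA2 : f₂ (p : R₁ × R₂).2 * (↑u⁻¹ : S₁ × S₂).2 = 1 := congrArg Prod.snd hA
  have hB2 : (↑u⁻¹ : S₁ × S₂).2 * f₂ (p : R₁ × R₂).2 = 1 := congrArg Prod.snd hB
  have hu1 : IsUnit (f₁ (p : R₁ × R₂).1) := SLAux.isUnit_of_left_right hB1 hA1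
  have hu2 : IsUnit (f₂ (p : R₁ × R₂).2) := SLAux.isUnit_of_left_right hB2 hA2
  have hx1 : IsUnit (p : R₁ × R₂).1 := SLAux.isUnit_of_map_isUnit f₁ hsurj₁ hker₁ hu1
  have hx2 : IsUnit (p : R₁ × R₂).2 := SLAux.isUnit_of_map_isUnit f₂ hsurj₂ hker₂ hu2
  have hxp : IsUnit (p : R₁ × R₂) := by
    obtain ⟨u₁, hu₁⟩ := hx1
    obtain ⟨u₂, hu₂⟩ := hx2
    refine ⟨⟨((u₁ : R₁), (u₂ : R₂)), ((↑u₁⁻¹ : R₁), (↑u₂⁻¹ : R₂)), ?_, ?_⟩, ?_⟩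
    · exact Prod.ext u₁.mul_inv u₂.mul_inv
    · exact Prod.ext u₁.inv_mul u₂.inv_mul
    · exact Prod.ext hu₁ hu₂
  exact (hpart1 p).mpr hxp
end

section
/- Let T be a subring of a ring R and suppose there is a two-sided ideal I of R with I ⊆ T such that R/I is finitely generated as a left T/I-module. Then R is finitely generated as a left T-module, and if R and T/I are left noetherian, then T is left noetherian. -/
/-- Key combinatorial lemma: over a ring `A` with an ideal `IA` such that chains of
ideals containing `IA` stabilize, any chain of submodules squeezed between `K` and
`span A S ⊔ K` (with `S` finite and `IA` mapping everything into `K`) stabilizes. -/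
lemma stmt12_aux {A : Type v} [Ring A] {V : Type w} [AddCommGroup V] [Module A V]
    (IA : Ideal A)
    (H : ∀ c : ℕ →o Ideal A, (∀ n, IA ≤ c n) → ∃ N, ∀ m, N ≤ m → c m = c N)
    (S : Finset V) (K : Submodule A V)
    (hkill : ∀ x ∈ IA, ∀ w ∈ (Submodule.span A (S : Set V) ⊔ K), x • w ∈ K)
    (P : ℕ →o Submodule A V) (hK : ∀ n, K ≤ P n)
    (hle : ∀ n, P n ≤ Submodule.span A (S : Set V) ⊔ K) :
    ∃ N, ∀ m, N ≤ m → P m = P N := by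
  classical
  induction S using Finset.induction_on generalizing P with
  | empty =>
      refine ⟨0, fun m _ => ?_⟩
      have h0 : ∀ k, P k = K := by
        intro k
        refine le_antisymm ?_ (hK k)
        have := hle k
        simpa using this
      rw [h0, h0]
  | @insert v s hvs ih =>
      set W : Submodule A V := Submodule.span A (s : Set V) ⊔ K with hW
      have hWle : W ≤ Submodule.span A (↑(insert v s) : Set V) ⊔ K := by
        refine sup_le_sup_right (Submodule.span_mono ?_) K
        rw [Finset.coe_insert]
        exact Set.subset_insert _ _
      have hkill' : ∀ x ∈ IA, ∀ w ∈ W, x • w ∈ K := fun x hx w hw =>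
        hkill x hx w (hWle hw)
      set P' : ℕ →o Submodule A V :=
        ⟨fun k => P k ⊓ W, fun a b hab => inf_le_inf_right W (P.mono hab)⟩ with hP'
      obtain ⟨N1, hN1⟩ := ih hkill' P' (fun k => le_inf (hK k) le_sup_right)
        (fun k => inf_le_right)
      set q : ℕ →o Ideal A :=
        ⟨fun k => (P k ⊔ W).comap (LinearMap.toSpanSingleton A V v),
         fun a b hab => Submodule.comap_mono (sup_le_sup_right (P.mono hab) W)⟩ with hq
      have hqIA : ∀ k, IA ≤ q k := by
        intro k y hy
        have hv : v ∈ Submodule.span A (↑(insert v s) : Set V) ⊔ K :=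
          Submodule.mem_sup_left (Submodule.subset_span (by simp))
        have h1 : y • v ∈ K := hkill y hy v hv
        have h2 : y • v ∈ P k ⊔ W := Submodule.mem_sup_right (Submodule.mem_sup_right h1)
        show y ∈ (P k ⊔ W).comap (LinearMap.toSpanSingleton A V v)
        rw [Submodule.mem_comap, LinearMap.toSpanSingleton_apply]
        exact h2
      obtain ⟨N2, hN2⟩ := H q hqIA
      obtain ⟨N, hN1le, hN2le⟩ : ∃ N, N1 ≤ N ∧ N2 ≤ N :=
        ⟨max N1 N2, le_max_left _ _, le_max_right _ _⟩
      refine ⟨N, fun m hm => ?_⟩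
      refine le_antisymm ?_ (P.mono hm)
      intro u hu
      have hu2 : u ∈ Submodule.span A {v} ⊔ W := by
        have h := hle m hu
        rw [Finset.coe_insert, Submodule.span_insert, sup_assoc] at h
        exact h
      obtain ⟨a, ha, w, hw, hsum⟩ := Submodule.mem_sup.mp hu2
      obtain ⟨t, hta⟩ := Submodule.mem_span_singleton.mp ha
      have htm : t ∈ q m := by
        have haeq : a = u - w := by rw [← hsum]; abel
        have h3 : a ∈ P m ⊔ W := by
          rw [haeq]
          exact sub_mem (Submodule.mem_sup_left hu) (Submodule.mem_sup_right hw)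
        show t ∈ (P m ⊔ W).comap (LinearMap.toSpanSingleton A V v)
        rw [Submodule.mem_comap, LinearMap.toSpanSingleton_apply, hta]
        exact h3
      have hqeq : q m = q N := by
        rw [hN2 m (le_trans hN2le hm), hN2 N hN2le]
      have htN : t • v ∈ P N ⊔ W := by
        have h4 : t ∈ q N := hqeq ▸ htm
        have h5 : t ∈ (P N ⊔ W).comap (LinearMap.toSpanSingleton A V v) := h4
        rw [Submodule.mem_comap, LinearMap.toSpanSingleton_apply] at h5
        exact h5
      obtain ⟨p, hp, w', hw', hsum'⟩ := Submodule.mem_sup.mp htN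
      have hup : u - p ∈ P m ⊓ W := by
        constructor
        · exact sub_mem hu (P.mono hm hp)
        · have h6 : u - p = w' + w := by rw [← hsum, ← hta, ← hsum']; abel
          rw [h6]
          exact add_mem hw' hw
      have hPP : P m ⊓ W = P N ⊓ W := by
        have e1 : P' m = P' N1 := hN1 m (le_trans hN1le hm)
        have e2 : P' N = P' N1 := hN1 N hN1le
        show P' m = P' N
        rw [e1, e2]
      have h7 : u - p ∈ P N := (hPP ▸ hup).1
      have h8 : u = p + (u - p) := by abel
      rw [h8]
      exact add_mem hp h7

/-- Let `T` be a subring of `R` and `I` a two-sided ideal of `R` with `I ⊆ T` such that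
`R/I` is finitely generated as a left `T/I`-module. Then `R` is finitely generated as a
left `T`-module, and if `R` and `T/I` are left noetherian then so is `T`. -/
theorem stmt12 {R : Type u} [Ring R] (T : Subring R) (I : Ideal R)
    (hright : ∀ x ∈ I, ∀ r : R, x * r ∈ I)
    (hIT : ∀ x ∈ I, x ∈ T)
    -- `R/I` is finitely generated as a left `T/I`-module:
    (hfg : ∃ (n : ℕ) (x : Fin n → R), ∀ r : R, ∃ t : Fin n → R,
      (∀ i, t i ∈ T) ∧ r - ∑ i, t i * x i ∈ I) :
    -- (i) `R` is finitely generated as a left `T`-module: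
    (∃ (n : ℕ) (x : Fin n → R), ∀ r : R, ∃ t : Fin n → R,
      (∀ i, t i ∈ T) ∧ r = ∑ i, t i * x i) ∧
    -- (ii) if `R` is left noetherian and `T/I` is left noetherian
    -- (ACC on left ideals of `T` containing `I`), then `T` is left noetherian:
    (IsNoetherianRing R →
      (∀ c : ℕ →o Ideal T, (∀ n, I.comap T.subtype ≤ c n) →
        ∃ N, ∀ m, N ≤ m → c m = c N) →
      IsNoetherianRing T) := by
  classical
  obtain ⟨n, x, hx⟩ := hfg
  constructor
  · -- part (i)
    refine ⟨n + 1, Fin.snoc x 1, fun r => ?_⟩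
    obtain ⟨t, ht, hz⟩ := hx r
    refine ⟨Fin.snoc t (r - ∑ i, t i * x i), fun i => ?_, ?_⟩
    · refine Fin.lastCases ?_ (fun j => ?_) i
      · simpa using hIT _ hz
      · simpa using ht j
    · rw [Fin.sum_univ_castSucc]
      simp only [Fin.snoc_castSucc, Fin.snoc_last, mul_one]
      abel
  · -- part (ii)
    intro hR hchain
    rw [isNoetherianRing_iff, ← monotone_stabilizes_iff_noetherian]
    intro c
    have hNR : IsNoetherian R R := isNoetherianRing_iff.mp hR
    -- the inclusion T →ₗ[T] R
    let f : T →ₗ[T] R :=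
      { toFun := Subtype.val, map_add' := fun _ _ => rfl,
        map_smul' := fun _ _ => rfl }
    have hfinj : Function.Injective f := Subtype.val_injective
    let IT : Ideal T := I.comap T.subtype
    let d : ℕ →o Ideal T :=
      ⟨fun k => c k ⊓ IT, fun a b hab => inf_le_inf_right IT (c.mono hab)⟩
    let Lc : ℕ →o Ideal R :=
      ⟨fun k => Submodule.span R (Subtype.val '' ((d k : Ideal T) : Set T)),
       fun a b hab => Submodule.span_mono (Set.image_mono (d.mono hab))⟩
    obtain ⟨N2, hN2⟩ := monotone_stabilizes_iff_noetherian.mpr hNR Lc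
    obtain ⟨s, hs⟩ := hNR.noetherian (Lc N2)
    let SK : Set R := {z | ∃ xi ∈ I, ∃ w ∈ Lc N2, z = xi * w}
    let K : Submodule T R := Submodule.span T SK
    let G : Finset R := Finset.univ.biUnion (fun i : Fin n => s.image (fun a => x i * a))
    -- membership facts
    have hsL : ∀ a ∈ s, a ∈ Lc N2 := fun a ha => hs ▸ Submodule.subset_span ha
    have hGL : ∀ z ∈ G, z ∈ Lc N2 := by
      intro z hz
      simp only [G, Finset.mem_biUnion, Finset.mem_image, Finset.mem_univ,
        true_and] at hz
      obtain ⟨i, a, ha, rfl⟩ := hz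
      exact Submodule.smul_mem (Lc N2) (x i) (hsL a ha)
    have hKL : ∀ z ∈ K, z ∈ Lc N2 := by
      intro z hz
      induction hz using Submodule.span_induction with
      | mem z hzSK =>
          obtain ⟨xi, _, w, hw, rfl⟩ := hzSK
          exact Submodule.smul_mem (Lc N2) xi hw
      | zero => exact zero_mem (Lc N2)
      | add u1 u2 _ _ h1 h2 => exact add_mem h1 h2
      | smul t u1 _ h1 => exact Submodule.smul_mem (Lc N2) (t : R) h1
    have hspanGL : ∀ z ∈ Submodule.span T (G : Set R), z ∈ Lc N2 := by
      intro z hz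
      induction hz using Submodule.span_induction with
      | mem z hzG => exact hGL z hzG
      | zero => exact zero_mem (Lc N2)
      | add u1 u2 _ _ h1 h2 => exact add_mem h1 h2
      | smul t u1 _ h1 => exact Submodule.smul_mem (Lc N2) (t : R) h1
    have hGKL : ∀ w ∈ (Submodule.span T (G : Set R) ⊔ K), w ∈ Lc N2 := by
      intro w hw
      obtain ⟨a, ha, b, hb, rfl⟩ := Submodule.mem_sup.mp hw
      exact add_mem (hspanGL a ha) (hKL b hb)
    -- claim 1 : for w in the span of s and any r, r * w ∈ span T G ⊔ K
    have claim1 : ∀ w ∈ Submodule.span R (s : Set R), ∀ r : R,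
        r * w ∈ (Submodule.span T (G : Set R) ⊔ K) := by
      intro w hw
      induction hw using Submodule.span_induction with
      | mem a ha =>
          intro r
          obtain ⟨t, ht, hz⟩ := hx r
          have e : r * a = (∑ i, t i * (x i * a)) + (r - ∑ i, t i * x i) * a := by
            have e2 : (∑ i, t i * (x i * a)) = (∑ i, t i * x i) * a := by
              rw [Finset.sum_mul]
              exact Finset.sum_congr rfl fun i _ => (mul_assoc _ _ _).symm
            rw [e2, ← add_mul]
            congr 1
            abel
          rw [e]
          refine add_mem (Submodule.mem_sup_left ?_) (Submodule.mem_sup_right ?_)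
          · refine Submodule.sum_mem _ fun i _ => ?_
            have hgen : x i * a ∈ (G : Set R) := by
              simp only [G, Finset.coe_biUnion, Finset.coe_univ, Set.mem_iUnion,
                Finset.coe_image, Set.mem_image, Finset.mem_coe]
              exact ⟨i, trivial, a, ha, rfl⟩
            have e3 : t i * (x i * a) = (⟨t i, ht i⟩ : T) • (x i * a) := rfl
            rw [e3]
            exact Submodule.smul_mem _ _ (Submodule.subset_span hgen)
          · exact Submodule.subset_span ⟨r - ∑ i, t i * x i, hz, a, hsL a ha, rfl⟩
      | zero => intro r; simpa using zero_mem (Submodule.span T (G : Set R) ⊔ K)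
      | add u1 u2 _ _ ih1 ih2 =>
          intro r
          have := add_mem (ih1 r) (ih2 r)
          rwa [← mul_add] at this
      | smul r' w1 _ ih =>
          intro r
          have e4 : r * (r' • w1) = (r * r') * w1 := by
            show r * (r' * w1) = (r * r') * w1
            rw [mul_assoc]
          rw [e4]
          exact ih (r * r')
    -- claim 2 : K ≤ map f (d N2)
    have claim2' : ∀ w ∈ Submodule.span R (Subtype.val '' ((d N2 : Ideal T) : Set T)),
        ∀ xi ∈ I, xi * w ∈ Submodule.map f (d N2) := by
      intro w hw
      induction hw using Submodule.span_induction with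
      | mem a ha =>
          intro xi hxi
          obtain ⟨m, hm, rfl⟩ := ha
          refine Submodule.mem_map.mpr ⟨(⟨xi, hIT xi hxi⟩ : T) * m, ?_, rfl⟩
          have hm1 : m ∈ c N2 := (Submodule.mem_inf.mp hm).1
          have hm2 : m ∈ IT := (Submodule.mem_inf.mp hm).2
          refine Submodule.mem_inf.mpr ⟨Submodule.smul_mem (c N2) _ hm1, ?_⟩
          show T.subtype ((⟨xi, hIT xi hxi⟩ : T) * m) ∈ I
          exact hright xi hxi (m : R)
      | zero => intro xi hxi; simpa using zero_mem (Submodule.map f (d N2))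
      | add u1 u2 _ _ ih1 ih2 =>
          intro xi hxi
          have := add_mem (ih1 xi hxi) (ih2 xi hxi)
          rwa [← mul_add] at this
      | smul r w1 _ ih =>
          intro xi hxi
          have e5 : xi * (r • w1) = (xi * r) * w1 := by
            show xi * (r * w1) = (xi * r) * w1
            rw [mul_assoc]
          rw [e5]
          exact ih (xi * r) (hright xi hxi r)
    have claim2 : K ≤ Submodule.map f (d N2) := by
      refine Submodule.span_le.mpr ?_
      rintro z ⟨xi, hxi, w, hw, rfl⟩
      exact claim2' w hw xi hxi
    -- the kill property
    have hkill : ∀ y ∈ IT, ∀ w ∈ (Submodule.span T (G : Set R) ⊔ K), y • w ∈ K := by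
      intro y hy w hw
      exact Submodule.subset_span ⟨(y : R), hy, w, hGKL w hw, rfl⟩
    -- the chain fed into the auxiliary lemma
    let P : ℕ →o Submodule T R :=
      ⟨fun k => Submodule.map f (d (N2 + k)),
       fun a b hab => Submodule.map_mono (d.mono (by omega))⟩
    have hKP : ∀ k, K ≤ P k :=
      fun k => claim2.trans (Submodule.map_mono (d.mono (Nat.le_add_right _ _)))
    have hPle : ∀ k, P k ≤ Submodule.span T (G : Set R) ⊔ K := by
      intro k z hz
      obtain ⟨m, hm, rfl⟩ := Submodule.mem_map.mp hz
      have h1 : (m : R) ∈ Lc (N2 + k) := Submodule.subset_span ⟨m, hm, rfl⟩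
      have h2 : (m : R) ∈ Lc N2 := by
        rw [hN2 (N2 + k) (Nat.le_add_right _ _)]
        exact h1
      have h3 : (m : R) ∈ Submodule.span R (s : Set R) := by
        rw [hs]
        exact h2
      have := claim1 (m : R) h3 1
      rwa [one_mul] at this
    obtain ⟨N3, hN3⟩ := stmt12_aux IT hchain G K hkill P hKP hPle
    -- d stabilizes from N2 + N3 on
    have hdstab : ∀ m, N2 + N3 ≤ m → d m = d (N2 + N3) := by
      intro m hm
      have h := hN3 (m - N2) (by omega)
      have h2 : Submodule.map f (d m) = Submodule.map f (d (N2 + N3)) := by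
        have h3 : Submodule.map f (d (N2 + (m - N2))) = Submodule.map f (d (N2 + N3)) := h
        have e1 : N2 + (m - N2) = m := by omega
        rwa [e1] at h3
      exact Submodule.map_injective_of_injective hfinj h2
    -- the sup chain
    let c' : ℕ →o Ideal T :=
      ⟨fun k => c k ⊔ IT, fun a b hab => sup_le_sup_right (c.mono hab) IT⟩
    obtain ⟨N1, hN1⟩ := hchain c' (fun k => le_sup_right)
    -- final assembly
    obtain ⟨Nf, hNf1, hNf2⟩ : ∃ Nf, N1 ≤ Nf ∧ N2 + N3 ≤ Nf :=
      ⟨max N1 (N2 + N3), le_max_left _ _, le_max_right _ _⟩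
    refine ⟨Nf, fun m hm => ?_⟩
    refine le_antisymm (c.mono hm) ?_
    intro a ha
    have hsup : c m ⊔ IT = c Nf ⊔ IT := by
      have e1 : c' m = c' N1 := hN1 m (le_trans hNf1 hm)
      have e2 : c' Nf = c' N1 := hN1 Nf hNf1
      show c' m = c' Nf
      rw [e1, e2]
    have ha2 : a ∈ c Nf ⊔ IT := by
      rw [← hsup]
      exact Submodule.mem_sup_left ha
    obtain ⟨b, hb, y, hy, hsum⟩ := Submodule.mem_sup.mp ha2
    have hyc : y ∈ c m := by
      have e3 : y = a - b := by rw [← hsum]; abel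
      rw [e3]
      exact sub_mem ha (c.mono hm hb)
    have hyd : y ∈ d m := Submodule.mem_inf.mpr ⟨hyc, hy⟩
    have hydN : y ∈ d Nf := by
      have e1 : d m = d (N2 + N3) := hdstab m (le_trans hNf2 hm)
      have e2 : d Nf = d (N2 + N3) := hdstab Nf hNf2
      rw [e2, ← e1]
      exact hyd
    have hycNf : y ∈ c Nf := (Submodule.mem_inf.mp hydN).1
    have e6 : a = b + y := hsum.symm
    rw [e6]
    exact add_mem hb hycNf
end

section
/- Let R be the pullback of ring homomorphisms j₁ : R₁ → S and j₂ : R₂ → S, where j₁ is surjective and S is finitely generated as a left R₂-module (via j₂). If R₁ and R₂ are left noetherian, then R is left noetherian. -/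
theorem exists_finite_subset_span {R M : Type*} [Semiring R] [AddCommMonoid M] [Module R M]
    (X : Set M) (h : (Submodule.span R X).FG) :
    ∃ G : Set M, G ⊆ X ∧ G.Finite ∧ Submodule.span R G = Submodule.span R X := by
  obtain ⟨G₀, hG₀⟩ := h
  have hmem : ∀ g : M, ∃ t : Finset M,
      g ∈ G₀ → (↑t ⊆ X ∧ g ∈ Submodule.span R (t : Set M)) := by
    intro g
    by_cases hg : g ∈ G₀
    · have : (g : M) ∈ Submodule.span R X := hG₀ ▸ Submodule.subset_span hg
      obtain ⟨t, h1, h2⟩ := Submodule.mem_span_finite_of_mem_span this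
      exact ⟨t, fun _ => ⟨h1, h2⟩⟩
    · exact ⟨∅, fun h => absurd h hg⟩
  choose t ht using hmem
  refine ⟨⋃ g ∈ G₀, ↑(t g), ?_, ?_, le_antisymm ?_ ?_⟩
  · exact Set.iUnion₂_subset fun g hg => (ht g hg).1
  · exact G₀.finite_toSet.biUnion fun g _ => (t g).finite_toSet
  · exact Submodule.span_mono (Set.iUnion₂_subset fun g hg => (ht g hg).1)
  · rw [← hG₀, Submodule.span_le]
    intro g hg
    exact Submodule.span_mono (Set.subset_iUnion₂ g hg) (ht g hg).2

/-- Right multiplication as a left-linear map. -/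
def rmulLin {R : Type*} [Ring R] (g : R) : R →ₗ[R] R where
  toFun x := x * g
  map_add' x y := add_mul x y g
  map_smul' a x := by simp [smul_eq_mul, mul_assoc]

/-- Restriction of scalars along a surjective ring hom preserves Noetherianity. -/
theorem noeth_of_surj_compat {A B M : Type*} [Ring A] [Ring B] [AddCommGroup M]
    [Module A M] [Module B M] (f : A →+* B) (hf : Function.Surjective f)
    (hcompat : ∀ (a : A) (x : M), a • x = f a • x)
    (h : IsNoetherian B M) : IsNoetherian A M := by
  rw [isNoetherian_iff] at h ⊢
  have key : ∀ N : Submodule A M, ∃ N' : Submodule B M, (N' : Set M) = (N : Set M) := by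
    intro N
    refine ⟨⟨⟨⟨(N : Set M), ?_⟩, N.zero_mem⟩, ?_⟩, rfl⟩
    · exact fun hx hy => N.add_mem hx hy
    · intro b x hx
      obtain ⟨a, rfl⟩ := hf b
      simpa [← hcompat] using N.smul_mem a hx
  choose F hF using key
  have hle : ∀ N N' : Submodule A M, F N ≤ F N' ↔ N ≤ N' := by
    intro N N'
    constructor <;> intro hh x hx
    · rw [← SetLike.mem_coe, ← hF] at hx ⊢
      exact hh hx
    · rw [← SetLike.mem_coe, hF] at hx ⊢
      exact hh hx
  refine Subrelation.wf (r := InvImage (· > ·) F) ?_ (InvImage.wf F h)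
  intro N N' hNN'
  have h1 : N' < N := hNN'
  show F N' < F N
  rw [lt_iff_le_not_ge] at h1 ⊢
  rw [hle, hle]
  exact h1

universe u

namespace PBaux

variable {R₁ R₂ S : Type u} [Ring R₁] [Ring R₂] [Ring S]
    (j₁ : R₁ →+* S) (j₂ : R₂ →+* S)

def pFst : ↥(pullbackSubring j₁ j₂) →+* R₁ :=
  (RingHom.fst R₁ R₂).comp (pullbackSubring j₁ j₂).subtype

def pSnd : ↥(pullbackSubring j₁ j₂) →+* R₂ :=
  (RingHom.snd R₁ R₂).comp (pullbackSubring j₁ j₂).subtype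

theorem mem_pb (x : R₁ × R₂) : x ∈ pullbackSubring j₁ j₂ ↔ j₁ x.1 = j₂ x.2 := Iff.rfl

theorem pb_prop (p : ↥(pullbackSubring j₁ j₂)) : j₁ (pFst j₁ j₂ p) = j₂ (pSnd j₁ j₂ p) := p.2

noncomputable local instance modR₁ : Module ↥(pullbackSubring j₁ j₂) R₁ :=
  Module.compHom R₁ (pFst j₁ j₂)

noncomputable local instance modR₂ : Module ↥(pullbackSubring j₁ j₂) R₂ :=
  Module.compHom R₂ (pSnd j₁ j₂)

noncomputable local instance modS : Module ↥(pullbackSubring j₁ j₂) S :=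
  Module.compHom S (j₂.comp (pSnd j₁ j₂))

theorem smulR₁_def (p : ↥(pullbackSubring j₁ j₂)) (x : R₁) : p • x = pFst j₁ j₂ p * x := rfl
theorem smulR₂_def (p : ↥(pullbackSubring j₁ j₂)) (x : R₂) : p • x = pSnd j₁ j₂ p * x := rfl
theorem smulS_def (p : ↥(pullbackSubring j₁ j₂)) (x : S) : p • x = j₂ (pSnd j₁ j₂ p) * x := rfl

local instance : IsScalarTower ↥(pullbackSubring j₁ j₂) R₁ R₁ :=
  ⟨fun p x y => mul_assoc (pFst j₁ j₂ p) x y⟩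

/-- L1: R₁ is generated, as a module over the pullback, by a finite set. -/
theorem span_top (hsurj : Function.Surjective j₁)
    (hfg : ∃ (n : ℕ) (s : Fin n → S), ∀ x : S, ∃ r : Fin n → R₂,
      x = ∑ i, j₂ (r i) * s i) :
    ∃ U : Set R₁, U.Finite ∧ Submodule.span ↥(pullbackSubring j₁ j₂) U = ⊤ := by
  obtain ⟨n, s, hs⟩ := hfg
  set a : Fin n → R₁ := fun i => Function.surjInv hsurj (s i) with ha
  have haj : ∀ i, j₁ (a i) = s i := fun i => Function.surjInv_eq hsurj (s i)
  refine ⟨insert 1 (Set.range a), (Set.finite_range a).insert 1, ?_⟩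
  rw [eq_top_iff]
  intro x _
  obtain ⟨r, hr⟩ := hs (j₁ x)
  set c : Fin n → R₁ := fun i => Function.surjInv hsurj (j₂ (r i)) with hc
  have hcj : ∀ i, j₁ (c i) = j₂ (r i) := fun i => Function.surjInv_eq hsurj _
  set p : Fin n → ↥(pullbackSubring j₁ j₂) := fun i => ⟨(c i, r i), hcj i⟩ with hp
  set y : R₁ := x - ∑ i, c i * a i with hy
  have hyk : j₁ y = 0 := by
    rw [hy, map_sub, map_sum, hr]
    simp [hcj, haj]
  have hymem : ((y, 0) : R₁ × R₂) ∈ pullbackSubring j₁ j₂ := by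
    rw [mem_pb]; simpa using hyk
  have hx : x = (∑ i, p i • a i) + (⟨(y, 0), hymem⟩ : ↥(pullbackSubring j₁ j₂)) • (1 : R₁) := by
    simp only [smulR₁_def]
    show x = (∑ i, c i * a i) + y * 1
    rw [mul_one, hy]; abel
  rw [hx]
  refine Submodule.add_mem _ (Submodule.sum_mem _ fun i _ => Submodule.smul_mem _ _
    (Submodule.subset_span (Set.mem_insert_of_mem _ ⟨i, rfl⟩)))
    (Submodule.smul_mem _ _ (Submodule.subset_span (Set.mem_insert _ _)))

/-- L2: Any finitely generated `R₁`-submodule of `R₁` is finitely generated over the pullback. -/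
theorem fg_restrict {U : Set R₁} (hUfin : U.Finite)
    (hU : Submodule.span ↥(pullbackSubring j₁ j₂) U = ⊤)
    {X : Set R₁} {W : Submodule R₁ R₁} (hXfin : X.Finite) (hXW : Submodule.span R₁ X = W) :
    (W.restrictScalars ↥(pullbackSubring j₁ j₂)).FG := by
  set P := ↥(pullbackSubring j₁ j₂)
  set E : Set R₁ := ⋃ g ∈ X, (· * g) '' U with hE
  have hEfin : E.Finite := hXfin.biUnion fun g _ => hUfin.image _
  rw [Submodule.fg_def]
  refine ⟨E, hEfin, le_antisymm ?_ ?_⟩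
  · rw [Submodule.span_le]
    rintro e he
    simp only [hE, Set.mem_iUnion, Set.mem_image] at he
    obtain ⟨g, hgX, u, _, rfl⟩ := he
    have hgW : g ∈ W := hXW ▸ Submodule.subset_span hgX
    exact W.smul_mem u hgW
  · -- every y * g with g ∈ X lands in the span of E
    have T : ∀ (g : R₁), g ∈ X → ∀ y : R₁, y * g ∈ Submodule.span P E := by
      intro g hg y
      have hy : y ∈ Submodule.span P U := hU ▸ Submodule.mem_top
      induction hy using Submodule.span_induction with
      | mem u hu => exact Submodule.subset_span (by
          simp only [hE, Set.mem_iUnion, Set.mem_image]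
          exact ⟨g, hg, u, hu, rfl⟩)
      | zero => simpa using Submodule.zero_mem _
      | add y z _ _ hy hz => rw [add_mul]; exact Submodule.add_mem _ hy hz
      | smul p y _ hy =>
          rw [smulR₁_def, mul_assoc, ← smulR₁_def]
          exact Submodule.smul_mem _ _ hy
    intro x hx
    have hx' : x ∈ Submodule.span R₁ X := by rw [hXW]; exact hx
    clear hx
    have main : ∀ b : R₁, b * x ∈ Submodule.span P E := by
      induction hx' using Submodule.span_induction with
      | mem g hg => exact fun b => T g hg b
      | zero => intro b; simpa using Submodule.zero_mem _
      | add y z _ _ hy hz => intro b; rw [mul_add]; exact Submodule.add_mem _ (hy b) (hz b)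
      | smul c y _ hy => intro b; rw [smul_eq_mul, ← mul_assoc]; exact hy (b * c)
    simpa using main 1


set_option maxHeartbeats 1000000 in
set_option synthInstance.maxHeartbeats 400000 in
theorem ker_submodule_fg (hp₂ : Function.Surjective (pSnd j₁ j₂))
    {U : Set R₁} (hUfin : U.Finite)
    (hU : Submodule.span ↥(pullbackSubring j₁ j₂) U = ⊤)
    (h₁ : IsNoetherianRing R₁)
    (hnR₂ : IsNoetherian ↥(pullbackSubring j₁ j₂) R₂)
    (M : Submodule ↥(pullbackSubring j₁ j₂) R₁)
    (hM : ∀ x ∈ M, j₁ x = 0) : M.FG := by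
  haveI : IsNoetherian R₁ R₁ := h₁
  set Iid : Ideal R₁ := RingHom.ker j₁ with hIid
  set N₁ : Submodule R₁ R₁ := Submodule.span R₁ (M : Set R₁) with hN₁
  obtain ⟨G, hGM, hGfin, hGN₁⟩ := exists_finite_subset_span (R := R₁) (M : Set R₁)
    (IsNoetherian.noetherian (Submodule.span R₁ (M : Set R₁)))
  set K₂ : Submodule R₁ R₁ := ⨆ g : G, Submodule.map (rmulLin (g : R₁)) Iid with hK₂
  -- I · N₁ ⊆ K₂
  have hIN : ∀ x ∈ Submodule.span R₁ G, ∀ y ∈ Iid, y * x ∈ K₂ := by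
    intro x hx
    induction hx using Submodule.span_induction with
    | mem g hg =>
        intro y hy
        refine le_iSup (fun g : G => Submodule.map (rmulLin (g : R₁)) Iid) ⟨g, hg⟩ ?_
        exact ⟨y, hy, rfl⟩
    | zero => intro y _; simpa using Submodule.zero_mem _
    | add a b _ _ ha hb =>
        intro y hy; rw [mul_add]; exact Submodule.add_mem _ (ha y hy) (hb y hy)
    | smul b a _ ih =>
        intro y hy
        rw [smul_eq_mul, ← mul_assoc]
        refine ih (y * b) ?_
        rw [hIid, RingHom.mem_ker] at hy ⊢
        rw [map_mul, hy, zero_mul]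
  -- K₂ ⊆ M
  have hK₂M : ∀ x ∈ K₂, x ∈ M := by
    intro x hx
    refine Submodule.iSup_induction (motive := fun z => z ∈ M) _ hx ?_ (Submodule.zero_mem M)
      (fun a b ha hb => Submodule.add_mem M ha hb)
    rintro ⟨g, hg⟩ z ⟨y, hy, rfl⟩
    have hy : j₁ y = 0 := by simpa [hIid, RingHom.mem_ker] using hy
    have hymem : ((y, 0) : R₁ × R₂) ∈ pullbackSubring j₁ j₂ := by
      rw [mem_pb]; simpa using hy
    have : (⟨(y, 0), hymem⟩ : ↥(pullbackSubring j₁ j₂)) • (g : R₁) = rmulLin (g : R₁) y := by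
      rw [smulR₁_def]; rfl
    rw [← this]
    exact M.smul_mem _ (hGM hg)
  -- restrictScalars versions
  set P := ↥(pullbackSubring j₁ j₂)
  set K₂' : Submodule P R₁ := K₂.restrictScalars P with hK₂'
  set N₁' : Submodule P R₁ := N₁.restrictScalars P with hN₁'
  obtain ⟨Xk, hXkfin, hXkspan⟩ := Submodule.fg_def.mp (IsNoetherian.noetherian K₂)
  have hK₂'fg : K₂'.FG := fg_restrict j₁ j₂ hUfin hU hXkfin hXkspan
  have hN₁'fg : N₁'.FG := fg_restrict j₁ j₂ hUfin hU hGfin hGN₁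
  obtain ⟨F, hF⟩ := hN₁'fg
  -- the quotient module
  set mkQ : R₁ →ₗ[P] (R₁ ⧸ K₂') := K₂'.mkQ with hmkQ
  set T : Submodule P (R₁ ⧸ K₂') := N₁'.map mkQ with hT
  have hTspan : T = Submodule.span P (mkQ '' ↑F) := by
    rw [hT, ← hF, Submodule.map_span]
  -- P-elements with trivial second component kill T
  have kill : ∀ p : P, pSnd j₁ j₂ p = 0 → ∀ q ∈ T, p • q = 0 := by
    rintro p hp q hq
    obtain ⟨nn, hnn, rfl⟩ := hq
    rw [← map_smul]
    rw [Submodule.mkQ_apply, Submodule.Quotient.mk_eq_zero]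
    show pFst j₁ j₂ p * nn ∈ K₂
    have hker : pFst j₁ j₂ p ∈ Iid := by
      rw [hIid, RingHom.mem_ker, pb_prop j₁ j₂ p, hp, map_zero]
    have hnn' : nn ∈ Submodule.span R₁ G := by
      rw [hGN₁]; exact hnn
    exact hIN nn hnn' _ hker
  set σ : R₂ → P := Function.surjInv hp₂ with hσ
  have hσ2 : ∀ r, pSnd j₁ j₂ (σ r) = r := fun r => Function.surjInv_eq hp₂ r
  have welldef : ∀ (p : P), ∀ q ∈ T, σ (pSnd j₁ j₂ p) • q = p • q := by
    intro p q hq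
    have h0 : pSnd j₁ j₂ (σ (pSnd j₁ j₂ p) - p) = 0 := by
      rw [RingHom.map_sub, hσ2, sub_self]
    have := kill _ h0 q hq
    rwa [sub_smul, sub_eq_zero] at this
  set X : Set (R₁ ⧸ K₂') := mkQ '' ↑F with hX
  have hXfin : X.Finite := (F.finite_toSet).image _
  haveI : Fintype ↥X := hXfin.fintype
  have hXT : ∀ x : ↥X, (x : R₁ ⧸ K₂') ∈ T := fun x => hTspan ▸ Submodule.subset_span x.2
  set ψ : (↥X → R₂) →ₗ[P] (R₁ ⧸ K₂') :=
    { toFun := fun c => ∑ x : ↥X, σ (c x) • (x : R₁ ⧸ K₂')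
      map_add' := by
        intro c c'
        rw [← Finset.sum_add_distrib]
        refine Finset.sum_congr rfl fun x _ => ?_
        have hw := welldef (σ (c x) + σ (c' x)) (x : R₁ ⧸ K₂') (hXT x)
        rw [RingHom.map_add, hσ2, hσ2] at hw
        rw [Pi.add_apply, hw, add_smul]
      map_smul' := by
        intro p c
        simp only [RingHom.id_apply]
        rw [Finset.smul_sum]
        refine Finset.sum_congr rfl fun x _ => ?_
        have hw := welldef (p * σ (c x)) (x : R₁ ⧸ K₂') (hXT x)
        rw [RingHom.map_mul, hσ2] at hw
        have : (p • c) x = pSnd j₁ j₂ p * c x := rfl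
        rw [this, hw, mul_smul] } with hψ
  have hrange : LinearMap.range ψ = T := by
    apply le_antisymm
    · rintro q ⟨c, rfl⟩
      exact Submodule.sum_mem _ fun x _ => Submodule.smul_mem _ _ (hXT x)
    · rw [hTspan, Submodule.span_le]
      rintro q hq
      classical
      refine ⟨Pi.single (M := fun _ : ↥X => R₂) (⟨q, hq⟩ : ↥X) 1, ?_⟩
      show (∑ x : ↥X, σ (Pi.single (M := fun _ : ↥X => R₂) (⟨q, hq⟩ : ↥X) 1 x) • (x : R₁ ⧸ K₂')) = q
      rw [Finset.sum_eq_single (⟨q, hq⟩ : ↥X)]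
      · have hw := welldef 1 q (hTspan ▸ Submodule.subset_span hq)
        rw [RingHom.map_one] at hw
        simpa using hw
      · intro x _ hx
        rw [Pi.single_eq_of_ne hx]
        exact kill _ (by rw [hσ2]) _ (hXT x)
      · intro h; exact absurd (Finset.mem_univ _) h
  haveI : IsNoetherian P (↥X → R₂) := by infer_instance
  haveI hTnoeth : IsNoetherian P ↥T := by
    have := isNoetherian_range ψ
    rwa [hrange] at this
  -- conclude
  have hmapfg : (M.map mkQ).FG := by
    refine isNoetherian_submodule.mp hTnoeth _ ?_
    refine Submodule.map_mono ?_
    intro x hx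
    show x ∈ N₁
    exact Submodule.subset_span hx
  refine Submodule.fg_of_fg_map_of_fg_inf_ker mkQ hmapfg ?_
  rw [hmkQ, Submodule.ker_mkQ]
  have : M ⊓ K₂' = K₂' := inf_eq_right.mpr (fun x hx => hK₂M x hx)
  rw [this]
  exact hK₂'fg

set_option maxHeartbeats 1000000 in
set_option synthInstance.maxHeartbeats 400000 in
theorem main_noeth (hsurj : Function.Surjective j₁)
    (hfg : ∃ (n : ℕ) (s : Fin n → S), ∀ x : S, ∃ r : Fin n → R₂,
      x = ∑ i, j₂ (r i) * s i)
    (h₁ : IsNoetherianRing R₁) (h₂ : IsNoetherianRing R₂) :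
    IsNoetherianRing ↥(pullbackSubring j₁ j₂) := by
  have hp₂ : Function.Surjective (pSnd j₁ j₂) := by
    intro r₂
    obtain ⟨r₁, hr₁⟩ := hsurj (j₂ r₂)
    exact ⟨⟨(r₁, r₂), hr₁⟩, rfl⟩
  haveI : IsNoetherianRing R₂ := h₂
  haveI hnR₂P : IsNoetherian ↥(pullbackSubring j₁ j₂) R₂ :=
    noeth_of_surj_compat (pSnd j₁ j₂) hp₂ (fun _ _ => rfl) h₂
  haveI hnSP : IsNoetherian ↥(pullbackSubring j₁ j₂) S := by
    letI : Module R₂ S := Module.compHom S j₂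
    haveI hfinS : Module.Finite R₂ S := by
      rw [Module.finite_def, Submodule.fg_def]
      obtain ⟨n, s, hs⟩ := hfg
      refine ⟨Set.range s, Set.finite_range s, ?_⟩
      rw [eq_top_iff]
      intro x _
      obtain ⟨r, hr⟩ := hs x
      rw [hr]
      refine Submodule.sum_mem _ fun i _ => ?_
      have hsm : j₂ (r i) * s i = r i • s i := rfl
      rw [hsm]
      exact Submodule.smul_mem _ _ (Submodule.subset_span ⟨i, rfl⟩)
    haveI hnS₂ : IsNoetherian R₂ S := isNoetherian_of_isNoetherianRing_of_finite R₂ S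
    exact noeth_of_surj_compat (pSnd j₁ j₂) hp₂ (fun _ _ => rfl) hnS₂
  obtain ⟨U, hUfin, hU⟩ := span_top j₁ j₂ hsurj hfg
  set Krs : Submodule ↥(pullbackSubring j₁ j₂) R₁ :=
    (RingHom.ker j₁ : Ideal R₁).restrictScalars ↥(pullbackSubring j₁ j₂) with hKrs
  haveI hnKrs : IsNoetherian ↥(pullbackSubring j₁ j₂) ↥Krs := by
    refine isNoetherian_submodule.mpr fun t ht => ?_
    refine ker_submodule_fg j₁ j₂ hp₂ hUfin hU h₁ hnR₂P t fun x hx => ?_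
    have := ht hx
    rwa [hKrs, Submodule.restrictScalars_mem, RingHom.mem_ker] at this
  set j₁P : R₁ →ₗ[↥(pullbackSubring j₁ j₂)] S :=
    { toFun := j₁
      map_add' := fun x y => map_add j₁ x y
      map_smul' := fun p x => by
        show j₁ (pFst j₁ j₂ p * x) = j₂ (pSnd j₁ j₂ p) * j₁ x
        rw [map_mul, pb_prop] } with hj₁P
  haveI hnR₁ : IsNoetherian ↥(pullbackSubring j₁ j₂) R₁ := by
    refine isNoetherian_of_range_eq_ker Krs.subtype j₁P ?_
    rw [Submodule.range_subtype]
    ext x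
    show x ∈ Krs ↔ j₁ x = 0
    rw [hKrs, Submodule.restrictScalars_mem, RingHom.mem_ker]
  set p₂P : ↥(pullbackSubring j₁ j₂) →ₗ[↥(pullbackSubring j₁ j₂)] R₂ :=
    { toFun := pSnd j₁ j₂
      map_add' := fun x y => map_add _ x y
      map_smul' := fun p q => by
        show pSnd j₁ j₂ (p * q) = pSnd j₁ j₂ p * pSnd j₁ j₂ q
        exact map_mul _ p q } with hp₂P
  set pFstLin : ↥(pullbackSubring j₁ j₂) →ₗ[↥(pullbackSubring j₁ j₂)] R₁ :=
    { toFun := pFst j₁ j₂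
      map_add' := fun x y => map_add _ x y
      map_smul' := fun p q => by
        show pFst j₁ j₂ (p * q) = pFst j₁ j₂ p * pFst j₁ j₂ q
        exact map_mul _ p q } with hpFstLin
  set J := LinearMap.ker p₂P with hJ
  have einj : Function.Injective (pFstLin.comp J.subtype) := by
    intro a b hab
    have ha : pSnd j₁ j₂ a.1 = 0 := a.2
    have hb : pSnd j₁ j₂ b.1 = 0 := b.2
    have h1 : pFst j₁ j₂ a.1 = pFst j₁ j₂ b.1 := hab
    apply Subtype.ext
    apply Subtype.ext
    exact Prod.ext h1 (ha.trans hb.symm)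
  haveI hnJ : IsNoetherian ↥(pullbackSubring j₁ j₂) ↥J :=
    isNoetherian_of_injective (pFstLin.comp J.subtype) einj
  have : IsNoetherian ↥(pullbackSubring j₁ j₂) ↥(pullbackSubring j₁ j₂) := by
    refine isNoetherian_of_range_eq_ker J.subtype p₂P ?_
    rw [Submodule.range_subtype]
  exact isNoetherianRing_iff.mpr this

end PBaux

/-- If `j₁ : R₁ → S` is surjective, `S` is finitely generated as a left `R₂`-module via
`j₂`, and `R₁`, `R₂` are left noetherian, then the pullback of `j₁` and `j₂` is left
noetherian. -/
theorem stmt13 {R₁ R₂ S : Type u} [Ring R₁] [Ring R₂] [Ring S]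
    (j₁ : R₁ →+* S) (j₂ : R₂ →+* S)
    (hsurj : Function.Surjective j₁)
    (hfg : ∃ (n : ℕ) (s : Fin n → S), ∀ x : S, ∃ r : Fin n → R₂,
      x = ∑ i, j₂ (r i) * s i)
    (h₁ : IsNoetherianRing R₁) (h₂ : IsNoetherianRing R₂) :
    IsNoetherianRing (pullbackSubring j₁ j₂) := by
  exact PBaux.main_noeth j₁ j₂ hsurj hfg h₁ h₂
end

section
/- Let R be the pullback of ring homomorphisms j₁ : R₁ → S and j₂ : R₂ → S with j₁ surjective, ker j₁ ⊆ J(R₁), and j₂(J(R₂)) ⊆ j₁(J(R₁)). Then the Jacobson radical of R is J(R) = {(r₁,r₂) ∈ J(R₁) × J(R₂) : j₁(r₁) = j₂(r₂)}, and R/J(R) ≅ R₂/J(R₂). In particular, if ker j₁ = J(R₁) and ker j₂ = J(R₂) then J(R) = J(R₁) × J(R₂). -/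
section aux

variable {R₁ R₂ S : Type u} [Ring R₁] [Ring R₂] [Ring S]
  (j₁ : R₁ →+* S) (j₂ : R₂ →+* S)

lemma pb_mem {x : R₁ × R₂} : x ∈ pullbackSubring j₁ j₂ ↔ j₁ x.1 = j₂ x.2 := Iff.rfl

lemma pb_isUnit (p : pullbackSubring j₁ j₂)
    (h1 : IsUnit (p : R₁ × R₂).1) (h2 : IsUnit (p : R₁ × R₂).2) : IsUnit p := by
  obtain ⟨u₁, hu₁⟩ := h1
  obtain ⟨u₂, hu₂⟩ := h2
  have hp : j₁ (p : R₁ × R₂).1 = j₂ (p : R₁ × R₂).2 := p.2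
  have hU : Units.map j₁.toMonoidHom u₁ = Units.map j₂.toMonoidHom u₂ := by
    ext
    show j₁ ↑u₁ = j₂ ↑u₂
    rw [hu₁, hu₂]
    exact hp
  have hmem : ((↑u₁⁻¹, ↑u₂⁻¹) : R₁ × R₂) ∈ pullbackSubring j₁ j₂ := by
    show j₁ ↑u₁⁻¹ = j₂ ↑u₂⁻¹
    have := congrArg (fun u : Sˣ => ((u⁻¹ : Sˣ) : S)) hU
    simpa using this
  refine ⟨⟨p, ⟨_, hmem⟩, ?_, ?_⟩, rfl⟩
  · ext : 1
    show ((p : R₁ × R₂) * ((↑u₁⁻¹, ↑u₂⁻¹) : R₁ × R₂)) = 1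
    rw [Prod.ext_iff]
    constructor
    · show (p : R₁ × R₂).1 * ↑u₁⁻¹ = 1
      rw [← hu₁, Units.mul_inv]
    · show (p : R₁ × R₂).2 * ↑u₂⁻¹ = 1
      rw [← hu₂, Units.mul_inv]
  · ext : 1
    show (((↑u₁⁻¹, ↑u₂⁻¹) : R₁ × R₂) * (p : R₁ × R₂)) = 1
    rw [Prod.ext_iff]
    constructor
    · show ↑u₁⁻¹ * (p : R₁ × R₂).1 = 1
      rw [← hu₁, Units.inv_mul]
    · show ↑u₂⁻¹ * (p : R₁ × R₂).2 = 1
      rw [← hu₂, Units.inv_mul]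

end aux

/-- Noncommutative version of `Ideal.mem_jacobson_bot`. -/
lemma mem_jacobson_bot_ncr {R : Type u} [Ring R] {x : R} :
    x ∈ Ideal.jacobson (⊥ : Ideal R) ↔ ∀ y, IsUnit (y * x + 1) := by
  rw [Ideal.mem_jacobson_iff]
  have key : ∀ z y : R, z * y * x + z - 1 ∈ (⊥ : Ideal R) ↔ z * (y * x + 1) = 1 := by
    intro z y
    rw [Ideal.mem_bot, sub_eq_zero, mul_add, mul_one, mul_assoc]
  constructor
  · intro h y
    obtain ⟨z, hz⟩ := h y
    have hzu : z * (y * x + 1) = 1 := (key z y).mp hz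
    have h1 : z * (y * x) + z = 1 := by rw [mul_add, mul_one] at hzu; exact hzu
    have hz' : z = -(z * y) * x + 1 := by
      calc z = 1 - z * (y * x) := (eq_sub_of_add_eq' h1).symm.symm ▸ eq_sub_of_add_eq' h1
        _ = -(z * y) * x + 1 := by rw [neg_mul, mul_assoc, sub_eq_neg_add]
    obtain ⟨w, hw⟩ := h (-(z * y))
    have hw' : w * (-(z * y) * x + 1) = 1 := (key w _).mp hw
    rw [← hz'] at hw'
    have hwu : w = y * x + 1 := by
      calc w = w * (z * (y * x + 1)) := by rw [hzu, mul_one]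
        _ = w * z * (y * x + 1) := by rw [mul_assoc]
        _ = y * x + 1 := by rw [hw', one_mul]
    exact ⟨⟨y * x + 1, z, by rw [← hwu]; exact hw', hzu⟩, rfl⟩
  · intro h y
    obtain ⟨u, hu⟩ := h y
    refine ⟨↑u⁻¹, (key _ y).mpr ?_⟩
    rw [← hu, Units.inv_mul]

/-- Let `R` be the pullback of `j₁ : R₁ → S` (surjective, `ker j₁ ⊆ J(R₁)`) and
`j₂ : R₂ → S` with `j₂(J(R₂)) ⊆ j₁(J(R₁))`. Then `J(R)` is the pullback of `J(R₁)` and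
`J(R₂)`, and the projection onto `R₂` induces an isomorphism `R/J(R) ≅ R₂/J(R₂)` (it is
surjective with kernel exactly `J(R)`). If moreover `ker j₁ = J(R₁)` and
`ker j₂ = J(R₂)`, then `J(R) = J(R₁) × J(R₂)`. -/
theorem stmt14 {R₁ R₂ S : Type u} [Ring R₁] [Ring R₂] [Ring S]
    (j₁ : R₁ →+* S) (j₂ : R₂ →+* S)
    (hsurj : Function.Surjective j₁)
    (hker : RingHom.ker j₁ ≤ Ideal.jacobson (⊥ : Ideal R₁))
    (hrad : ∀ x ∈ Ideal.jacobson (⊥ : Ideal R₂),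
      ∃ y ∈ Ideal.jacobson (⊥ : Ideal R₁), j₁ y = j₂ x) :
    -- `J(R)` is the pullback of `J(R₁)` and `J(R₂)`:
    (∀ p : pullbackSubring j₁ j₂,
      p ∈ Ideal.jacobson (⊥ : Ideal (pullbackSubring j₁ j₂)) ↔
        ((p : R₁ × R₂).1 ∈ Ideal.jacobson (⊥ : Ideal R₁) ∧
         (p : R₁ × R₂).2 ∈ Ideal.jacobson (⊥ : Ideal R₂))) ∧
    -- the second projection is surjective and its composite with `R₂ → R₂/J(R₂)` has
    -- kernel `J(R)`, i.e. it induces `R/J(R) ≅ R₂/J(R₂)`: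
    (Function.Surjective (fun p : pullbackSubring j₁ j₂ => (p : R₁ × R₂).2)) ∧
    (∀ p : pullbackSubring j₁ j₂,
      p ∈ Ideal.jacobson (⊥ : Ideal (pullbackSubring j₁ j₂)) ↔
        (p : R₁ × R₂).2 ∈ Ideal.jacobson (⊥ : Ideal R₂)) ∧
    -- the particular case:
    ((RingHom.ker j₁ = Ideal.jacobson (⊥ : Ideal R₁) ∧
      RingHom.ker j₂ = Ideal.jacobson (⊥ : Ideal R₂)) →
      ∀ x y, x ∈ Ideal.jacobson (⊥ : Ideal R₁) → y ∈ Ideal.jacobson (⊥ : Ideal R₂) →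
        (x, y) ∈ pullbackSubring j₁ j₂) := by
  -- surjectivity of the second projection
  have hsurj2 : Function.Surjective (fun p : pullbackSubring j₁ j₂ => (p : R₁ × R₂).2) := by
    intro y
    obtain ⟨x, hx⟩ := hsurj (j₂ y)
    exact ⟨⟨(x, y), hx⟩, rfl⟩
  -- from p.2 ∈ J(R₂) deduce p.1 ∈ J(R₁)
  have key1 : ∀ p : pullbackSubring j₁ j₂,
      (p : R₁ × R₂).2 ∈ Ideal.jacobson (⊥ : Ideal R₂) →
      (p : R₁ × R₂).1 ∈ Ideal.jacobson (⊥ : Ideal R₁) := by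
    intro p h2
    obtain ⟨z, hz, hz'⟩ := hrad _ h2
    have hp : j₁ (p : R₁ × R₂).1 = j₂ (p : R₁ × R₂).2 := p.2
    have hk : (p : R₁ × R₂).1 - z ∈ RingHom.ker j₁ := by
      rw [RingHom.mem_ker, map_sub, hz', hp, sub_self]
    have := Ideal.add_mem _ (hker hk) hz
    simpa using this
  -- if both components are in the radicals then p ∈ J(R)
  have keyJ : ∀ p : pullbackSubring j₁ j₂,
      (p : R₁ × R₂).1 ∈ Ideal.jacobson (⊥ : Ideal R₁) →
      (p : R₁ × R₂).2 ∈ Ideal.jacobson (⊥ : Ideal R₂) →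
      p ∈ Ideal.jacobson (⊥ : Ideal (pullbackSubring j₁ j₂)) := by
    intro p h1 h2
    rw [mem_jacobson_bot_ncr] at h1 h2 ⊢
    intro q
    apply pb_isUnit
    · have : ((q * p + 1 : pullbackSubring j₁ j₂) : R₁ × R₂).1
        = (q : R₁ × R₂).1 * (p : R₁ × R₂).1 + 1 := rfl
      rw [this]; exact h1 _
    · have : ((q * p + 1 : pullbackSubring j₁ j₂) : R₁ × R₂).2
        = (q : R₁ × R₂).2 * (p : R₁ × R₂).2 + 1 := rfl
      rw [this]; exact h2 _
  -- if p ∈ J(R) then p.2 ∈ J(R₂)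
  have keyF : ∀ p : pullbackSubring j₁ j₂,
      p ∈ Ideal.jacobson (⊥ : Ideal (pullbackSubring j₁ j₂)) →
      (p : R₁ × R₂).2 ∈ Ideal.jacobson (⊥ : Ideal R₂) := by
    intro p hp
    rw [mem_jacobson_bot_ncr] at hp ⊢
    intro y
    obtain ⟨q, hq⟩ := hsurj2 y
    have := (hp q).map ((RingHom.snd R₁ R₂).comp (pullbackSubring j₁ j₂).subtype)
    have heq : ((RingHom.snd R₁ R₂).comp (pullbackSubring j₁ j₂).subtype) (q * p + 1)
        = y * (p : R₁ × R₂).2 + 1 := by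
      rw [← hq]
      rfl
    rwa [heq] at this
  refine ⟨?_, hsurj2, ?_, ?_⟩
  · intro p
    exact ⟨fun h => ⟨key1 p (keyF p h), keyF p h⟩, fun h => keyJ p h.1 h.2⟩
  · intro p
    exact ⟨keyF p, fun h => keyJ p (key1 p h) h⟩
  · rintro ⟨hk1, hk2⟩ x y hx hy
    rw [← hk1] at hx
    rw [← hk2] at hy
    show j₁ x = j₂ y
    rw [RingHom.mem_ker] at hx hy
    rw [hx, hy]
end

section
/- Let R be a ring with Jacobson radical J(R) and let π : R → R/J(R) be the canonical projection. Then the induced monoid homomorphism V(π) : V(R) → V(R/J(R)), ⟨P⟩ ↦ ⟨P/PJ(R)⟩, is injective and its image is a full submonoid of V(R/J(R)): if P, Q are finitely generated projective right R-modules and X is a finitely generated projective R/J(R)-module with P/PJ(R) ≅ Q/QJ(R) ⊕ X, then there is a finitely generated projective R-module Q' with P ≅ Q ⊕ Q' and Q'/Q'J(R) ≅ X. -/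
/-- The submodule `J(R)·M` of a left `R`-module `M`, where `J(R)` is the Jacobson
radical. -/
def radSub (R : Type u) (M : Type v) [Ring R] [AddCommGroup M] [Module R M] :
    Submodule R M :=
  Submodule.span R {x : M | ∃ a ∈ Ideal.jacobson (⊥ : Ideal R), ∃ m : M, x = a • m}

section Aux

variable {R : Type u} [Ring R]

/-- The Jacobson radical of `⊥` is closed under right multiplication. -/
theorem jacMul {a : R} (c : R) (ha : a ∈ Ideal.jacobson (⊥ : Ideal R)) :
    a * c ∈ Ideal.jacobson (⊥ : Ideal R) :=
  Ideal.mul_mem_right c _ ha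

theorem mem_radSub_smul {M : Type v} [AddCommGroup M] [Module R M] {a : R}
    (ha : a ∈ Ideal.jacobson (⊥ : Ideal R)) (m : M) : a • m ∈ radSub R M :=
  Submodule.subset_span ⟨a, ha, m, rfl⟩

theorem radSub_map_le {M : Type v} {N : Type w} [AddCommGroup M] [Module R M]
    [AddCommGroup N] [Module R N] (f : M →ₗ[R] N) :
    (radSub R M).map f ≤ radSub R N := by
  rw [radSub, Submodule.map_span]
  refine Submodule.span_le.mpr ?_
  rintro _ ⟨_, ⟨a, ha, m, rfl⟩, rfl⟩
  rw [map_smul]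
  exact mem_radSub_smul ha (f m)

/-- Noncommutative Nakayama: a finitely generated module with `J(R)·M = M` is trivial. -/
theorem radSub_nakayama {M : Type v} [AddCommGroup M] [Module R M] [Module.Finite R M]
    (h : radSub R M = ⊤) : Subsingleton M := by
  classical
  obtain ⟨s, hs⟩ := Module.Finite.fg_top (R := R) (M := M)
  revert hs
  induction s using Finset.induction_on with
  | empty =>
    intro hs'
    simp only [Finset.coe_empty, Submodule.span_empty] at hs'
    refine ⟨fun a b => ?_⟩
    have ha : a ∈ (⊥ : Submodule R M) := hs' ▸ Submodule.mem_top
    have hb : b ∈ (⊥ : Submodule R M) := hs' ▸ Submodule.mem_top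
    rw [Submodule.mem_bot] at ha hb
    rw [ha, hb]
  | @insert x s hxs ih =>
    intro hs'
    apply ih
    rw [Finset.coe_insert, Submodule.span_insert] at hs'
    set N := Submodule.span R (↑s : Set M) with hN
    set T := Submodule.map (LinearMap.toSpanSingleton R M x) (Ideal.jacobson (⊥ : Ideal R)) ⊔ N
      with hT
    have hsub : radSub R M ≤ T := by
      rw [radSub]
      refine Submodule.span_le.mpr ?_
      rintro _ ⟨a, ha, m, rfl⟩
      have hm : m ∈ Submodule.span R {x} ⊔ N := hs' ▸ Submodule.mem_top
      obtain ⟨y, hy, n, hn, rfl⟩ := Submodule.mem_sup.mp hm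
      obtain ⟨c, rfl⟩ := Submodule.mem_span_singleton.mp hy
      have heq : a • (c • x + n) = (a * c) • x + a • n := by rw [smul_add, smul_smul]
      rw [heq]
      exact Submodule.add_mem _
        (Submodule.mem_sup_left ⟨a * c, jacMul c ha, by rw [LinearMap.toSpanSingleton_apply]⟩)
        (Submodule.mem_sup_right (N.smul_mem a hn))
    have hxT : x ∈ T := hsub (h ▸ Submodule.mem_top)
    obtain ⟨y, hy, n, hn, hxeq⟩ := Submodule.mem_sup.mp hxT
    obtain ⟨a, ha, rfl⟩ := Submodule.mem_map.mp hy
    rw [LinearMap.toSpanSingleton_apply] at hxeq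
    have hsub1 : (1 - a : R) - 1 ∈ Ideal.jacobson (⊥ : Ideal R) := by
      simpa using (Ideal.jacobson (⊥ : Ideal R)).neg_mem ha
    obtain ⟨u, hu⟩ := Ideal.exists_mul_sub_mem_of_sub_one_mem_jacobson _ hsub1
    rw [Ideal.mem_bot, sub_eq_zero] at hu
    have hxN : x ∈ N := by
      have h1 : (1 - a) • x = n := by
        rw [sub_smul, one_smul]
        exact (eq_sub_of_add_eq' hxeq).symm
      have h2 : x = u • n := by
        calc x = (u * (1 - a)) • x := by rw [hu, one_smul]
          _ = u • ((1 - a) • x) := by rw [mul_smul]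
          _ = u • n := by rw [h1]
      rw [h2]
      exact N.smul_mem u hn
    rw [eq_top_iff, ← hs']
    exact sup_le ((Submodule.span_singleton_le_iff_mem x N).mpr hxN) le_rfl

/-- If a map to a finitely generated module is surjective modulo the radical,
it is surjective. -/
theorem surj_of_radQuot_surj {P : Type v} {Q : Type w} [AddCommGroup P] [Module R P]
    [AddCommGroup Q] [Module R Q] [Module.Finite R Q] (g : P →ₗ[R] Q)
    (hs : Function.Surjective ((radSub R Q).mkQ ∘ₗ g)) : Function.Surjective g := by
  have hsup : LinearMap.range g ⊔ radSub R Q = ⊤ := by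
    rw [eq_top_iff]
    intro q _
    obtain ⟨p, hp⟩ := hs (Submodule.Quotient.mk q)
    have hmem : q - g p ∈ radSub R Q := by
      rw [← Submodule.Quotient.eq]
      exact hp.symm
    exact Submodule.mem_sup.mpr ⟨g p, ⟨p, rfl⟩, q - g p, hmem, by abel⟩
  set N := LinearMap.range g with hNdef
  haveI hfin : Module.Finite R (Q ⧸ N) := Module.Finite.of_surjective N.mkQ N.mkQ_surjective
  have hradtop : radSub R (Q ⧸ N) = ⊤ := by
    rw [eq_top_iff]
    calc (⊤ : Submodule R (Q ⧸ N)) = (N ⊔ radSub R Q).map N.mkQ := by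
          rw [hsup, Submodule.map_top, Submodule.range_mkQ]
      _ = N.map N.mkQ ⊔ (radSub R Q).map N.mkQ := by rw [Submodule.map_sup]
      _ ≤ ⊥ ⊔ radSub R (Q ⧸ N) := by
          exact sup_le_sup (by rw [Submodule.mkQ_map_self]) (radSub_map_le _)
      _ = radSub R (Q ⧸ N) := bot_sup_eq _
  have hss : Subsingleton (Q ⧸ N) := radSub_nakayama hradtop
  rw [← LinearMap.range_eq_top]
  exact Submodule.Quotient.subsingleton_iff.mp hss

end Aux

/-- Main construction: if `P/rad P ≃ (Q/rad Q) × X` with `rad X = ⊥`, then `P ≃ Q × Q'`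
for a direct summand `Q'` with `Q'/rad Q' ≃ X`. -/
theorem full_aux {R : Type u} [Ring R] (P Q X : Type u)
    [AddCommGroup P] [Module R P] [AddCommGroup Q] [Module R Q]
    [AddCommGroup X] [Module R X]
    (hPf : Module.Finite R P) (hPp : Module.Projective R P)
    (hQf : Module.Finite R Q) (hQp : Module.Projective R Q)
    (hX : radSub R X = ⊥)
    (ψ : (P ⧸ radSub R P) ≃ₗ[R] ((Q ⧸ radSub R Q) × X)) :
    ∃ (Q' : Type u) (_ : AddCommGroup Q') (_ : Module R Q'),
      Module.Finite R Q' ∧ Module.Projective R Q' ∧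
      Nonempty (P ≃ₗ[R] (Q × Q')) ∧ Nonempty ((Q' ⧸ radSub R Q') ≃ₗ[R] X) := by
  classical
  haveI := hPf; haveI := hPp; haveI := hQf; haveI := hQp
  set πP := (radSub R P).mkQ with hπP
  set πQ := (radSub R Q).mkQ with hπQ
  set h : P →ₗ[R] Q ⧸ radSub R Q :=
    (LinearMap.fst R (Q ⧸ radSub R Q) X) ∘ₗ ψ.toLinearMap ∘ₗ πP with hh
  obtain ⟨g, hg⟩ := Module.projective_lifting_property πQ h (radSub R Q).mkQ_surjective
  have hgq : ∀ p : P, πQ (g p) = (ψ (πP p)).1 := fun p => by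
    have := LinearMap.congr_fun hg p
    simpa [hh] using this
  have hgs : Function.Surjective g := by
    apply surj_of_radQuot_surj g
    rw [← hπQ, hg]
    intro z
    obtain ⟨w, hw⟩ := ψ.surjective (z, 0)
    obtain ⟨p, rfl⟩ := (radSub R P).mkQ_surjective w
    exact ⟨p, by simp [hh, hw]; rw [hπP, hw]⟩
  obtain ⟨sq, hsq⟩ := Module.projective_lifting_property g LinearMap.id hgs
  have hsq' : ∀ q, g (sq q) = q := fun q => LinearMap.congr_fun hsq q
  set K := LinearMap.ker g with hK
  have hker : ∀ p : P, p - sq (g p) ∈ K := fun p => by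
    rw [hK, LinearMap.mem_ker, map_sub, hsq', sub_self]
  set ρ : P →ₗ[R] K :=
    LinearMap.codRestrict K (LinearMap.id - sq ∘ₗ g) (fun p => hker p) with hρdef
  have hρ : ∀ p : P, ((ρ p : K) : P) = p - sq (g p) := fun p => rfl
  have hρK : ∀ k : K, ρ (k : P) = k := fun k => Subtype.ext (by
    rw [hρ, LinearMap.mem_ker.mp k.2, map_zero, sub_zero])
  have h1 : (LinearMap.prod g ρ) ∘ₗ (LinearMap.coprod sq (K.subtype)) = LinearMap.id := by
    apply LinearMap.ext
    rintro ⟨q, k⟩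
    have hgk : g (k : P) = 0 := LinearMap.mem_ker.mp k.2
    refine Prod.ext ?_ (Subtype.ext ?_)
    · simp [hsq', hgk]
    · simp [hρ, hsq', hgk, map_add]
  have h2 : (LinearMap.coprod sq (K.subtype)) ∘ₗ (LinearMap.prod g ρ) = LinearMap.id := by
    apply LinearMap.ext
    intro p
    simp [hρ]
  set e : P ≃ₗ[R] Q × K :=
    LinearEquiv.ofLinear (LinearMap.prod g ρ) (LinearMap.coprod sq K.subtype) h1 h2 with he
  have finK : Module.Finite R K :=
    Module.Finite.of_surjective ρ (fun k => ⟨(k : P), hρK k⟩)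
  have projK : Module.Projective R K :=
    Module.Projective.of_split K.subtype ρ (by apply LinearMap.ext; intro k; exact hρK k)
  set θ : K →ₗ[R] X :=
    (LinearMap.snd R (Q ⧸ radSub R Q) X) ∘ₗ ψ.toLinearMap ∘ₗ πP ∘ₗ K.subtype with hθdef
  have hθ' : ∀ k : K, θ k = (ψ (πP (k : P))).2 := fun k => rfl
  have hθker : radSub R K ≤ LinearMap.ker θ := by
    intro y hy
    rw [LinearMap.mem_ker]
    have h3 : θ y ∈ (radSub R K).map θ := Submodule.mem_map_of_mem hy
    have h4 := radSub_map_le θ h3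
    rwa [hX, Submodule.mem_bot] at h4
  set ξ : (K ⧸ radSub R K) →ₗ[R] X := (radSub R K).liftQ θ hθker with hξdef
  have hξ : ∀ k : K, ξ (Submodule.Quotient.mk k) = θ k := fun k => rfl
  have hsurj : Function.Surjective ξ := by
    intro x
    obtain ⟨w, hw⟩ := ψ.surjective (0, x)
    obtain ⟨p, rfl⟩ := (radSub R P).mkQ_surjective w
    have hgp : g p ∈ radSub R Q := by
      have h5 : πQ (g p) = 0 := by
        rw [hgq p]
        have : πP p = (radSub R P).mkQ p := rfl
        rw [← this] at hw
        rw [hw]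
      rwa [hπQ, Submodule.mkQ_apply, Submodule.Quotient.mk_eq_zero] at h5
    refine ⟨Submodule.Quotient.mk ⟨p - sq (g p), hker p⟩, ?_⟩
    rw [hξ, hθ']
    have hsqrad : sq (g p) ∈ radSub R P := radSub_map_le sq (Submodule.mem_map_of_mem hgp)
    have hπ : πP ((⟨p - sq (g p), hker p⟩ : K) : P) = πP p := by
      show πP (p - sq (g p)) = πP p
      rw [map_sub, hπP, Submodule.mkQ_apply, Submodule.mkQ_apply,
        (Submodule.Quotient.mk_eq_zero _).mpr hsqrad, sub_zero]
    rw [hπ]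
    have : πP p = (radSub R P).mkQ p := rfl
    rw [← this] at hw
    rw [hw]
  have hinj : Function.Injective ξ := by
    rw [← LinearMap.ker_eq_bot]
    apply Submodule.ker_liftQ_eq_bot
    intro k hk
    have hgk : g (k : P) = 0 := LinearMap.mem_ker.mp k.2
    have h0 : ψ (πP (k : P)) = 0 := by
      refine Prod.ext ?_ ?_
      · rw [← hgq, hgk, map_zero]
        rfl
      · have := LinearMap.mem_ker.mp hk
        rw [hθ'] at this
        rw [this]
        rfl
    have hzero : πP (k : P) = 0 := by
      apply ψ.injective
      rw [h0, map_zero]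
    have hkP : (k : P) ∈ radSub R P := by
      rwa [hπP, Submodule.mkQ_apply, Submodule.Quotient.mk_eq_zero] at hzero
    have hmem : ρ (k : P) ∈ radSub R K := radSub_map_le ρ (Submodule.mem_map_of_mem hkP)
    rwa [hρK k] at hmem
  exact ⟨K, inferInstance, inferInstance, finK, projK, ⟨e⟩,
    ⟨LinearEquiv.ofBijective ξ ⟨hinj, hsurj⟩⟩⟩

/-- The monoid map `V(R) → V(R/J(R))`, `⟨P⟩ ↦ ⟨P/PJ(R)⟩`, is a full embedding: it is
injective, and if `P/PJ(R) ≅ Q/QJ(R) ⊕ X` (with `X` a finitely generated projective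
`R/J(R)`-module) then `P ≅ Q ⊕ Q'` for a projective `R`-module `Q'` with
`Q'/Q'J(R) ≅ X`. -/
theorem stmt15 {R : Type u} [Ring R]
    (P Q : Type u) [AddCommGroup P] [Module R P] [AddCommGroup Q] [Module R Q]
    (hPf : Module.Finite R P) (hPp : Module.Projective R P)
    (hQf : Module.Finite R Q) (hQp : Module.Projective R Q) :
    -- injectivity of `V(π)`:
    (Nonempty ((P ⧸ radSub R P) ≃ₗ[R] (Q ⧸ radSub R Q)) → Nonempty (P ≃ₗ[R] Q)) ∧
    -- fullness of the image:
    (∀ (X : Type u) (_ : AddCommGroup X) (_ : Module R X),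
      Module.Finite R X → radSub R X = ⊥ →
      Nonempty ((P ⧸ radSub R P) ≃ₗ[R] ((Q ⧸ radSub R Q) × X)) →
      ∃ (Q' : Type u) (_ : AddCommGroup Q') (_ : Module R Q'),
        Module.Finite R Q' ∧ Module.Projective R Q' ∧
        Nonempty (P ≃ₗ[R] (Q × Q')) ∧
        Nonempty ((Q' ⧸ radSub R Q') ≃ₗ[R] X)) := by
  constructor
  · rintro ⟨ψ₀⟩
    have hXrad : radSub R PUnit.{u + 1} = ⊥ := by
      rw [eq_bot_iff]
      intro x _
      rw [Submodule.mem_bot]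
    have h1 : (LinearMap.prod (LinearMap.id : (Q ⧸ radSub R Q) →ₗ[R] _)
        (0 : (Q ⧸ radSub R Q) →ₗ[R] PUnit.{u + 1})) ∘ₗ
        (LinearMap.fst R (Q ⧸ radSub R Q) PUnit.{u + 1}) = LinearMap.id := by
      apply LinearMap.ext
      rintro ⟨a, b⟩
      exact Prod.ext rfl (Subsingleton.elim _ _)
    have h2 : (LinearMap.fst R (Q ⧸ radSub R Q) PUnit.{u + 1}) ∘ₗ
        (LinearMap.prod LinearMap.id 0) = LinearMap.id := by
      exact LinearMap.ext fun a => rfl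
    have eQ : (Q ⧸ radSub R Q) ≃ₗ[R] ((Q ⧸ radSub R Q) × PUnit.{u + 1}) :=
      LinearEquiv.ofLinear (LinearMap.prod LinearMap.id 0) (LinearMap.fst R _ PUnit.{u + 1}) h1 h2
    obtain ⟨Q', iQ', mQ', hfin, hproj, ⟨e⟩, ⟨ξ⟩⟩ :=
      full_aux P Q PUnit.{u + 1} hPf hPp hQf hQp hXrad (ψ₀.trans eQ)
    letI := iQ'; letI := mQ'; letI := hfin
    have hss : Subsingleton (Q' ⧸ radSub R Q') := ξ.toEquiv.subsingleton
    have htop : radSub R Q' = ⊤ := Submodule.Quotient.subsingleton_iff.mp hss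
    haveI hQ'ss : Subsingleton Q' := radSub_nakayama htop
    have k1 : (LinearMap.fst R Q Q') ∘ₗ (LinearMap.inl R Q Q') = LinearMap.id := by
      apply LinearMap.ext; intro q; rfl
    have k2 : (LinearMap.inl R Q Q') ∘ₗ (LinearMap.fst R Q Q') = LinearMap.id := by
      apply LinearMap.ext
      rintro ⟨q, q'⟩
      exact Prod.ext rfl (Subsingleton.elim _ _)
    have e' : (Q × Q') ≃ₗ[R] Q :=
      LinearEquiv.ofLinear (LinearMap.fst R Q Q') (LinearMap.inl R Q Q') k1 k2
    exact ⟨e.trans e'⟩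
  · intro X aX mX hXf hXrad hne
    obtain ⟨ψ⟩ := hne
    exact full_aux P Q X hPf hPp hQf hQp hXrad ψ
end

section
/- Let A be a full submonoid of ℕ₀² containing (1,1). If A contains some element (x,y) with x > y, then A contains (x−y, 0) and (0, x−y), and there is a minimal n ∈ ℕ with (n,0) ∈ A such that A = (1,1)ℕ₀ + (n,0)ℕ₀ + (0,n)ℕ₀, i.e., A is generated by (1,1), (n,0) and (0,n). Moreover every element (x,0) ∈ A satisfies n ∣ x. -/
/-- Let `A` be a full submonoid of `ℕ₀²` containing `(1,1)`. If `A` contains an element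
`(x,y)` with `x > y`, then `A` contains `(x−y,0)` and `(0,x−y)`, and there is a minimal
`n ≥ 1` with `(n,0) ∈ A` such that `A = (1,1)ℕ₀ + (n,0)ℕ₀ + (0,n)ℕ₀`; moreover every
`(x,0) ∈ A` has `n ∣ x`. -/
theorem stmt17 (A : AddSubmonoid (ℕ × ℕ))
    (hfull : ∀ x ∈ A, ∀ t : ℕ × ℕ, x + t ∈ A → t ∈ A)
    (h11 : (1, 1) ∈ A)
    (hex : ∃ p ∈ A, p.2 < p.1) :
    (∀ p ∈ A, p.2 < p.1 → ((p.1 - p.2, 0) ∈ A ∧ (0, p.1 - p.2) ∈ A)) ∧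
    ∃ n : ℕ, 0 < n ∧ (n, 0) ∈ A ∧
      (∀ m : ℕ, 0 < m → (m, 0) ∈ A → n ≤ m) ∧
      (0, n) ∈ A ∧
      (∀ p : ℕ × ℕ, p ∈ A ↔
        ∃ a b c : ℕ, p = a • ((1 : ℕ), (1 : ℕ)) + b • (n, 0) + c • (0, n)) ∧
      (∀ x : ℕ, (x, 0) ∈ A → n ∣ x) := by
  have hdiag : ∀ m : ℕ, ((m : ℕ), m) ∈ A := by
    intro m
    have := A.nsmul_mem h11 m
    simpa [Prod.ext_iff] using this
  have hswap : ∀ m : ℕ, (m, 0) ∈ A → (0, m) ∈ A := by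
    intro m hm
    refine hfull (m, 0) hm (0, m) ?_
    have : ((m : ℕ), 0) + (0, m) = (m, m) := by simp
    rw [this]; exact hdiag m
  have hswap' : ∀ m : ℕ, (0, m) ∈ A → (m, 0) ∈ A := by
    intro m hm
    refine hfull (0, m) hm (m, 0) ?_
    have : ((0 : ℕ), m) + (m, 0) = (m, m) := by simp
    rw [this]; exact hdiag m
  have hsub : ∀ p ∈ A, p.2 ≤ p.1 → (p.1 - p.2, 0) ∈ A := by
    intro p hp h
    refine hfull (p.2, p.2) (hdiag p.2) _ ?_
    have : ((p.2 : ℕ), p.2) + (p.1 - p.2, 0) = p := by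
      ext <;> simp <;> omega
    rwa [this]
  have hsub2 : ∀ p ∈ A, p.1 ≤ p.2 → (0, p.2 - p.1) ∈ A := by
    intro p hp h
    refine hfull (p.1, p.1) (hdiag p.1) _ ?_
    have : ((p.1 : ℕ), p.1) + (0, p.2 - p.1) = p := by
      ext <;> simp <;> omega
    rwa [this]
  constructor
  · intro p hp h
    exact ⟨hsub p hp h.le, hswap _ (hsub p hp h.le)⟩
  obtain ⟨p, hp, hlt⟩ := hex
  have hP : ∃ m : ℕ, 0 < m ∧ (m, 0) ∈ A :=
    ⟨p.1 - p.2, by omega, hsub p hp hlt.le⟩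
  classical
  let n := Nat.find hP
  have hn : 0 < n ∧ (n, 0) ∈ A := Nat.find_spec hP
  have hmin : ∀ m : ℕ, 0 < m → (m, 0) ∈ A → n ≤ m := fun m h1 h2 =>
    Nat.find_min' hP ⟨h1, h2⟩
  have hdvd : ∀ x : ℕ, (x, 0) ∈ A → n ∣ x := by
    intro x hx
    have hr : (x % n, 0) ∈ A := by
      refine hfull _ (A.nsmul_mem hn.2 (x / n)) _ ?_
      have : (x / n) • ((n : ℕ), 0) + (x % n, 0) = (x, 0) := by
        ext <;> simp [Nat.div_add_mod, mul_comm] <;> omega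
      rwa [this]
    rcases Nat.eq_zero_or_pos (x % n) with h | h
    · exact Nat.dvd_of_mod_eq_zero h
    · exact absurd (hmin _ h hr) (by have := Nat.mod_lt x hn.1; omega)
  refine ⟨n, hn.1, hn.2, hmin, hswap n hn.2, ?_, hdvd⟩
  intro q
  constructor
  · intro hq
    rcases le_or_gt q.2 q.1 with h | h
    · obtain ⟨b, hb⟩ := hdvd _ (hsub q hq h)
      rw [mul_comm] at hb
      refine ⟨q.2, b, 0, ?_⟩
      ext <;> simp <;> omega
    · have h0 : (0, q.2 - q.1) ∈ A := hsub2 q hq h.le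
      obtain ⟨c, hc⟩ := hdvd _ (hswap' _ h0)
      rw [mul_comm] at hc
      refine ⟨q.1, 0, c, ?_⟩
      ext <;> simp <;> omega
  · rintro ⟨a, b, c, rfl⟩
    exact A.add_mem (A.add_mem (A.nsmul_mem h11 a) (A.nsmul_mem hn.2 b))
      (A.nsmul_mem (hswap n hn.2) c)
end

section
/- Let ℕ₀* = ℕ₀ ∪ {∞}, and fix n ∈ ℕ. The submonoid of (ℕ₀*)² generated by (1,1), (n,0), (0,n) (with scalar coefficients in ℕ₀*) equals the set of solutions (x,y) ∈ (ℕ₀*)² of the congruence x + (n−1)y ∈ nℕ₀*, i.e., (1,1)ℕ₀* + (n,0)ℕ₀* + (0,n)ℕ₀* = {(x,y) ∈ (ℕ₀*)² : x + (n−1)y ∈ nℕ₀ ∪ {∞}}. -/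
/-- For `n ≥ 1`, the submonoid `(1,1)ℕ₀* + (n,0)ℕ₀* + (0,n)ℕ₀*` of `(ℕ₀*)²` equals the
set of solutions `(x,y)` of the congruence `x + (n−1)y ∈ nℕ₀*`. -/
theorem stmt18 (n : ℕ) (hn : 0 < n) :
    {p : ℕ∞ × ℕ∞ | ∃ a b c : ℕ∞, p.1 = a * 1 + b * n ∧ p.2 = a * 1 + c * n} =
      {p : ℕ∞ × ℕ∞ | ∃ t : ℕ∞, p.1 + ((n - 1 : ℕ) : ℕ∞) * p.2 = (n : ℕ∞) * t} := by
  obtain ⟨m, rfl⟩ : ∃ m, n = m + 1 := ⟨n - 1, (Nat.succ_pred_eq_of_pos hn).symm⟩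
  have hms : (m + 1 - 1 : ℕ) = m := rfl
  have hntop : ((m + 1 : ℕ) : ℕ∞) ≠ 0 := by
    simp
  ext ⟨x, y⟩
  simp only [Set.mem_setOf_eq, hms]
  constructor
  · rintro ⟨a, b, c, rfl, rfl⟩
    refine ⟨a + b + (m : ℕ∞) * c, ?_⟩
    push_cast
    ring
  · rintro ⟨t, h⟩
    induction x using ENat.recTopCoe with
    | top =>
      induction y using ENat.recTopCoe with
      | top => exact ⟨⊤, 0, 0, by simp, by simp⟩
      | coe yn =>
        refine ⟨((yn % (m + 1) : ℕ) : ℕ∞), ⊤, ((yn / (m + 1) : ℕ) : ℕ∞), ?_, ?_⟩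
        · rw [ENat.top_mul hntop]
          simp
        · push_cast
          rw [mul_one]
          exact_mod_cast (Nat.mod_add_div' yn (m + 1)).symm
    | coe xn =>
      induction y using ENat.recTopCoe with
      | top =>
        refine ⟨((xn % (m + 1) : ℕ) : ℕ∞), ((xn / (m + 1) : ℕ) : ℕ∞), ⊤, ?_, ?_⟩
        · push_cast
          rw [mul_one]
          exact_mod_cast (Nat.mod_add_div' xn (m + 1)).symm
        · rw [ENat.top_mul hntop]
          simp
      | coe yn =>
        induction t using ENat.recTopCoe with
        | top =>
          rw [ENat.mul_top hntop] at h
          exact absurd h (by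
            intro hc
            have hne : ((xn + m * yn : ℕ) : ℕ∞) ≠ ⊤ := ENat.coe_ne_top _
            apply hne
            push_cast
            exact hc)
        | coe tn =>
          have hnat : xn + m * yn = (m + 1) * tn := by exact_mod_cast h
          have hmod : xn % (m + 1) = yn % (m + 1) := by
            have h1 : (xn + (m + 1) * yn) % (m + 1) = xn % (m + 1) :=
              Nat.add_mul_mod_self_left xn (m + 1) yn
            have h2 : xn + (m + 1) * yn = (m + 1) * tn + yn := by rw [← hnat]; ring
            rw [h2, Nat.mul_add_mod] at h1
            exact h1.symm
          refine ⟨((xn % (m + 1) : ℕ) : ℕ∞), ((xn / (m + 1) : ℕ) : ℕ∞),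
            ((yn / (m + 1) : ℕ) : ℕ∞), ?_, ?_⟩
          · push_cast
            rw [mul_one]
            exact_mod_cast (Nat.mod_add_div' xn (m + 1)).symm
          · push_cast
            rw [mul_one, hmod]
            exact_mod_cast (Nat.mod_add_div' yn (m + 1)).symm
end

section
/- Let ℕ₀* = ℕ₀ ∪ {∞} and let M be a submonoid of (ℕ₀*)^k containing an element of ℕ^k and satisfying: (M1) for every x ∈ M, the element x* with supp(x*) = inf-supp(x*) = inf-supp(x) belongs to M; and (M2) for every x ∈ M, ∞·x ∈ M. Then M is determined by its system of supports: defining 𝒮 = {inf-supp(x) : x ∈ M} and, for I ∈ 𝒮, A_I = p_I(M) ∩ ℕ₀^{{1,…,k}∖I} (where p_I is the projection forgetting coordinates in I), one has M = {x ∈ (ℕ₀*)^k : inf-supp(x) ∈ 𝒮 and p_{inf-supp(x)}(x) ∈ A_{inf-supp(x)}}. -/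
/-- A submonoid `M` of `(ℕ₀*)^k` containing an element of `ℕ^k` and satisfying
(M1): for each `x ∈ M` the element `x*` with `supp x* = inf-supp x* = inf-supp x` lies
in `M`, and (M2): `∞·x ∈ M` for each `x ∈ M`, is determined by its system of supports:
`y ∈ M` iff `inf-supp y` is the infinite support of some element of `M` and the
projection of `y` away from `inf-supp y` agrees with that of some element of `M`. -/
theorem stmt19 {k : ℕ} (M : AddSubmonoid (Fin k → ℕ∞))
    (horder : ∃ x ∈ M, ∀ i, x i ≠ 0 ∧ x i ≠ ⊤)
    (hM1 : ∀ x ∈ M, (fun i => if x i = ⊤ then (⊤ : ℕ∞) else 0) ∈ M)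
    (hM2 : ∀ x ∈ M, (fun i => if x i = 0 then (0 : ℕ∞) else ⊤) ∈ M) :
    ∀ y : Fin k → ℕ∞, y ∈ M ↔
      ((∃ x ∈ M, ∀ i, (x i = ⊤ ↔ y i = ⊤)) ∧
       (∃ x ∈ M, ∀ i, y i ≠ ⊤ → x i = y i)) := by
  intro y
  constructor
  · intro hy
    exact ⟨⟨y, hy, fun i => Iff.rfl⟩, ⟨y, hy, fun i _ => rfl⟩⟩
  · rintro ⟨⟨x1, hx1, h1⟩, ⟨x2, hx2, h2⟩⟩
    have key : y = x2 + (fun i => if x1 i = ⊤ then (⊤ : ℕ∞) else 0) := by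
      funext i
      by_cases h : y i = ⊤
      · simp [Pi.add_apply, (h1 i).mpr h, h]
      · have : x1 i ≠ ⊤ := fun ht => h ((h1 i).mp ht)
        simp [Pi.add_apply, this, h2 i h]
    rw [key]
    exact M.add_mem hx2 (hM1 x1 hx1)
end
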